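/- arXiv:1605.06690 — 9 statements merged into one kernel-verified Lean document; each statement's English description precedes it below -/
import Mathlib

section
/- For every real s with −2 ≤ s ≤ 0 and every r > 1 there exists a constant C > 0 such that for every complex sequence x = (x_m)_{m≥1} ∈ ℓ^{s,1}: for each n ≥ 1 the series (Ax)_n = ∑_{m≥1, m≠n} x_m/(m² − n²) converges absolutely, and ‖Ax‖_{s+1,r} ≤ C ‖x‖_{s,1}. In other words, the operator A is bounded from ℓ^{s,1} to ℓ^{s+1,r}. -/
open scoped ENNReal


/-- The weighted `ℓ^{s,p}` norm of a complex sequence (indexed by `m ≥ 1`):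
`‖x‖_{s,p} = (∑_{m ≥ 1} m^{sp} |x_m|^p)^{1/p}`. -/
noncomputable def wnorm (s p : ℝ) (x : ℕ → ℂ) : ℝ :=
  (∑' m : {m : ℕ // 1 ≤ m}, (m.1 : ℝ) ^ (s * p) * ‖x m.1‖ ^ p) ^ (1 / p)

/-- Membership in `ℓ^{s,p}`: summability of `m^{sp} |x_m|^p` over `m ≥ 1`. -/
def MemW (s p : ℝ) (x : ℕ → ℂ) : Prop :=
  Summable fun m : {m : ℕ // 1 ≤ m} => (m.1 : ℝ) ^ (s * p) * ‖x m.1‖ ^ p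

/-- The operator `A`, `(Ax)_n = ∑_{m ≥ 1, m ≠ n} x_m / (m² − n²)`. -/
noncomputable def Aop (x : ℕ → ℂ) (n : ℕ) : ℂ :=
  ∑' m : {m : ℕ // 1 ≤ m ∧ m ≠ n}, x m.1 / ((m.1 : ℂ) ^ 2 - (n : ℂ) ^ 2)

private lemma abs_cast_sub_ge_one {m n : ℕ} (h : m ≠ n) : (1:ℝ) ≤ |(n:ℝ) - (m:ℝ)| := by
  have h2 : (1:ℤ) ≤ |(n:ℤ) - (m:ℤ)| := Int.one_le_abs (by omega)
  exact_mod_cast h2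

private lemma key_real (s : ℝ) (hs : -2 ≤ s) (hs' : s ≤ 0) {m n : ℝ}
    (hm : 1 ≤ m) (hn : 1 ≤ n) (hmn : m ≠ n) :
    n ^ (s+1) * |m^2 - n^2|⁻¹ ≤ m ^ s * (|n - m|⁻¹ + n⁻¹) := by
  have hm0 : (0:ℝ) < m := by linarith
  have hn0 : (0:ℝ) < n := by linarith
  set A := |n - m| with hA
  set B := n + m with hB
  have hA0 : (0:ℝ) < A := abs_pos.2 (sub_ne_zero.2 (Ne.symm hmn))
  have hB0 : (0:ℝ) < B := by rw [hB]; linarith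
  have hD : |m^2 - n^2| = A * B := by
    rw [show m^2 - n^2 = (m-n)*(m+n) by ring, abs_mul, abs_sub_comm,
      abs_of_pos (by linarith : (0:ℝ) < m+n), hA, hB]
    ring
  set M := max m n with hM
  have hM0 : (0:ℝ) < M := lt_of_lt_of_le hm0 (le_max_left m n)
  have h1 : n ^ (s+2) ≤ M ^ (s+2) := Real.rpow_le_rpow hn0.le (le_max_right m n) (by linarith)
  have h2 : m ^ (-s) ≤ M ^ (-s) := Real.rpow_le_rpow hm0.le (le_max_left m n) (by linarith)
  have hMM : M ^ (s+2) * M ^ (-s) = M * M := by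
    rw [← Real.rpow_add hM0, show s+2+(-s) = (2:ℝ) by ring, Real.rpow_two]
    ring
  have hM1 : M ≤ B := by
    rw [hB]
    exact max_le (by linarith) (by linarith)
  have hM2 : M ≤ n + A := by
    rcases le_total m n with h | h
    · have : M = n := max_eq_right h
      linarith
    · have h' : M = m := max_eq_left h
      have : A = m - n := by rw [hA, abs_of_nonpos (by linarith)]; ring
      linarith
  have hstar : n ^ (s+2) * m ^ (-s) ≤ B * (n + A) :=
    calc n ^ (s+2) * m ^ (-s) ≤ M ^ (s+2) * M ^ (-s) :=
          mul_le_mul h1 h2 (Real.rpow_nonneg hm0.le _) (Real.rpow_nonneg hM0.le _)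
      _ = M * M := hMM
      _ ≤ B * (n + A) := mul_le_mul hM1 hM2 hM0.le hB0.le
  have hP : n ^ (s+1) * n = n ^ (s+2) := by
    rw [show s+2 = (s+1)+1 by ring]
    exact (Real.rpow_add_one hn0.ne' (s+1)).symm
  have hQ : m ^ s * m ^ (-s) = 1 := by
    rw [← Real.rpow_add hm0]; simp
  have e2 : A⁻¹ + n⁻¹ = (n+A)/(A*n) := by
    field_simp
  rw [hD, e2]
  rw [show n ^ (s+1) * (A*B)⁻¹ = n ^ (s+1) / (A*B) by ring,
    show m ^ s * ((n+A)/(A*n)) = m ^ s * (n+A) / (A*n) by ring,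
    div_le_div_iff₀ (by positivity) (by positivity)]
  have h3 := mul_le_mul_of_nonneg_left hstar (by positivity : (0:ℝ) ≤ m ^ s * A)
  calc n ^ (s+1) * (A*n)
      = (n ^ (s+1) * n) * A * (m ^ s * m ^ (-s)) := by rw [hQ]; ring
    _ = m ^ s * A * (n ^ (s+2) * m ^ (-s)) := by rw [hP]; ring
    _ ≤ m ^ s * A * (B * (n + A)) := h3
    _ = m ^ s * (n+A) * (A*B) := by ring

private lemma master (s : ℝ) (hs : -2 ≤ s) (hs' : s ≤ 0) {m n : ℕ}
    (hm : 1 ≤ m) (hn : 1 ≤ n) (hmn : m ≠ n) (z : ℂ) :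
    (n:ℝ) ^ (s+1) * ‖z / ((m:ℂ)^2 - (n:ℂ)^2)‖ ≤
      ((m:ℝ) ^ s * ‖z‖) * (|(n:ℝ) - (m:ℝ)|⁻¹ + (n:ℝ)⁻¹) := by
  have hm1 : (1:ℝ) ≤ (m:ℝ) := by exact_mod_cast hm
  have hn1 : (1:ℝ) ≤ (n:ℝ) := by exact_mod_cast hn
  have hmn' : (m:ℝ) ≠ (n:ℝ) := by exact_mod_cast hmn
  have hden : ‖((m:ℂ)^2 - (n:ℂ)^2)‖ = |(m:ℝ)^2 - (n:ℝ)^2| := by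
    rw [show ((m:ℂ)^2 - (n:ℂ)^2) = ((((m:ℝ)^2 - (n:ℝ)^2 : ℝ)) : ℂ) by push_cast; ring]
    exact Complex.norm_real _
  rw [norm_div, hden, div_eq_mul_inv]
  have hkey := key_real s hs hs' hm1 hn1 hmn'
  calc (n:ℝ)^(s+1) * (‖z‖ * |(m:ℝ)^2-(n:ℝ)^2|⁻¹)
      = ‖z‖ * ((n:ℝ)^(s+1) * |(m:ℝ)^2-(n:ℝ)^2|⁻¹) := by ring
    _ ≤ ‖z‖ * ((m:ℝ)^s * (|(n:ℝ)-(m:ℝ)|⁻¹ + (n:ℝ)⁻¹)) :=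
        mul_le_mul_of_nonneg_left hkey (norm_nonneg z)
    _ = _ := by ring

private lemma master2 (s : ℝ) (hs : -2 ≤ s) (hs' : s ≤ 0) {m n : ℕ}
    (hm : 1 ≤ m) (hn : 1 ≤ n) (hmn : m ≠ n) (z : ℂ) :
    ‖z / ((m:ℂ)^2 - (n:ℂ)^2)‖ ≤ (n:ℝ) ^ (-(s+1)) * (2 * ((m:ℝ) ^ s * ‖z‖)) := by
  have hn1 : (1:ℝ) ≤ (n:ℝ) := by exact_mod_cast hn
  have hn0 : (0:ℝ) < (n:ℝ) := by linarith
  have hg : (|(n:ℝ)-(m:ℝ)|⁻¹ + (n:ℝ)⁻¹) ≤ 2 := by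
    have h1 : (1:ℝ) ≤ |(n:ℝ)-(m:ℝ)| := abs_cast_sub_ge_one hmn
    have h2 : |(n:ℝ)-(m:ℝ)|⁻¹ ≤ 1 := by
      rw [inv_le_one_iff₀]; right; exact h1
    have h3 : (n:ℝ)⁻¹ ≤ 1 := by
      rw [inv_le_one_iff₀]; right; exact hn1
    linarith
  have hkey := master s hs hs' hm hn hmn z
  have h4 : ((m:ℝ) ^ s * ‖z‖) * (|(n:ℝ) - (m:ℝ)|⁻¹ + (n:ℝ)⁻¹) ≤ ((m:ℝ) ^ s * ‖z‖) * 2 :=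
    mul_le_mul_of_nonneg_left hg (by positivity)
  calc ‖z / ((m:ℂ)^2 - (n:ℂ)^2)‖
      = (n:ℝ) ^ (-(s+1)) * ((n:ℝ) ^ (s+1) * ‖z / ((m:ℂ)^2 - (n:ℂ)^2)‖) := by
        rw [← mul_assoc, ← Real.rpow_add hn0, show -(s+1)+(s+1) = (0:ℝ) by ring,
          Real.rpow_zero, one_mul]
    _ ≤ (n:ℝ) ^ (-(s+1)) * (((m:ℝ) ^ s * ‖z‖) * 2) := by
        refine mul_le_mul_of_nonneg_left (le_trans hkey h4) (by positivity)
    _ = (n:ℝ) ^ (-(s+1)) * (2 * ((m:ℝ) ^ s * ‖z‖)) := by ring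

private lemma holder_tsum {ι : Type*} (w f : ι → ℝ≥0∞) {p : ℝ} (hp : 1 < p) :
    ∑' i, w i * f i ≤ (∑' i, w i) ^ (1 - p⁻¹) * (∑' i, w i * f i ^ p) ^ p⁻¹ := by
  have hp0 : (0:ℝ) < p := lt_trans one_pos hp
  have he1 : (0:ℝ) ≤ 1 - p⁻¹ := by
    have : p⁻¹ ≤ 1 := by rw [inv_le_one_iff₀]; right; exact hp.le
    linarith
  rw [ENNReal.tsum_eq_iSup_sum]
  refine iSup_le fun t => ?_
  refine le_trans (ENNReal.inner_le_weight_mul_Lp_of_nonneg t hp.le w f) ?_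
  exact mul_le_mul' (ENNReal.rpow_le_rpow (ENNReal.sum_le_tsum t) he1)
    (ENNReal.rpow_le_rpow (ENNReal.sum_le_tsum t) (by positivity))


/-- For every `−2 ≤ s ≤ 0` and `r > 1` there is `C > 0` such that for every
`x ∈ ℓ^{s,1}` the series defining `(Ax)_n` converge absolutely and
`‖Ax‖_{s+1,r} ≤ C ‖x‖_{s,1}`: the operator `A` is bounded `ℓ^{s,1} → ℓ^{s+1,r}`. -/
theorem stmt3 (s r : ℝ) (hs : -2 ≤ s) (hs' : s ≤ 0) (hr : 1 < r) :
    ∃ C > 0, ∀ x : ℕ → ℂ, MemW s 1 x →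
      (∀ n : ℕ, 1 ≤ n →
        Summable fun m : {m : ℕ // 1 ≤ m ∧ m ≠ n} =>
          ‖x m.1 / ((m.1 : ℂ) ^ 2 - (n : ℂ) ^ 2)‖) ∧
      wnorm (s + 1) r (Aop x) ≤ C * wnorm s 1 x := by
  classical
  have hr0 : (0:ℝ) < r := lt_trans one_pos hr
  have hrne : r ≠ 0 := ne_of_gt hr0
  -- the zeta-type constant
  set F : ℕ → ℝ≥0∞ := fun k => ENNReal.ofReal ((k:ℝ)⁻¹) ^ r with hF
  set Zeta : ℝ≥0∞ := ∑' k, F k with hZeta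
  have hFk : ∀ k : ℕ, F k = ENNReal.ofReal (((k:ℝ)^r)⁻¹) := by
    intro k
    show ENNReal.ofReal ((k:ℝ)⁻¹) ^ r = _
    rw [ENNReal.ofReal_rpow_of_nonneg (inv_nonneg.2 (Nat.cast_nonneg k)) hr0.le,
      Real.inv_rpow (Nat.cast_nonneg k)]
  have hZeta_ne_top : Zeta ≠ ∞ := by
    have hsum : Summable (fun k : ℕ => ((k:ℝ) ^ r)⁻¹) := Real.summable_nat_rpow_inv.2 hr
    have : Zeta = ENNReal.ofReal (∑' k : ℕ, ((k:ℝ)^r)⁻¹) := by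
      rw [ENNReal.ofReal_tsum_of_nonneg (fun k => by positivity) hsum, hZeta]
      exact tsum_congr hFk
    rw [this]; exact ENNReal.ofReal_ne_top
  set Z : ℝ≥0∞ := 2^r * (3 * Zeta) with hZ
  have hZ_ne_top : Z ≠ ∞ := by
    refine ENNReal.mul_ne_top ?_ (ENNReal.mul_ne_top (by simp) hZeta_ne_top)
    exact ENNReal.rpow_ne_top_of_nonneg hr0.le (by simp)
  set C : ℝ := Z.toReal ^ (1/r) + 1 with hC
  have hC0 : 0 < C := by
    have := Real.rpow_nonneg (ENNReal.toReal_nonneg (a := Z)) (1/r)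
    rw [hC]; linarith
  refine ⟨C, hC0, ?_⟩
  intro x hx
  have hσ : Summable (fun m : {m : ℕ // 1 ≤ m} => (m.1:ℝ)^s * ‖x m.1‖) := by
    have h := hx
    unfold MemW at h
    simpa [mul_one, Real.rpow_one] using h
  have hσ0 : ∀ m : {m : ℕ // 1 ≤ m}, 0 ≤ (m.1:ℝ)^s * ‖x m.1‖ := fun m => by positivity
  set S : ℝ := ∑' m : {m : ℕ // 1 ≤ m}, (m.1:ℝ)^s * ‖x m.1‖ with hSdef
  have hS0 : 0 ≤ S := tsum_nonneg hσ0
  -- Part 1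
  have part1 : ∀ n : ℕ, 1 ≤ n → Summable fun m : {m : ℕ // 1 ≤ m ∧ m ≠ n} =>
      ‖x m.1 / ((m.1:ℂ)^2 - (n:ℂ)^2)‖ := by
    intro n hn
    have hinj : Function.Injective (fun m : {m : ℕ // 1 ≤ m ∧ m ≠ n} =>
        (⟨m.1, m.2.1⟩ : {m : ℕ // 1 ≤ m})) := by
      intro a b hab
      simp only [Subtype.mk.injEq] at hab
      exact Subtype.ext hab
    have hb : Summable ((fun m : {m : ℕ // 1 ≤ m} =>
        (n:ℝ) ^ (-(s+1)) * (2 * ((m.1:ℝ)^s * ‖x m.1‖))) ∘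
        (fun m : {m : ℕ // 1 ≤ m ∧ m ≠ n} => (⟨m.1, m.2.1⟩ : {m : ℕ // 1 ≤ m}))) :=
      ((hσ.mul_left 2).mul_left _).comp_injective hinj
    exact Summable.of_nonneg_of_le (fun m => norm_nonneg _)
      (fun m => master2 s hs hs' m.2.1 hn m.2.2 (x m.1)) hb
  refine ⟨part1, ?_⟩
  -- ENNReal setup
  set a : {m : ℕ // 1 ≤ m} → ℝ≥0∞ := fun m => ENNReal.ofReal ((m.1:ℝ)^s * ‖x m.1‖) with ha
  have haS : ∑' m, a m = ENNReal.ofReal S := by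
    rw [hSdef, ENNReal.ofReal_tsum_of_nonneg hσ0 hσ]
  set g : {n : ℕ // 1 ≤ n} → {m : ℕ // 1 ≤ m} → ℝ≥0∞ :=
    fun n m => ENNReal.ofReal (|(n.1:ℝ) - (m.1:ℝ)|⁻¹ + (n.1:ℝ)⁻¹) with hg
  -- uniform bound on columns
  have stepZ : ∀ m : {m : ℕ // 1 ≤ m}, (∑' n : {n : ℕ // 1 ≤ n}, g n m ^ r) ≤ Z := by
    intro m
    have hsplit : ∀ n : {n : ℕ // 1 ≤ n}, g n m ^ r ≤
        2^r * (F (((n.1:ℤ) - (m.1:ℤ)).natAbs) + F n.1) := by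
      intro n
      set u : ℝ≥0∞ := ENNReal.ofReal (|(n.1:ℝ) - (m.1:ℝ)|⁻¹) with hu
      set v : ℝ≥0∞ := ENNReal.ofReal ((n.1:ℝ)⁻¹) with hv
      have hguv : g n m = u + v := by
        rw [hg]
        exact ENNReal.ofReal_add (by positivity) (by positivity)
      have huv : g n m ≤ 2 * (u ⊔ v) := by
        rw [hguv, two_mul]
        exact add_le_add le_sup_left le_sup_right
      have hcast : |(n.1:ℝ) - (m.1:ℝ)| = ((((n.1:ℤ) - (m.1:ℤ)).natAbs : ℕ) : ℝ) := by
        rw [Nat.cast_natAbs]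
        push_cast
        ring_nf
      have hFu : u ^ r = F (((n.1:ℤ) - (m.1:ℤ)).natAbs) := by
        show ENNReal.ofReal (|(n.1:ℝ) - (m.1:ℝ)|⁻¹) ^ r
          = ENNReal.ofReal ((((((n.1:ℤ) - (m.1:ℤ)).natAbs) : ℕ) : ℝ)⁻¹) ^ r
        rw [hcast]
      have hFv : v ^ r = F n.1 := rfl
      calc g n m ^ r ≤ (2 * (u ⊔ v))^r := ENNReal.rpow_le_rpow huv hr0.le
        _ = 2^r * (u ⊔ v)^r := ENNReal.mul_rpow_of_nonneg _ _ hr0.le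
        _ ≤ 2^r * (u^r + v^r) := by
            refine mul_le_mul_right ?_ _
            rcases le_total u v with h | h
            · rw [sup_eq_right.2 h]
              exact le_add_self
            · rw [sup_eq_left.2 h]
              exact le_self_add
        _ = 2^r * (F (((n.1:ℤ) - (m.1:ℤ)).natAbs) + F n.1) := by rw [hFu, hFv]
    have hsum1 : (∑' n : {n : ℕ // 1 ≤ n}, F (((n.1:ℤ) - (m.1:ℤ)).natAbs)) ≤ 2 * Zeta := by
      have hstep : (∑' n : {n : ℕ // 1 ≤ n}, F (((n.1:ℤ) - (m.1:ℤ)).natAbs))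
          ≤ ∑' n : ℕ, F (((n:ℤ) - (m.1:ℤ)).natAbs) :=
        ENNReal.tsum_comp_le_tsum_of_injective Subtype.val_injective
          (fun n : ℕ => F (((n:ℤ) - (m.1:ℤ)).natAbs))
      refine le_trans hstep ?_
      set G1 : ℕ → ℝ≥0∞ := fun k => if k ≤ m.1 then F (m.1 - k) else 0 with hG1
      set G2 : ℕ → ℝ≥0∞ := fun k => if m.1 ≤ k then F (k - m.1) else 0 with hG2
      have hpt : ∀ k : ℕ, F (((k:ℤ) - (m.1:ℤ)).natAbs) ≤ G1 k + G2 k := by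
        intro k
        rcases le_total k m.1 with h | h
        · have hk : ((k:ℤ) - (m.1:ℤ)).natAbs = m.1 - k := by omega
          rw [hk]
          simp only [hG1, hG2, if_pos h]
          exact le_self_add
        · have hk : ((k:ℤ) - (m.1:ℤ)).natAbs = k - m.1 := by omega
          rw [hk]
          simp only [hG1, hG2, if_pos h]
          exact le_add_self
      refine le_trans (ENNReal.tsum_le_tsum hpt) ?_
      rw [ENNReal.tsum_add]
      have hg1 : ∑' k, G1 k ≤ Zeta := by
        have he : ∑' k, G1 k = ∑ k ∈ Finset.range (m.1+1), G1 k := by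
          refine tsum_eq_sum ?_
          intro b hb
          simp only [Finset.mem_range] at hb
          simp only [hG1]
          rw [if_neg (by omega)]
        rw [he]
        have he2 : ∑ k ∈ Finset.range (m.1+1), G1 k = ∑ k ∈ Finset.range (m.1+1), F k := by
          calc ∑ k ∈ Finset.range (m.1+1), G1 k
              = ∑ k ∈ Finset.range (m.1+1), F (m.1 - k) := by
                refine Finset.sum_congr rfl fun k hk => ?_
                simp only [Finset.mem_range] at hk
                simp only [hG1]
                rw [if_pos (by omega)]
            _ = ∑ k ∈ Finset.range (m.1+1), F k := by
                have := Finset.sum_range_reflect F (m.1+1)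
                simpa using this
        rw [he2]
        exact ENNReal.sum_le_tsum _
      have hg2 : ∑' k, G2 k ≤ Zeta := by
        have hinj2 : Function.Injective (fun k : ℕ => m.1 + k) := fun a b h => by
          simp only [] at h
          omega
        have hsupp : Function.support G2 ⊆ Set.range (fun k : ℕ => m.1 + k) := by
          intro k hk
          rcases le_or_gt m.1 k with h | h
          · exact ⟨k - m.1, by show m.1 + (k - m.1) = k; omega⟩
          · exfalso
            apply hk
            simp only [hG2]
            rw [if_neg (by omega)]
        have heq := Function.Injective.tsum_eq hinj2 (f := G2) hsupp
        rw [← heq, hZeta]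
        refine le_of_eq (tsum_congr fun k => ?_)
        simp only [hG2]
        rw [if_pos (Nat.le_add_right _ _), Nat.add_sub_cancel_left]
      calc ∑' k, G1 k + ∑' k, G2 k ≤ Zeta + Zeta := add_le_add hg1 hg2
        _ = 2 * Zeta := (two_mul _).symm
    have hsum2 : (∑' n : {n : ℕ // 1 ≤ n}, F n.1) ≤ Zeta := by
      rw [hZeta]
      exact ENNReal.tsum_comp_le_tsum_of_injective Subtype.val_injective F
    calc (∑' n : {n : ℕ // 1 ≤ n}, g n m ^ r)
        ≤ ∑' n : {n : ℕ // 1 ≤ n}, 2^r * (F (((n.1:ℤ) - (m.1:ℤ)).natAbs) + F n.1) :=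
          ENNReal.tsum_le_tsum hsplit
      _ = 2^r * ((∑' n : {n : ℕ // 1 ≤ n}, F (((n.1:ℤ) - (m.1:ℤ)).natAbs))
            + ∑' n : {n : ℕ // 1 ≤ n}, F n.1) := by
          rw [ENNReal.tsum_mul_left, ENNReal.tsum_add]
      _ ≤ 2^r * ((2 * Zeta) + Zeta) := mul_le_mul_right (add_le_add hsum1 hsum2) _
      _ = Z := by rw [hZ]; ring
  -- pointwise bound
  have stepA : ∀ n : {n : ℕ // 1 ≤ n},
      ENNReal.ofReal ((n.1:ℝ)^(s+1) * ‖Aop x n.1‖) ≤ ∑' m, a m * g n m := by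
    intro n
    have hsum := part1 n.1 n.2
    have h1 : ‖Aop x n.1‖ ≤
        ∑' m : {m : ℕ // 1 ≤ m ∧ m ≠ n.1}, ‖x m.1 / ((m.1:ℂ)^2-((n.1:ℕ):ℂ)^2)‖ := by
      rw [Aop]
      exact norm_tsum_le_tsum_norm hsum
    have h2 : (n.1:ℝ)^(s+1) * ‖Aop x n.1‖ ≤
        ∑' m : {m : ℕ // 1 ≤ m ∧ m ≠ n.1},
          (n.1:ℝ)^(s+1) * ‖x m.1 / ((m.1:ℂ)^2-((n.1:ℕ):ℂ)^2)‖ := by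
      rw [tsum_mul_left]
      exact mul_le_mul_of_nonneg_left h1 (Real.rpow_nonneg (Nat.cast_nonneg _) _)
    have h3 := ENNReal.ofReal_le_ofReal h2
    rw [ENNReal.ofReal_tsum_of_nonneg
      (fun m => mul_nonneg (Real.rpow_nonneg (Nat.cast_nonneg _) _) (norm_nonneg _))
      (hsum.mul_left _)] at h3
    refine le_trans h3 ?_
    have hinj : Function.Injective (fun m : {m : ℕ // 1 ≤ m ∧ m ≠ n.1} =>
        (⟨m.1, m.2.1⟩ : {m : ℕ // 1 ≤ m})) := by
      intro a b hab
      simp only [Subtype.mk.injEq] at hab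
      exact Subtype.ext hab
    refine le_trans (ENNReal.tsum_le_tsum fun m => ?_)
      (ENNReal.tsum_comp_le_tsum_of_injective hinj (fun m => a m * g n m))
    have hk := master s hs hs' m.2.1 n.2 m.2.2 (x m.1)
    calc ENNReal.ofReal ((n.1:ℝ)^(s+1) * ‖x m.1 / ((m.1:ℂ)^2-((n.1:ℕ):ℂ)^2)‖)
        ≤ ENNReal.ofReal (((m.1:ℝ)^s * ‖x m.1‖) * (|(n.1:ℝ)-(m.1:ℝ)|⁻¹ + (n.1:ℝ)⁻¹)) :=
          ENNReal.ofReal_le_ofReal hk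
      _ = a ⟨m.1, m.2.1⟩ * g n ⟨m.1, m.2.1⟩ := ENNReal.ofReal_mul (hσ0 ⟨m.1, m.2.1⟩)
  -- Hölder
  have stepBC : ∀ n : {n : ℕ // 1 ≤ n},
      (∑' m, a m * g n m) ^ r ≤ (ENNReal.ofReal S)^(r-1) * (∑' m, a m * g n m ^ r) := by
    intro n
    have h := holder_tsum a (fun m => g n m) hr
    have h2 := ENNReal.rpow_le_rpow h hr0.le
    rw [ENNReal.mul_rpow_of_nonneg _ _ hr0.le, ← ENNReal.rpow_mul, ← ENNReal.rpow_mul,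
      show (1 - r⁻¹)*r = r - 1 by rw [sub_mul, one_mul, inv_mul_cancel₀ hrne],
      show r⁻¹ * r = 1 by rw [inv_mul_cancel₀ hrne], ENNReal.rpow_one, haS] at h2
    exact h2
  -- main combination
  set T : {n : ℕ // 1 ≤ n} → ℝ := fun n => (n.1:ℝ)^((s+1)*r) * ‖Aop x n.1‖^r with hT
  have hT0 : ∀ n, 0 ≤ T n := by
    intro n; rw [hT]
    have h1 : (0:ℝ) ≤ (n.1:ℝ)^((s+1)*r) := Real.rpow_nonneg (Nat.cast_nonneg _) _
    have h2 : (0:ℝ) ≤ ‖Aop x n.1‖^r := Real.rpow_nonneg (norm_nonneg _) _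
    positivity
  have hTof : ∀ n, ENNReal.ofReal (T n) =
      ENNReal.ofReal ((n.1:ℝ)^(s+1) * ‖Aop x n.1‖) ^ r := by
    intro n
    rw [hT]
    show ENNReal.ofReal ((n.1:ℝ)^((s+1)*r) * ‖Aop x n.1‖^r) = _
    rw [Real.rpow_mul (Nat.cast_nonneg _),
      ← Real.mul_rpow (Real.rpow_nonneg (Nat.cast_nonneg _) _) (norm_nonneg _),
      ENNReal.ofReal_rpow_of_nonneg
        (mul_nonneg (Real.rpow_nonneg (Nat.cast_nonneg _) _) (norm_nonneg _)) hr0.le]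
  have key : ∑' n, ENNReal.ofReal (T n) ≤ Z * (ENNReal.ofReal S) ^ r := by
    calc ∑' n, ENNReal.ofReal (T n)
        ≤ ∑' n : {n : ℕ // 1 ≤ n}, (ENNReal.ofReal S)^(r-1) * (∑' m, a m * g n m ^ r) := by
          refine ENNReal.tsum_le_tsum fun n => ?_
          rw [hTof n]
          exact le_trans (ENNReal.rpow_le_rpow (stepA n) hr0.le) (stepBC n)
      _ = (ENNReal.ofReal S)^(r-1) * ∑' n : {n : ℕ // 1 ≤ n}, ∑' m, a m * g n m ^ r :=
          ENNReal.tsum_mul_left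
      _ = (ENNReal.ofReal S)^(r-1) * ∑' m, a m * ∑' n : {n : ℕ // 1 ≤ n}, g n m ^ r := by
          rw [ENNReal.tsum_comm]
          congr 1
          exact tsum_congr fun m => ENNReal.tsum_mul_left
      _ ≤ (ENNReal.ofReal S)^(r-1) * ∑' m, a m * Z := by
          refine mul_le_mul_right (ENNReal.tsum_le_tsum fun m => ?_) _
          exact mul_le_mul_right (stepZ m) _
      _ = (ENNReal.ofReal S)^(r-1) * (ENNReal.ofReal S * Z) := by
          rw [ENNReal.tsum_mul_right, haS]
      _ = Z * ((ENNReal.ofReal S)^(r-1) * ENNReal.ofReal S) := by ring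
      _ = Z * (ENNReal.ofReal S)^r := by
          congr 1
          by_cases hz : ENNReal.ofReal S = 0
          · rw [hz, ENNReal.zero_rpow_of_pos (by linarith : (0:ℝ) < r-1),
              ENNReal.zero_rpow_of_pos hr0, zero_mul]
          · have he : (ENNReal.ofReal S)^(r-1) * (ENNReal.ofReal S)^(1:ℝ)
                = (ENNReal.ofReal S)^r := by
              rw [← ENNReal.rpow_add _ _ hz ENNReal.ofReal_ne_top]
              norm_num
            rw [ENNReal.rpow_one] at he
            exact he
  have hRHS_ne_top : Z * (ENNReal.ofReal S) ^ r ≠ ∞ :=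
    ENNReal.mul_ne_top hZ_ne_top (ENNReal.rpow_ne_top_of_nonneg hr0.le ENNReal.ofReal_ne_top)
  have hW : ∑' n, T n ≤ Z.toReal * S^r := by
    have h1 := ENNReal.toReal_mono hRHS_ne_top key
    rw [ENNReal.tsum_toReal_eq (fun n => ENNReal.ofReal_ne_top)] at h1
    have h2 : ∀ n : {n : ℕ // 1 ≤ n}, (ENNReal.ofReal (T n)).toReal = T n :=
      fun n => ENNReal.toReal_ofReal (hT0 n)
    rw [tsum_congr h2] at h1
    rwa [ENNReal.toReal_mul, ← ENNReal.toReal_rpow, ENNReal.toReal_ofReal hS0] at h1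
  -- conclusion
  have hwn : wnorm (s+1) r (Aop x) = (∑' n, T n) ^ (1/r) := by
    rw [wnorm, hT]
  have hws : wnorm s 1 x = S := by
    rw [wnorm, hSdef]
    norm_num [Real.rpow_one]
  rw [hwn, hws]
  calc (∑' n, T n)^(1/r) ≤ (Z.toReal * S^r)^(1/r) :=
      Real.rpow_le_rpow (tsum_nonneg hT0) hW (by positivity)
    _ = Z.toReal^(1/r) * (S^r)^(1/r) :=
      Real.mul_rpow ENNReal.toReal_nonneg (Real.rpow_nonneg hS0 _)
    _ = Z.toReal^(1/r) * S := by
      rw [← Real.rpow_mul hS0, mul_one_div_cancel hrne, Real.rpow_one]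
    _ ≤ C * S := mul_le_mul_of_nonneg_right (by rw [hC]; linarith) hS0
end

section
/- Let σ⁰ = (n²π²)_{n≥1}, and let σ = σ⁰ + σ̃ and ρ = σ⁰ + ρ̃ be two sequences of complex numbers with σ̃, ρ̃ ∈ ℓ^{−1,∞}. Suppose c > 0 is such that |ρ_m − σ_n| ≥ c^{−1}|m² − n²| for all m ≠ n (m, n ≥ 1). Then for every −1 ≤ s ≤ 0 and 1 < p < ∞ and every x ∈ ℓ^{s,p}: for each n ≥ 1 the series (Bx)_n = ∑_{m≥1, m≠n} x_m/(ρ_m − σ_n) converges absolutely, and ‖Bx‖_{s+1,p} ≤ π^{−2}·(‖A‖ + 4c‖ρ̃‖_{−1,∞} + 4c‖σ̃‖_{−1,∞})·‖x‖_{s,p}, where ‖A‖ denotes the operator norm of A : ℓ^{s,p} → ℓ^{s+1,p}, (Ax)_n = ∑_{m≠n} x_m/(m² − n²). -/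
/-!
Write `B = π⁻² A + R`, where `R` has kernel `(ρ_m - σ_n)⁻¹ - (σ⁰_m - σ⁰_n)⁻¹`. By the resolvent
identity `a⁻¹ - b⁻¹ = a⁻¹ (b - a) b⁻¹` and the separation condition this kernel is at most
`c (‖ρ̃‖ m + ‖σ̃‖ n) / (π² (m² - n²)²)`; since `n^{s+1} max(m, n) ≤ m^s (m + n)²` for
`-1 ≤ s ≤ 0`, the kernel of `R` between the weights `m^{-s}` and `n^{s+1}` is dominated by
`c (‖ρ̃‖ + ‖σ̃‖) / (π² (m - n)²)`. The kernel `(m - n)⁻²` has row and column sums at most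
`2 ζ(2) < 4`, so the Schur test bounds `R` by `4 c (‖ρ̃‖ + ‖σ̃‖) / π²`.
Each series converges absolutely by Hölder's inequality, as `|m² - n²| ≥ m^{-s} |m - n|` and
`(|m - n|⁻¹)_m ∈ ℓ^q`.
-/

open scoped ENNReal

section LpNorm

variable {α β : Type*} {p q : ℝ}

noncomputable def ennLpNorm (p : ℝ) (f : α → ℝ≥0∞) : ℝ≥0∞ := (∑' a, f a ^ p) ^ (1 / p)

lemma ennLpNorm_mono (hp : 0 ≤ p) {f g : α → ℝ≥0∞} (h : ∀ a, f a ≤ g a) :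
    ennLpNorm p f ≤ ennLpNorm p g := by
  unfold ennLpNorm
  gcongr with a
  exact h a

lemma ennLpNorm_const_mul (hp : 0 < p) (k : ℝ≥0∞) (f : α → ℝ≥0∞) :
    ennLpNorm p (fun a => k * f a) = k * ennLpNorm p f := by
  simp only [ennLpNorm, ENNReal.mul_rpow_of_nonneg _ _ hp.le, ENNReal.tsum_mul_left,
    ENNReal.mul_rpow_of_nonneg _ _ (one_div_nonneg.2 hp.le), ← ENNReal.rpow_mul,
    mul_one_div_cancel hp.ne', ENNReal.rpow_one]

lemma ennLpNorm_add_le (hp : 1 ≤ p) (f g : α → ℝ≥0∞) :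
    ennLpNorm p (f + g) ≤ ennLpNorm p f + ennLpNorm p g := by
  let _ : MeasurableSpace α := ⊤
  simp only [ennLpNorm, ← MeasureTheory.lintegral_count]
  exact ENNReal.lintegral_Lp_add_le measurable_from_top.aemeasurable
    measurable_from_top.aemeasurable hp

lemma ennLpNorm_le_add (hp : 1 ≤ p) {e f g : α → ℝ≥0∞} (h : ∀ a, e a ≤ f a + g a) :
    ennLpNorm p e ≤ ennLpNorm p f + ennLpNorm p g :=
  (ennLpNorm_mono (by linarith) h).trans (ennLpNorm_add_le hp f g)

lemma tsum_mul_le_ennLpNorm_mul (hpq : p.HolderConjugate q) (f g : α → ℝ≥0∞) :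
    ∑' a, f a * g a ≤ ennLpNorm p f * ennLpNorm q g := by
  let _ : MeasurableSpace α := ⊤
  simp only [ennLpNorm, ← MeasureTheory.lintegral_count]
  exact ENNReal.lintegral_mul_le_Lp_mul_Lq _ hpq measurable_from_top.aemeasurable
    measurable_from_top.aemeasurable

/-- **Schur test.** Each row is estimated by Hölder after splitting `k = k^(1/q) k^(1/p)`; then
the order of summation is swapped. -/
lemma ennLpNorm_tsum_mul_le (hpq : p.HolderConjugate q) (k : α → β → ℝ≥0∞) (C : ℝ≥0∞)
    (hrow : ∀ a, ∑' b, k a b ≤ C) (hcol : ∀ b, ∑' a, k a b ≤ C) (u : β → ℝ≥0∞) :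
    ennLpNorm p (fun a => ∑' b, k a b * u b) ≤ C * ennLpNorm p u := by
  have hp := hpq.pos
  have hq := hpq.symm.pos
  have hsplit : ∀ a b, k a b * u b = k a b ^ (1 / q) * (k a b ^ (1 / p) * u b) := fun a b => by
    rw [← mul_assoc, ← ENNReal.rpow_add_of_nonneg _ _ (by positivity) (by positivity),
      one_div, one_div, add_comm, hpq.inv_add_inv_eq_one, ENNReal.rpow_one]
  have hrow_pow : ∀ a, (∑' b, k a b * u b) ^ p ≤ C ^ (p / q) * ∑' b, k a b * u b ^ p := by
    intro a
    have holder := tsum_mul_le_ennLpNorm_mul hpq.symm (fun b => k a b ^ (1 / q))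
      (fun b => k a b ^ (1 / p) * u b)
    simp only [← hsplit, ennLpNorm, ← ENNReal.rpow_mul, one_div_mul_cancel hq.ne',
      ENNReal.mul_rpow_of_nonneg _ _ hp.le, one_div_mul_cancel hp.ne', ENNReal.rpow_one] at holder
    calc (∑' b, k a b * u b) ^ p
        ≤ ((C ^ (1 / q)) * (∑' b, k a b * u b ^ p) ^ (1 / p)) ^ p := by
          gcongr
          exact holder.trans (by gcongr; exact hrow a)
      _ = C ^ (p / q) * ∑' b, k a b * u b ^ p := by
          rw [ENNReal.mul_rpow_of_nonneg _ _ hp.le, ← ENNReal.rpow_mul, ← ENNReal.rpow_mul,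
            one_div_mul_cancel hp.ne', ENNReal.rpow_one, one_div_mul_eq_div]
  have hswap : ∑' a, ∑' b, k a b * u b ^ p ≤ C * ∑' b, u b ^ p := by
    rw [ENNReal.tsum_comm, ← ENNReal.tsum_mul_left]
    gcongr with b
    rw [ENNReal.tsum_mul_right]
    gcongr
    exact hcol b
  calc ennLpNorm p (fun a => ∑' b, k a b * u b)
      ≤ (C ^ (p / q) * (C * ∑' b, u b ^ p)) ^ (1 / p) := by
        unfold ennLpNorm
        gcongr
        refine (ENNReal.tsum_le_tsum hrow_pow).trans ?_
        rw [ENNReal.tsum_mul_left]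
        gcongr
    _ = C * ennLpNorm p u := by
        rw [← ennLpNorm_const_mul hp, ennLpNorm, ← mul_assoc]
        nth_rw 2 [← ENNReal.rpow_one C]
        rw [← ENNReal.rpow_add_of_nonneg _ _ (by positivity) zero_le_one,
          hpq.div_conj_eq_sub_one, sub_add_cancel]
        simp only [ENNReal.mul_rpow_of_nonneg _ _ hp.le, ENNReal.tsum_mul_left]

end LpNorm

lemma cast_dist_eq_abs_sub (m n : ℕ) : (Nat.dist m n : ℝ) = |(m : ℝ) - n| := by
  rcases le_total m n with h | h
  · rw [Nat.dist_eq_sub_of_le h, Nat.cast_sub h, abs_sub_comm, abs_of_nonneg (by simpa)]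
  · rw [Nat.dist_eq_sub_of_le_right h, Nat.cast_sub h, abs_of_nonneg (by simpa)]

/-- `m ↦ (|m - n|, m < n)` is injective, so every value of `|m - n|` is taken at most twice. -/
lemma tsum_comp_dist_le (n : ℕ) (f : ℕ → ℝ≥0∞) : ∑' m, f (Nat.dist m n) ≤ 2 * ∑' k, f k := by
  have hinj : Function.Injective fun m => (Nat.dist m n, decide (m < n)) := by
    intro a b hab
    simp only [Prod.mk.injEq, decide_eq_decide, Nat.dist] at hab
    omega
  calc ∑' m, f (Nat.dist m n)
      ≤ ∑' kb : ℕ × Bool, f kb.1 := ENNReal.tsum_comp_le_tsum_of_injective hinj (f ·.1)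
    _ = 2 * ∑' k, f k := by
        rw [ENNReal.tsum_prod (f := fun k (_ : Bool) => f k), ← ENNReal.tsum_mul_left]
        simp [two_mul]

lemma tsum_one_div_sub_sq_le_four (n : ℕ) :
    ∑' m : ℕ, ENNReal.ofReal (1 / ((m : ℝ) - n) ^ 2) ≤ 4 := by
  have hzeta : ∑' k : ℕ, ENNReal.ofReal (1 / (k : ℝ) ^ 2) = ENNReal.ofReal (Real.pi ^ 2 / 6) := by
    rw [← ENNReal.ofReal_tsum_of_nonneg (fun k => by positivity) hasSum_zeta_two.summable,
      hasSum_zeta_two.tsum_eq]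
  calc ∑' m : ℕ, ENNReal.ofReal (1 / ((m : ℝ) - n) ^ 2)
      = ∑' m : ℕ, ENNReal.ofReal (1 / (Nat.dist m n : ℝ) ^ 2) := by
        simp only [cast_dist_eq_abs_sub, sq_abs]
    _ ≤ 2 * ENNReal.ofReal (Real.pi ^ 2 / 6) := hzeta ▸ tsum_comp_dist_le n _
    _ ≤ 2 * ENNReal.ofReal 2 := by
        gcongr
        nlinarith [Real.pi_lt_d2, Real.pi_pos]
    _ = 4 := by norm_num

lemma tsum_inv_abs_sub_rpow_ne_top (n : ℕ) {q : ℝ} (hq : 1 < q) :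
    ∑' m : ℕ, ENNReal.ofReal (|(m : ℝ) - n|⁻¹ ^ q) ≠ ∞ := by
  have hsum : Summable fun k : ℕ => (k : ℝ)⁻¹ ^ q := by
    simpa only [Real.inv_rpow (Nat.cast_nonneg _)] using Real.summable_nat_rpow_inv.2 hq
  refine ne_top_of_le_ne_top ?_ (b := 2 * ∑' k : ℕ, ENNReal.ofReal ((k : ℝ)⁻¹ ^ q))
    (by simpa only [← cast_dist_eq_abs_sub] using tsum_comp_dist_le n _)
  rw [← ENNReal.ofReal_tsum_of_nonneg (fun k => by positivity) hsum]
  exact ENNReal.mul_ne_top (by norm_num) ENNReal.ofReal_ne_top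

section WeightedNorm

variable {t p : ℝ}

noncomputable def ewnorm (t p : ℝ) (y : ℕ → ℂ) : ℝ≥0∞ :=
  ennLpNorm p fun m : {m : ℕ // 1 ≤ m} => ENNReal.ofReal ((m.1 : ℝ) ^ t) * ‖y m.1‖ₑ

lemma ofReal_rpow_mul_enorm_rpow (hp : 0 ≤ p) {m : ℕ} (z : ℂ) :
    (ENNReal.ofReal ((m : ℝ) ^ t) * ‖z‖ₑ) ^ p = ENNReal.ofReal ((m : ℝ) ^ (t * p) * ‖z‖ ^ p) := by
  rw [← ofReal_norm, ← ENNReal.ofReal_mul (by positivity),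
    ENNReal.ofReal_rpow_of_nonneg (by positivity) hp, Real.mul_rpow (by positivity) (by positivity),
    ← Real.rpow_mul (Nat.cast_nonneg m)]

/-- No summability is needed: outside `ℓ^{t,p}` the junk value of `tsum` makes `wnorm = 0`,
while `ewnorm = ∞`. -/
lemma wnorm_eq_toReal_ewnorm (hp : 0 ≤ p) (y : ℕ → ℂ) : wnorm t p y = (ewnorm t p y).toReal := by
  simp only [wnorm, ewnorm, ennLpNorm, ofReal_rpow_mul_enorm_rpow hp, ← ENNReal.toReal_rpow,
    ENNReal.tsum_toReal_eq fun _ => ENNReal.ofReal_ne_top]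
  congr 1
  exact tsum_congr fun m => (ENNReal.toReal_ofReal (by positivity)).symm

lemma wnorm_nonneg (t p : ℝ) (y : ℕ → ℂ) : 0 ≤ wnorm t p y :=
  Real.rpow_nonneg (tsum_nonneg fun _ => by positivity) _

lemma ewnorm_ne_top (hp : 0 ≤ p) {y : ℕ → ℂ} (hy : MemW t p y) : ewnorm t p y ≠ ∞ := by
  simp only [ewnorm, ennLpNorm, ofReal_rpow_mul_enorm_rpow hp]
  exact ENNReal.rpow_ne_top_of_nonneg (by positivity) hy.tsum_ofReal_ne_top

lemma ofReal_wnorm (hp : 0 ≤ p) {y : ℕ → ℂ} (hy : MemW t p y) :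
    ENNReal.ofReal (wnorm t p y) = ewnorm t p y := by
  rw [wnorm_eq_toReal_ewnorm hp, ENNReal.ofReal_toReal (ewnorm_ne_top hp hy)]

lemma ewnorm_le_add (hp : 1 ≤ p) {w y z : ℕ → ℂ} (h : ∀ n, ‖w n‖ ≤ ‖y n‖ + ‖z n‖) :
    ewnorm t p w ≤ ewnorm t p y + ewnorm t p z := by
  refine ennLpNorm_le_add hp fun m => ?_
  rw [← mul_add]
  gcongr
  simpa only [← ofReal_norm, ← ENNReal.ofReal_add (norm_nonneg _) (norm_nonneg _)]
    using ENNReal.ofReal_le_ofReal (h m.1)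

lemma ewnorm_const_mul (hp : 0 < p) (k : ℂ) (y : ℕ → ℂ) :
    ewnorm t p (fun n => k * y n) = ‖k‖ₑ * ewnorm t p y := by
  simp only [ewnorm, enorm_mul, mul_left_comm _ ‖k‖ₑ, ennLpNorm_const_mul hp]

/-- Finiteness of `ewnorm t p y` has to be recovered from `l y = w - (w - l y)`: the bound on
`wnorm t p y` says nothing when `y ∉ ℓ^{t,p}`, where `wnorm t p y = 0`. -/
lemma wnorm_le_of_ewnorm_sub_le (hp : 1 ≤ p) {w y : ℕ → ℂ} {l K r : ℝ} (hl : 0 < l)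
    (hr : 0 ≤ r) (hy : wnorm t p y ≤ K)
    (hz : ewnorm t p (fun n => w n - l * y n) ≤ ENNReal.ofReal r) :
    wnorm t p w ≤ l * K + r := by
  have hp0 : 0 < p := by linarith
  have hK : 0 ≤ K := (wnorm_nonneg t p y).trans hy
  rw [wnorm_eq_toReal_ewnorm hp0.le]
  by_cases hw : ewnorm t p w = ∞
  · rw [hw, ENNReal.toReal_top]
    positivity
  have hl' : ‖(l : ℂ)‖ₑ = ENNReal.ofReal l := by
    rw [← ofReal_norm, Complex.norm_real, Real.norm_of_nonneg hl.le]
  have hEy : ewnorm t p y ≤ ENNReal.ofReal K := by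
    have hly : ‖(l : ℂ)‖ₑ * ewnorm t p y ≤ ewnorm t p w + ewnorm t p (fun n => w n - l * y n) :=
      ewnorm_const_mul hp0 (l : ℂ) y ▸ ewnorm_le_add hp fun n => norm_le_norm_add_norm_sub _ _
    have hfin : ewnorm t p y ≠ ∞ := by
      intro htop
      rw [htop, hl', ENNReal.mul_top (by simpa using hl)] at hly
      exact ENNReal.add_ne_top.2 ⟨hw, ne_top_of_le_ne_top ENNReal.ofReal_ne_top hz⟩
        (top_le_iff.1 hly)
    rw [← ENNReal.ofReal_toReal hfin, ← wnorm_eq_toReal_ewnorm hp0.le]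
    exact ENNReal.ofReal_le_ofReal hy
  refine ENNReal.toReal_le_of_le_ofReal (by positivity) ?_
  calc ewnorm t p w
      ≤ ewnorm t p (fun n => (l : ℂ) * y n) + ewnorm t p (fun n => w n - l * y n) :=
        ewnorm_le_add hp fun n => norm_le_norm_add_norm_sub' _ _
    _ ≤ ENNReal.ofReal l * ENNReal.ofReal K + ENNReal.ofReal r := by
        rw [ewnorm_const_mul hp0, hl']
        gcongr
    _ = ENNReal.ofReal (l * K + r) := by
        rw [ENNReal.ofReal_add (by positivity) hr, ENNReal.ofReal_mul hl.le]

end WeightedNorm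

lemma abs_sq_sub_sq_of_nonneg {a b : ℝ} (ha : 0 ≤ a) (hb : 0 ≤ b) :
    |a ^ 2 - b ^ 2| = |a - b| * (a + b) := by
  rw [sq_sub_sq, abs_mul, abs_of_nonneg (add_nonneg ha hb), mul_comm]

lemma rpow_add_one_mul_max_le {s a b : ℝ} (hs : -1 ≤ s) (hs' : s ≤ 0) (ha : 0 < a) (hb : 0 < b) :
    b ^ (s + 1) * max a b ≤ a ^ s * (a + b) ^ 2 := by
  rcases le_total a b with h | h
  · calc b ^ (s + 1) * max a b = b ^ s * b ^ 2 := by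
          rw [max_eq_right h, Real.rpow_add_one hb.ne']; ring
      _ ≤ a ^ s * (a + b) ^ 2 :=
          mul_le_mul (Real.rpow_le_rpow_of_nonpos ha h hs') (by nlinarith) (by positivity)
            (by positivity)
  · calc b ^ (s + 1) * max a b ≤ a ^ (s + 1) * a := by
          rw [max_eq_left h]
          gcongr
          linarith
      _ = a ^ s * a ^ 2 := by rw [Real.rpow_add_one ha.ne']; ring
      _ ≤ a ^ s * (a + b) ^ 2 := by gcongr; linarith

noncomputable def sigma0 (n : ℕ) : ℂ := (n : ℂ) ^ 2 * (Real.pi : ℂ) ^ 2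

noncomputable def Bop (ρ σ x : ℕ → ℂ) (n : ℕ) : ℂ :=
  ∑' m : {m : ℕ // 1 ≤ m ∧ m ≠ n}, x m.1 / (ρ m.1 - σ n)

lemma sigma0_sub_sigma0 (m n : ℕ) :
    sigma0 m - sigma0 n = (((m : ℝ) ^ 2 - (n : ℝ) ^ 2) * Real.pi ^ 2 : ℝ) := by
  push_cast [sigma0]
  ring

lemma norm_sigma0_sub_sigma0 (m n : ℕ) :
    ‖sigma0 m - sigma0 n‖ = |(m : ℝ) ^ 2 - (n : ℝ) ^ 2| * Real.pi ^ 2 := by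
  rw [sigma0_sub_sigma0, Complex.norm_real, Real.norm_eq_abs, abs_mul,
    abs_of_pos (by positivity : (0 : ℝ) < Real.pi ^ 2)]

lemma Bop_sigma0 (x : ℕ → ℂ) (n : ℕ) :
    Bop sigma0 sigma0 x n = ((Real.pi ^ 2)⁻¹ : ℝ) * Aop x n := by
  rw [Bop, Aop, ← tsum_mul_left]
  congr! 2 with m
  rw [sigma0_sub_sigma0, div_eq_mul_inv, Complex.ofReal_mul, mul_inv]
  push_cast
  ring

lemma rpow_mul_norm_inv_sub_inv_le {s c Mρ Mσ : ℝ} (hs : -1 ≤ s) (hs' : s ≤ 0) (hc : 0 < c)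
    {m n : ℕ} (hm : 1 ≤ m) (hn : 1 ≤ n) (hmn : m ≠ n) {ρm σn : ℂ}
    (hsep : c⁻¹ * |(m : ℝ) ^ 2 - (n : ℝ) ^ 2| ≤ ‖ρm - σn‖)
    (hρ : ‖ρm - sigma0 m‖ ≤ Mρ * m) (hσ : ‖σn - sigma0 n‖ ≤ Mσ * n) :
    (n : ℝ) ^ (s + 1) * ‖(ρm - σn)⁻¹ - (sigma0 m - sigma0 n)⁻¹‖
      ≤ c * (Mρ + Mσ) / Real.pi ^ 2 * (1 / ((m : ℝ) - n) ^ 2) * (m : ℝ) ^ s := by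
  have hm0 : (0 : ℝ) < m := by exact_mod_cast hm
  have hn0 : (0 : ℝ) < n := by exact_mod_cast hn
  have hMρ : 0 ≤ Mρ := nonneg_of_mul_nonneg_left ((norm_nonneg _).trans hρ) hm0
  have hMσ : 0 ≤ Mσ := nonneg_of_mul_nonneg_left ((norm_nonneg _).trans hσ) hn0
  have hmn' : 0 < |(m : ℝ) - n| := abs_pos.2 (sub_ne_zero.2 (by exact_mod_cast hmn))
  set δ := |(m : ℝ) ^ 2 - (n : ℝ) ^ 2|
  have hδ' : δ = |(m : ℝ) - n| * (m + n) := abs_sq_sub_sq_of_nonneg hm0.le hn0.le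
  have hδ0 : 0 < δ := by rw [hδ']; positivity
  have ha : 0 < ‖ρm - σn‖ := (by positivity : 0 < c⁻¹ * δ).trans_le hsep
  have hb := norm_sigma0_sub_sigma0 m n
  have hnum : ‖(sigma0 m - sigma0 n) - (ρm - σn)‖ ≤ (Mρ + Mσ) * max (m : ℝ) n :=
    calc ‖(sigma0 m - sigma0 n) - (ρm - σn)‖ = ‖(σn - sigma0 n) - (ρm - sigma0 m)‖ := by ring_nf
      _ ≤ Mσ * n + Mρ * m := (norm_sub_le _ _).trans (add_le_add hσ hρ)
      _ ≤ (Mρ + Mσ) * max (m : ℝ) n := by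
          nlinarith [le_max_left (m : ℝ) n, le_max_right (m : ℝ) n]
  rw [inv_sub_inv' (norm_pos_iff.1 ha) (by rw [← norm_ne_zero_iff, hb]; positivity),
    norm_mul, norm_mul, norm_inv, norm_inv, hb]
  calc (n : ℝ) ^ (s + 1) * (‖ρm - σn‖⁻¹ * ‖sigma0 m - sigma0 n - (ρm - σn)‖ * (δ * Real.pi ^ 2)⁻¹)
      ≤ (n : ℝ) ^ (s + 1) * ((c⁻¹ * δ)⁻¹ * ((Mρ + Mσ) * max (m : ℝ) n) * (δ * Real.pi ^ 2)⁻¹) := by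
        gcongr
    _ = c * (Mρ + Mσ) / Real.pi ^ 2 * ((n : ℝ) ^ (s + 1) * max (m : ℝ) n) / δ ^ 2 := by
        field_simp
    _ ≤ c * (Mρ + Mσ) / Real.pi ^ 2 * ((m : ℝ) ^ s * (m + n) ^ 2) / δ ^ 2 := by
        gcongr c * (Mρ + Mσ) / Real.pi ^ 2 * ?_ / δ ^ 2
        exact rpow_add_one_mul_max_le hs hs' hm0 hn0
    _ = c * (Mρ + Mσ) / Real.pi ^ 2 * (1 / ((m : ℝ) - n) ^ 2) * (m : ℝ) ^ s := by
        rw [hδ', mul_pow, sq_abs]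
        field_simp

lemma summable_of_tsum_ofReal_ne_top {α : Type*} {f : α → ℝ} (hf : ∀ a, 0 ≤ f a)
    (h : ∑' a, ENNReal.ofReal (f a) ≠ ∞) : Summable f := by
  simpa only [ENNReal.toReal_ofReal (hf _)] using ENNReal.summable_toReal h

lemma summable_norm_div_abs_sq_sub_sq {p s : ℝ} (hp : 1 < p) (hs : -1 ≤ s) {x : ℕ → ℂ}
    (hx : MemW s p x) (n : ℕ) :
    Summable fun m : {m : ℕ // 1 ≤ m ∧ m ≠ n} => ‖x m.1‖ / |(m.1 : ℝ) ^ 2 - (n : ℝ) ^ 2| := by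
  have hpq := Real.HolderConjugate.conjExponent hp
  refine summable_of_tsum_ofReal_ne_top (fun m => by positivity) ?_
  have hpt : ∀ m : {m : ℕ // 1 ≤ m ∧ m ≠ n},
      ENNReal.ofReal (‖x m.1‖ / |(m.1 : ℝ) ^ 2 - (n : ℝ) ^ 2|)
        ≤ ENNReal.ofReal ((m.1 : ℝ) ^ s) * ‖x m.1‖ₑ * ENNReal.ofReal |(m.1 : ℝ) - n|⁻¹ := by
    rintro ⟨m, hm, hmn⟩
    have hm1 : (1 : ℝ) ≤ m := by exact_mod_cast hm
    have hmn' : 0 < |(m : ℝ) - n| := abs_pos.2 (sub_ne_zero.2 (by exact_mod_cast hmn))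
    have hweight : ((m : ℝ) + n)⁻¹ ≤ (m : ℝ) ^ s := by
      rw [inv_le_iff_one_le_mul₀' (by positivity)]
      calc (1 : ℝ) ≤ (m : ℝ) ^ (s + 1) := Real.one_le_rpow hm1 (by linarith)
        _ = m * (m : ℝ) ^ s := by rw [Real.rpow_add_one (by positivity), mul_comm]
        _ ≤ (m + n) * (m : ℝ) ^ s := by gcongr; linarith [(n.cast_nonneg : (0 : ℝ) ≤ n)]
    rw [← ofReal_norm, ← ENNReal.ofReal_mul (by positivity), ← ENNReal.ofReal_mul (by positivity)]
    refine ENNReal.ofReal_le_ofReal ?_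
    rw [abs_sq_sub_sq_of_nonneg (by positivity) (by positivity), div_eq_mul_inv, mul_inv]
    calc ‖x m‖ * (|(m : ℝ) - n|⁻¹ * ((m : ℝ) + n)⁻¹)
        ≤ ‖x m‖ * (|(m : ℝ) - n|⁻¹ * (m : ℝ) ^ s) := by gcongr
      _ = (m : ℝ) ^ s * ‖x m‖ * |(m : ℝ) - n|⁻¹ := by ring
  refine ne_top_of_le_ne_top ?_
    ((ENNReal.tsum_le_tsum hpt).trans (tsum_mul_le_ennLpNorm_mul hpq _ _))
  refine ENNReal.mul_ne_top (ne_top_of_le_ne_top (ewnorm_ne_top hpq.nonneg hx) ?_) ?_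
  · simp only [ewnorm, ennLpNorm]
    refine ENNReal.rpow_le_rpow ?_ hpq.one_div_nonneg
    exact ENNReal.tsum_comp_le_tsum_of_injective
      (f := fun m : {m : ℕ // 1 ≤ m ∧ m ≠ n} => (⟨m.1, m.2.1⟩ : {m : ℕ // 1 ≤ m}))
      (fun a b hab => Subtype.ext (Subtype.mk.inj hab))
      (fun m => (ENNReal.ofReal ((m.1 : ℝ) ^ s) * ‖x m.1‖ₑ) ^ p)
  · simp only [ennLpNorm]
    refine ENNReal.rpow_ne_top_of_nonneg hpq.symm.one_div_nonneg ?_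
    refine ne_top_of_le_ne_top (tsum_inv_abs_sub_rpow_ne_top n hpq.symm.lt) ?_
    simp_rw [ENNReal.ofReal_rpow_of_nonneg (inv_nonneg.2 (abs_nonneg _)) hpq.symm.nonneg]
    exact ENNReal.tsum_comp_le_tsum_of_injective Subtype.val_injective
      (fun m : ℕ => ENNReal.ofReal (|(m : ℝ) - n|⁻¹ ^ p.conjExponent))

lemma summable_norm_div_of_sep {p s c : ℝ} (hp : 1 < p) (hs : -1 ≤ s) (hc : 0 < c)
    {ρ σ x : ℕ → ℂ} (hx : MemW s p x) {n : ℕ}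
    (hsep : ∀ m : ℕ, 1 ≤ m → m ≠ n → c⁻¹ * |(m : ℝ) ^ 2 - (n : ℝ) ^ 2| ≤ ‖ρ m - σ n‖) :
    Summable fun m : {m : ℕ // 1 ≤ m ∧ m ≠ n} => ‖x m.1 / (ρ m.1 - σ n)‖ := by
  refine ((summable_norm_div_abs_sq_sub_sq hp hs hx n).mul_left c).of_nonneg_of_le
    (fun _ => norm_nonneg _) fun ⟨m, hm, hmn⟩ => ?_
  have hδ : 0 < |(m : ℝ) ^ 2 - (n : ℝ) ^ 2| :=
    abs_pos.2 (sub_ne_zero.2 (by exact_mod_cast (Nat.pow_left_injective two_ne_zero).ne hmn))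
  rw [norm_div]
  calc ‖x m‖ / ‖ρ m - σ n‖ ≤ ‖x m‖ / (c⁻¹ * |(m : ℝ) ^ 2 - (n : ℝ) ^ 2|) :=
        div_le_div_of_nonneg_left (norm_nonneg _) (by positivity) (hsep m hm hmn)
    _ = c * (‖x m‖ / |(m : ℝ) ^ 2 - (n : ℝ) ^ 2|) := by field_simp

lemma sep_sigma0 (m n : ℕ) :
    (Real.pi ^ 2)⁻¹⁻¹ * |(m : ℝ) ^ 2 - (n : ℝ) ^ 2| ≤ ‖sigma0 m - sigma0 n‖ := by
  rw [inv_inv, norm_sigma0_sub_sigma0, mul_comm]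

section Remainder

variable {p s c Mρ Mσ : ℝ} {ρ σ x : ℕ → ℂ}

lemma Bop_sub_Bop_sigma0 (hp : 1 < p) (hs : -1 ≤ s) (hc : 0 < c) (hx : MemW s p x) {n : ℕ}
    (hsep : ∀ m : ℕ, 1 ≤ m → m ≠ n → c⁻¹ * |(m : ℝ) ^ 2 - (n : ℝ) ^ 2| ≤ ‖ρ m - σ n‖) :
    Bop ρ σ x n - Bop sigma0 sigma0 x n
      = ∑' m : {m : ℕ // 1 ≤ m ∧ m ≠ n},
          x m.1 * ((ρ m.1 - σ n)⁻¹ - (sigma0 m.1 - sigma0 n)⁻¹) := by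
  rw [Bop, Bop, ← (summable_norm_div_of_sep hp hs hc hx hsep).of_norm.tsum_sub
    (summable_norm_div_of_sep hp hs (by positivity) hx fun m _ _ => sep_sigma0 m n).of_norm]
  simp only [div_eq_mul_inv, mul_sub]

lemma rpow_mul_enorm_Bop_sub_Bop_sigma0_le (hp : 1 < p) (hs : -1 ≤ s) (hs' : s ≤ 0)
    (hc : 0 < c) (hx : MemW s p x) {n : ℕ} (hn : 1 ≤ n)
    (hsep : ∀ m : ℕ, 1 ≤ m → m ≠ n → c⁻¹ * |(m : ℝ) ^ 2 - (n : ℝ) ^ 2| ≤ ‖ρ m - σ n‖)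
    (hρ : ∀ m : ℕ, 1 ≤ m → ‖ρ m - sigma0 m‖ ≤ Mρ * m) (hσ : ‖σ n - sigma0 n‖ ≤ Mσ * n) :
    ENNReal.ofReal ((n : ℝ) ^ (s + 1)) * ‖Bop ρ σ x n - Bop sigma0 sigma0 x n‖ₑ
      ≤ ENNReal.ofReal (c * (Mρ + Mσ) / Real.pi ^ 2)
        * ∑' m : {m : ℕ // 1 ≤ m}, ENNReal.ofReal (1 / ((m.1 : ℝ) - n) ^ 2)
          * (ENNReal.ofReal ((m.1 : ℝ) ^ s) * ‖x m.1‖ₑ) := by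
  have hterm : ∀ m : {m : ℕ // 1 ≤ m ∧ m ≠ n}, ENNReal.ofReal ((n : ℝ) ^ (s + 1))
      * ‖x m.1 * ((ρ m.1 - σ n)⁻¹ - (sigma0 m.1 - sigma0 n)⁻¹)‖ₑ
      ≤ ENNReal.ofReal (c * (Mρ + Mσ) / Real.pi ^ 2) * (ENNReal.ofReal (1 / ((m.1 : ℝ) - n) ^ 2)
        * (ENNReal.ofReal ((m.1 : ℝ) ^ s) * ‖x m.1‖ₑ)) := by
    rintro ⟨m, hm, hmn⟩
    have hkernel :=
      rpow_mul_norm_inv_sub_inv_le hs hs' hc hm hn hmn (hsep m hm hmn) (hρ m hm) hσ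
    dsimp only
    rw [enorm_mul, ← ofReal_norm, ← ofReal_norm, ← ENNReal.ofReal_mul (by positivity),
      ← ENNReal.ofReal_mul (by positivity), ← ENNReal.ofReal_mul (by positivity),
      ← ENNReal.ofReal_mul (by positivity), ← ENNReal.ofReal_mul' (by positivity)]
    refine ENNReal.ofReal_le_ofReal ?_
    calc (n : ℝ) ^ (s + 1) * (‖x m‖ * ‖(ρ m - σ n)⁻¹ - (sigma0 m - sigma0 n)⁻¹‖)
        = ‖x m‖ * ((n : ℝ) ^ (s + 1) * ‖(ρ m - σ n)⁻¹ - (sigma0 m - sigma0 n)⁻¹‖) := by ring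
      _ ≤ ‖x m‖ * (c * (Mρ + Mσ) / Real.pi ^ 2 * (1 / ((m : ℝ) - n) ^ 2) * (m : ℝ) ^ s) := by
        gcongr
      _ = _ := by ring
  rw [Bop_sub_Bop_sigma0 hp hs hc hx hsep]
  refine (mul_le_mul_right enorm_tsum_le_tsum_enorm _).trans ?_
  rw [← ENNReal.tsum_mul_left, ← ENNReal.tsum_mul_left]
  exact (ENNReal.tsum_le_tsum hterm).trans <| ENNReal.tsum_comp_le_tsum_of_injective
    (f := fun m : {m : ℕ // 1 ≤ m ∧ m ≠ n} => (⟨m.1, m.2.1⟩ : {m : ℕ // 1 ≤ m}))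
    (fun a b hab => Subtype.ext (Subtype.mk.inj hab)) _

lemma ewnorm_Bop_sub_Bop_sigma0_le (hp : 1 < p) (hs : -1 ≤ s) (hs' : s ≤ 0) (hc : 0 < c)
    (hsep : ∀ m n : ℕ, 1 ≤ m → 1 ≤ n → m ≠ n →
      c⁻¹ * |(m : ℝ) ^ 2 - (n : ℝ) ^ 2| ≤ ‖ρ m - σ n‖)
    (hρ : ∀ m : ℕ, 1 ≤ m → ‖ρ m - sigma0 m‖ ≤ Mρ * m)
    (hσ : ∀ n : ℕ, 1 ≤ n → ‖σ n - sigma0 n‖ ≤ Mσ * n) (hx : MemW s p x) :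
    ewnorm (s + 1) p (fun n => Bop ρ σ x n - Bop sigma0 sigma0 x n)
      ≤ ENNReal.ofReal (4 * (c * (Mρ + Mσ) / Real.pi ^ 2) * wnorm s p x) := by
  have hpq := Real.HolderConjugate.conjExponent hp
  have hrow : ∀ n : {n : ℕ // 1 ≤ n},
      ∑' m : {m : ℕ // 1 ≤ m}, ENNReal.ofReal (1 / ((m.1 : ℝ) - n.1) ^ 2) ≤ 4 := fun n =>
    (ENNReal.tsum_comp_le_tsum_of_injective Subtype.val_injective
      fun m : ℕ => ENNReal.ofReal (1 / ((m : ℝ) - n.1) ^ 2)).trans (tsum_one_div_sub_sq_le_four n)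
  have hcol : ∀ m : {m : ℕ // 1 ≤ m},
      ∑' n : {n : ℕ // 1 ≤ n}, ENNReal.ofReal (1 / ((m.1 : ℝ) - n.1) ^ 2) ≤ 4 := fun m =>
    (tsum_congr fun n => by rw [← neg_sub, neg_sq]).trans_le (hrow m)
  calc ewnorm (s + 1) p (fun n => Bop ρ σ x n - Bop sigma0 sigma0 x n)
      ≤ ennLpNorm p fun n : {n : ℕ // 1 ≤ n} => ENNReal.ofReal (c * (Mρ + Mσ) / Real.pi ^ 2)
          * ∑' m : {m : ℕ // 1 ≤ m}, ENNReal.ofReal (1 / ((m.1 : ℝ) - n.1) ^ 2)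
            * (ENNReal.ofReal ((m.1 : ℝ) ^ s) * ‖x m.1‖ₑ) :=
        ennLpNorm_mono hpq.nonneg fun n => rpow_mul_enorm_Bop_sub_Bop_sigma0_le hp hs hs' hc hx
          n.2 (fun m hm hmn => hsep m n hm n.2 hmn) hρ (hσ n n.2)
    _ ≤ ENNReal.ofReal (c * (Mρ + Mσ) / Real.pi ^ 2) * (4 * ewnorm s p x) := by
        rw [ennLpNorm_const_mul hpq.pos]
        gcongr
        exact ennLpNorm_tsum_mul_le hpq _ 4 hrow hcol _
    _ = ENNReal.ofReal (4 * (c * (Mρ + Mσ) / Real.pi ^ 2) * wnorm s p x) := by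
        rw [← ofReal_wnorm hpq.nonneg hx, ENNReal.ofReal_mul' (wnorm_nonneg s p x),
          ENNReal.ofReal_mul (by norm_num), ENNReal.ofReal_ofNat]
        ring

end Remainder

theorem stmt5_general (p s : ℝ) (hp : 1 < p) (hs : -1 ≤ s) (hs' : s ≤ 0)
    (σ ρ : ℕ → ℂ) (c : ℝ) (hc : 0 < c)
    (hsep : ∀ m n : ℕ, 1 ≤ m → 1 ≤ n → m ≠ n →
      c⁻¹ * |(m : ℝ) ^ 2 - (n : ℝ) ^ 2| ≤ ‖ρ m - σ n‖)
    (Mσ Mρ : ℝ)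
    (hMσ : ∀ m : ℕ, 1 ≤ m → (m : ℝ)⁻¹ * ‖σ m - (m : ℂ) ^ 2 * (Real.pi : ℂ) ^ 2‖ ≤ Mσ)
    (hMρ : ∀ m : ℕ, 1 ≤ m → (m : ℝ)⁻¹ * ‖ρ m - (m : ℂ) ^ 2 * (Real.pi : ℂ) ^ 2‖ ≤ Mρ)
    (K : ℝ)
    (hA : ∀ x : ℕ → ℂ, MemW s p x → wnorm (s + 1) p (Aop x) ≤ K * wnorm s p x)
    (x : ℕ → ℂ) (hx : MemW s p x) :
    (∀ n : ℕ, 1 ≤ n →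
      Summable fun m : {m : ℕ // 1 ≤ m ∧ m ≠ n} => ‖x m.1 / (ρ m.1 - σ n)‖) ∧
    wnorm (s + 1) p (fun n => ∑' m : {m : ℕ // 1 ≤ m ∧ m ≠ n}, x m.1 / (ρ m.1 - σ n))
      ≤ (Real.pi ^ 2)⁻¹ * (K + 4 * c * Mρ + 4 * c * Mσ) * wnorm s p x := by
  have hρ : ∀ m : ℕ, 1 ≤ m → ‖ρ m - sigma0 m‖ ≤ Mρ * m := fun m hm => by
    rw [mul_comm, ← inv_mul_le_iff₀ (by positivity)]
    exact hMρ m hm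
  have hσ : ∀ n : ℕ, 1 ≤ n → ‖σ n - sigma0 n‖ ≤ Mσ * n := fun n hn => by
    rw [mul_comm, ← inv_mul_le_iff₀ (by positivity)]
    exact hMσ n hn
  have hMρ0 : 0 ≤ Mρ := le_trans (by positivity) (hMρ 1 le_rfl)
  have hMσ0 : 0 ≤ Mσ := le_trans (by positivity) (hMσ 1 le_rfl)
  refine ⟨fun n hn => summable_norm_div_of_sep hp hs hc hx fun m hm hmn => hsep m n hm hn hmn, ?_⟩
  have hrem := ewnorm_Bop_sub_Bop_sigma0_le hp hs hs' hc hsep hρ hσ hx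
  simp only [Bop_sigma0] at hrem
  calc wnorm (s + 1) p (Bop ρ σ x)
      ≤ (Real.pi ^ 2)⁻¹ * (K * wnorm s p x) + 4 * (c * (Mρ + Mσ) / Real.pi ^ 2) * wnorm s p x :=
        wnorm_le_of_ewnorm_sub_le hp.le (by positivity)
          (mul_nonneg (by positivity) (wnorm_nonneg s p x)) (hA x hx) hrem
    _ = (Real.pi ^ 2)⁻¹ * (K + 4 * c * Mρ + 4 * c * Mσ) * wnorm s p x := by ring

/-- Let `σ = σ⁰ + σ̃`, `ρ = σ⁰ + ρ̃` (with `σ⁰_n = n²π²`) where `σ̃, ρ̃ ∈ ℓ^{−1,∞}`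
(with `‖σ̃‖_{−1,∞} ≤ Mσ`, `‖ρ̃‖_{−1,∞} ≤ Mρ`), and suppose `c > 0` satisfies
`|ρ_m − σ_n| ≥ c⁻¹ |m² − n²|` for all `m ≠ n`.  Then for `−1 ≤ s ≤ 0`, `1 < p < ∞`,
and `K` any bound for the operator norm of `A : ℓ^{s,p} → ℓ^{s+1,p}`, the operator
`(Bx)_n = ∑_{m ≠ n} x_m/(ρ_m − σ_n)` is, on every `x ∈ ℓ^{s,p}`, given by absolutely
convergent series and satisfies
`‖Bx‖_{s+1,p} ≤ π⁻² (K + 4 c Mρ + 4 c Mσ) ‖x‖_{s,p}`. -/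
theorem stmt5 (p s : ℝ) (hp : 1 < p) (hs : -1 ≤ s) (hs' : s ≤ 0)
    (σ ρ : ℕ → ℂ) (c : ℝ) (hc : 0 < c)
    (hsep : ∀ m n : ℕ, 1 ≤ m → 1 ≤ n → m ≠ n →
      c⁻¹ * |(m : ℝ) ^ 2 - (n : ℝ) ^ 2| ≤ ‖ρ m - σ n‖)
    (Mσ Mρ : ℝ)
    (hMσ : ∀ m : ℕ, 1 ≤ m → (m : ℝ)⁻¹ * ‖σ m - (m : ℂ) ^ 2 * (Real.pi : ℂ) ^ 2‖ ≤ Mσ)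
    (hMρ : ∀ m : ℕ, 1 ≤ m → (m : ℝ)⁻¹ * ‖ρ m - (m : ℂ) ^ 2 * (Real.pi : ℂ) ^ 2‖ ≤ Mρ)
    (K : ℝ) (hK : 0 ≤ K)
    (hA : ∀ x : ℕ → ℂ, MemW s p x → wnorm (s + 1) p (Aop x) ≤ K * wnorm s p x)
    (x : ℕ → ℂ) (hx : MemW s p x) :
    (∀ n : ℕ, 1 ≤ n →
      Summable fun m : {m : ℕ // 1 ≤ m ∧ m ≠ n} => ‖x m.1 / (ρ m.1 - σ n)‖) ∧
    wnorm (s + 1) p (fun n => ∑' m : {m : ℕ // 1 ≤ m ∧ m ≠ n}, x m.1 / (ρ m.1 - σ n))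
      ≤ (Real.pi ^ 2)⁻¹ * (K + 4 * c * Mρ + 4 * c * Mσ) * wnorm s p x :=
  stmt5_general p s hp hs hs' σ ρ c hc hsep Mσ Mρ hMσ hMρ K hA x hx
end

section
/- There exists a constant C > 0 such that for every real α with −3/2 ≤ α ≤ 3/2 and all integers n, k ≥ 1 with n ≠ k, one has 1/|n² − k²| ≤ C · n^{α − 1/2} · k^{−α − 1/2}. -/
lemma stmt6_aux (α x y : ℝ) (hα : -(3/2 : ℝ) ≤ α) (hy : 1 ≤ y) (hxy : y + 1 ≤ x) :
    1 / (x ^ 2 - y ^ 2) ≤ 2 * x ^ (α - 1/2) * y ^ (-α - 1/2) := by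
  have hx : (1:ℝ) ≤ x := by linarith
  have hx0 : (0:ℝ) < x := by linarith
  have hy0 : (0:ℝ) < y := by linarith
  have key : y ^ (α + 3/2) ≤ x ^ (α + 3/2) :=
    Real.rpow_le_rpow (le_of_lt hy0) (by linarith) (by linarith)
  -- step 1 : y / x^2 ≤ x ^ (α - 1/2) * y ^ (-α - 1/2)
  have h1 : y / x ^ 2 ≤ x ^ (α - 1/2) * y ^ (-α - 1/2) := by
    rw [div_le_iff₀ (by positivity)]
    have e1 : x ^ (α - 1/2) * y ^ (-α - 1/2) * x ^ 2
        = x ^ (α + 3/2) * y ^ (-α - 1/2) := by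
      rw [show (x:ℝ) ^ 2 = x ^ ((2:ℕ):ℝ) from (Real.rpow_natCast x 2).symm,
        mul_right_comm, ← Real.rpow_add hx0]
      congr 2
      push_cast
      ring
    have e2 : y ^ (α + 3/2) * y ^ (-α - 1/2) = y := by
      rw [← Real.rpow_add hy0, show α + 3/2 + (-α - 1/2) = (1:ℝ) by ring, Real.rpow_one]
    rw [e1]
    nth_rewrite 1 [← e2]
    have hyp : (0:ℝ) < y ^ (-α - 1/2) := Real.rpow_pos_of_pos hy0 _
    exact mul_le_mul_of_nonneg_right key (le_of_lt hyp)
  -- step 2 : 1 / (x^2 - y^2) ≤ 2 * y / x^2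
  have h2 : 1 / (x ^ 2 - y ^ 2) ≤ 2 * y / x ^ 2 := by
    rw [div_le_div_iff₀ (by nlinarith) (by positivity)]
    nlinarith [mul_pos hy0 (show (0:ℝ) < x - y by linarith),
      (show (0:ℝ) ≤ (y - 1) * (x - y - 1) by nlinarith)]
  calc 1 / (x ^ 2 - y ^ 2) ≤ 2 * y / x ^ 2 := h2
    _ = 2 * (y / x ^ 2) := by ring
    _ ≤ 2 * (x ^ (α - 1/2) * y ^ (-α - 1/2)) := by linarith
    _ = 2 * x ^ (α - 1/2) * y ^ (-α - 1/2) := by ring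

/-- There is a constant `C > 0`, uniform in `α ∈ [−3/2, 3/2]` and in `n, k ≥ 1` with
`n ≠ k`, such that `1/|n² − k²| ≤ C · n^{α − 1/2} · k^{−α − 1/2}`. -/
theorem stmt6 :
    ∃ C > 0, ∀ α : ℝ, -(3/2 : ℝ) ≤ α → α ≤ 3/2 → ∀ n k : ℕ, 1 ≤ n → 1 ≤ k → n ≠ k →
      1 / |(n : ℝ) ^ 2 - (k : ℝ) ^ 2| ≤
        C * (n : ℝ) ^ (α - 1/2) * (k : ℝ) ^ (-α - 1/2) := by
  refine ⟨2, by norm_num, ?_⟩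
  intro α hα1 hα2 n k hn hk hnk
  have hn1 : (1:ℝ) ≤ (n:ℝ) := by exact_mod_cast hn
  have hk1 : (1:ℝ) ≤ (k:ℝ) := by exact_mod_cast hk
  rcases lt_or_gt_of_ne hnk with h | h
  · -- n < k
    have hcast : (n:ℝ) + 1 ≤ (k:ℝ) := by exact_mod_cast Nat.succ_le_of_lt h
    have habs : |(n : ℝ) ^ 2 - (k : ℝ) ^ 2| = (k:ℝ)^2 - (n:ℝ)^2 := by
      rw [abs_sub_comm]
      exact abs_of_pos (by nlinarith)
    rw [habs]
    have := stmt6_aux (-α) (k:ℝ) (n:ℝ) (by linarith) hn1 hcast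
    calc 1 / ((k:ℝ)^2 - (n:ℝ)^2)
        ≤ 2 * (k:ℝ) ^ (-α - 1/2) * (n:ℝ) ^ (-(-α) - 1/2) := this
      _ = 2 * (n:ℝ) ^ (α - 1/2) * (k:ℝ) ^ (-α - 1/2) := by
          rw [show -(-α) - 1/2 = α - 1/2 by ring]; ring
  · -- k < n
    have hcast : (k:ℝ) + 1 ≤ (n:ℝ) := by exact_mod_cast Nat.succ_le_of_lt h
    have habs : |(n : ℝ) ^ 2 - (k : ℝ) ^ 2| = (n:ℝ)^2 - (k:ℝ)^2 :=
      abs_of_pos (by nlinarith)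
    rw [habs]
    exact stmt6_aux α (n:ℝ) (k:ℝ) hα1 hk1 hcast
end

section
/- Let 1 ≤ p < ∞, σ ∈ ℝ, let U be an open subset of the complex weighted sequence space ℓ_ℂ^{σ,p}, let (ω_n^∘)_{n≥1} be real constants, and let ω^⋆ : U → ℓ_ℂ^∞ be an analytic map with components ω_n^⋆. Then for every T > 0 the map S : U → C([−T,T], ℓ_ℂ^{σ,p}) defined by S(z) = (t ↦ (e^{i(ω_n^∘ + ω_n^⋆(z)) t} z_n)_{n≥1}) is well defined and analytic, where C([−T,T], ℓ_ℂ^{σ,p}) carries the supremum norm. -/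
open scoped ENNReal NNReal

/-!
Write `S z = exp (i t Ω(z)) · R z` with `R z = (t ↦ (e^{i ω₀ₙ t} zₙ)ₙ)`. The map `R` is linear, and the
first factor is the exponential, in the Banach algebra `C([-T, T], ℓ^∞)`, of a continuous linear image
of `Ω(z)`; since multiplication `C([-T, T], ℓ^∞) × C([-T, T], ℓ^p) → C([-T, T], ℓ^p)` is continuous
bilinear, `S` is analytic wherever `Ω` is. The one analytic point is that `R z` is continuous in `t`:
`t ↦ (e^{i ω₀ₙ t})ₙ` is not continuous into `ℓ^∞`, but it is bounded and coordinatewise continuous,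
which suffices because finitely supported sequences are dense in `ℓ^p` for `p < ∞`.
-/

/-- The sequence space `ℓ^p(ℕ₊, ℂ)` (the weighted space `ℓ_ℂ^{σ,p}` is isometrically
identified with it via the weight `n^σ`). -/
noncomputable abbrev SeqSp (p : ℝ≥0∞) := lp (fun _ : ℕ+ => ℂ) p

theorem ContinuousMap.exp_apply {X A : Type*} [TopologicalSpace X] [CompactSpace X] [NormedRing A]
    [NormedAlgebra ℚ A] [CompleteSpace A] (f : C(X, A)) (x : X) :
    NormedSpace.exp f x = NormedSpace.exp (f x) :=
  NormedSpace.map_exp ((Pi.evalRingHom _ x).comp ContinuousMap.coeFnRingHom)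
    (continuous_eval_const x) f

namespace ContinuousLinearMap

variable {𝕜 E F G X : Type*} [NontriviallyNormedField 𝕜]
  [NormedAddCommGroup E] [NormedSpace 𝕜 E] [NormedAddCommGroup F] [NormedSpace 𝕜 F]
  [NormedAddCommGroup G] [NormedSpace 𝕜 G] [TopologicalSpace X] [CompactSpace X]

noncomputable def flipContinuousMap (L : X → E →L[𝕜] F) (hL : ∀ e, Continuous fun x => L x e)
    (C : ℝ≥0) (hC : ∀ x, ‖L x‖ ≤ C) : E →L[𝕜] C(X, F) :=
  LinearMap.mkContinuous
    { toFun e := ⟨fun x => L x e, hL e⟩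
      map_add' e e' := by ext; simp
      map_smul' c e := by ext; simp }
    C fun e => (ContinuousMap.norm_le _ (by positivity)).mpr fun x => (L x).le_of_opNorm_le (hC x) e

variable (X) in
noncomputable def compLeftContinuous₂ (B : E →L[𝕜] F →L[𝕜] G) :
    C(X, E) →L[𝕜] C(X, F) →L[𝕜] C(X, G) :=
  LinearMap.mkContinuous₂
    { toFun a :=
        { toFun b := ⟨fun x => B (a x) (b x), by fun_prop⟩
          map_add' b b' := by ext; simp
          map_smul' c b := by ext; simp }
      map_add' a a' := by ext; simp
      map_smul' c a := by ext; simp }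
    ‖B‖ fun a b => (ContinuousMap.norm_le _ (by positivity)).mpr fun x =>
      B.le_of_opNorm₂_le_of_le le_rfl (a.norm_coe_le_norm x) (b.norm_coe_le_norm x)

@[simp]
theorem compLeftContinuous₂_apply_apply (B : E →L[𝕜] F →L[𝕜] G) (a : C(X, E)) (b : C(X, F))
    (x : X) : compLeftContinuous₂ X B a b x = B (a x) (b x) := rfl

end ContinuousLinearMap

namespace lp

variable {𝕜 ι : Type*} [RCLike 𝕜]

theorem infty_exp_apply (a : lp (fun _ : ι => 𝕜) ∞) (i : ι) :
    NormedSpace.exp a i = NormedSpace.exp (a i) :=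
  NormedSpace.map_exp ((Pi.evalRingHom _ i).comp (lpInftySubring fun _ : ι => 𝕜).subtype)
    (lp.evalCLM 𝕜 _ ∞ i).continuous a

variable {p : ℝ≥0∞} [Fact (1 ≤ p)]

variable (𝕜 ι p) in
noncomputable def mulL :
    lp (fun _ : ι => 𝕜) ∞ →L[𝕜] lp (fun _ : ι => 𝕜) p →L[𝕜] lp (fun _ : ι => 𝕜) p :=
  holderL p (fun _ => ContinuousLinearMap.mul 𝕜 𝕜) (K := 1) (fun _ => by simp)

@[simp]
theorem mulL_apply_apply (a : lp (fun _ : ι => 𝕜) ∞) (f : lp (fun _ : ι => 𝕜) p) (i : ι) :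
    mulL 𝕜 ι p a f i = a i * f i := rfl

theorem norm_mulL_apply_le (a : lp (fun _ : ι => 𝕜) ∞) : ‖mulL 𝕜 ι p a‖ ≤ ‖a‖ := by
  have h : ‖mulL 𝕜 ι p‖ ≤ 1 := by exact_mod_cast norm_holderL_le (p := ∞) (q := p) p _ _
  grw [(mulL 𝕜 ι p).le_opNorm a, h, one_mul]

theorem mulL_single [DecidableEq ι] (a : lp (fun _ : ι => 𝕜) ∞) (i : ι) (c : 𝕜) :
    mulL 𝕜 ι p a (lp.single p i c) = a i • lp.single p i c := by
  ext j
  by_cases h : j = i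
  · subst h; simp
  · simp [h]

theorem continuous_mulL_apply {X : Type*} [TopologicalSpace X] (hp : p ≠ ⊤)
    {a : X → lp (fun _ : ι => 𝕜) ∞} (ha : ∀ i, Continuous fun x => a x i) {C : ℝ≥0}
    (hC : ∀ x, ‖a x‖ ≤ C) (f : lp (fun _ : ι => 𝕜) p) :
    Continuous fun x => mulL 𝕜 ι p (a x) f := by
  classical
  let partialSum (s : Finset ι) : lp (fun _ : ι => 𝕜) p := ∑ i ∈ s, lp.single p i (f i)
  refine TendstoUniformly.continuous (p := Filter.atTop)
    (F := fun s x => mulL 𝕜 ι p (a x) (partialSum s)) ?_ (Filter.Frequently.of_forall fun s => ?_)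
  · rw [Metric.tendstoUniformly_iff]
    intro ε hε
    have hCε : 0 < ε / (C + 1) := by positivity
    filter_upwards [Metric.tendsto_nhds.mp (lp.hasSum_single hp f) _ hCε] with s hs x
    rw [dist_eq_norm, ← map_sub]
    calc ‖mulL 𝕜 ι p (a x) (f - partialSum s)‖ ≤ C * ‖f - partialSum s‖ :=
          (mulL 𝕜 ι p (a x)).le_of_opNorm_le ((norm_mulL_apply_le _).trans (hC x)) _
      _ ≤ (C + 1) * ‖f - partialSum s‖ := by gcongr; linarith
      _ < (C + 1) * (ε / (C + 1)) := by gcongr; rwa [norm_sub_rev, ← dist_eq_norm]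
      _ = ε := by field_simp
  · simp only [partialSum, map_sum, mulL_single]
    exact continuous_finsetSum _ fun i _ => (ha i).smul continuous_const

noncomputable def multiplierCurveL {X : Type*} [TopologicalSpace X] [CompactSpace X]
    (hp : p ≠ ⊤) (a : X → lp (fun _ : ι => 𝕜) ∞) (ha : ∀ i, Continuous fun x => a x i)
    (C : ℝ≥0) (hC : ∀ x, ‖a x‖ ≤ C) : lp (fun _ : ι => 𝕜) p →L[𝕜] C(X, lp (fun _ : ι => 𝕜) p) :=
  ContinuousLinearMap.flipContinuousMap (fun x => mulL 𝕜 ι p (a x))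
    (continuous_mulL_apply hp ha hC) C fun x => (norm_mulL_apply_le _).trans (hC x)

variable (ι) in
noncomputable def phase (ω : ι → ℝ) (t : ℝ) : lp (fun _ : ι => ℂ) ∞ :=
  ⟨fun i => Complex.exp (Complex.I * ω i * t), memℓp_infty ⟨1, by
    rintro _ ⟨i, rfl⟩
    simp [Complex.norm_exp]⟩⟩

@[simp]
theorem phase_apply (ω : ι → ℝ) (t : ℝ) (i : ι) :
    phase ι ω t i = Complex.exp (Complex.I * ω i * t) := rfl

theorem norm_phase_le (ω : ι → ℝ) (t : ℝ) : ‖phase ι ω t‖ ≤ 1 :=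
  lp.norm_le_of_forall_le zero_le_one fun i => by simp [Complex.norm_exp]

theorem continuous_phase_apply (ω : ι → ℝ) (i : ι) : Continuous fun t => phase ι ω t i := by
  simp only [phase_apply]
  fun_prop

end lp

open lp ContinuousLinearMap in
theorem stmt12_general (p : ℝ≥0∞) [Fact (1 ≤ p)] (hp : p ≠ ⊤)
    (U : Set (SeqSp p))
    (ω₀ : ℕ+ → ℝ)
    (Ω : SeqSp p → SeqSp ⊤)
    (hΩ : AnalyticOnNhd ℂ Ω U)
    (T : ℝ) :
    ∃ S : SeqSp p → C(Set.Icc (-T) T, SeqSp p),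
      (∀ z ∈ U, ∀ t : Set.Icc (-T) T, ∀ n : ℕ+,
        (S z t).1 n = Complex.exp (Complex.I * ((ω₀ n : ℂ) + (Ω z).1 n) * (t.1 : ℂ)) * z.1 n) ∧
      AnalyticOnNhd ℂ S U := by
  let X := Set.Icc (-T) T
  let τ : C(X, SeqSp ⊤) := ⟨fun t => (Complex.I * t.1) • 1, by fun_prop⟩
  let exponent : SeqSp ⊤ →L[ℂ] C(X, SeqSp ⊤) := mul ℂ _ τ ∘L const ℂ X
  let rotation : SeqSp p →L[ℂ] C(X, SeqSp p) :=
    multiplierCurveL hp (fun t : X => phase ℕ+ ω₀ t)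
      (fun n => (continuous_phase_apply ω₀ n).comp continuous_subtype_val) 1
      fun t => norm_phase_le ω₀ t
  refine ⟨fun z => compLeftContinuous₂ X (mulL ℂ ℕ+ p) (NormedSpace.exp (exponent (Ω z)))
    (rotation z), fun z _ t n => ?_, fun z hz => ?_⟩
  · rw [compLeftContinuous₂_apply_apply, mulL_apply_apply, ContinuousMap.exp_apply, infty_exp_apply]
    have hexponent : exponent (Ω z) t n = Complex.I * t.1 * Ω z n := by
      simp [exponent, τ]
    have hrotation : rotation z t n = Complex.exp (Complex.I * ω₀ n * t.1) * z n := rfl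
    rw [hexponent, hrotation, ← Complex.exp_eq_exp_ℂ, ← mul_assoc, ← Complex.exp_add]
    ring_nf
  · exact (compLeftContinuous₂ X (mulL ℂ ℕ+ p)).analyticAt_bilinear _ |>.comp₂
      ((NormedSpace.exp_analytic _).comp ((exponent.analyticAt _).comp (hΩ z hz)))
      (rotation.analyticAt z)

/-- Let `1 ≤ p < ∞`, `U` open in `ℓ_ℂ^{σ,p}`, `(ω_n^∘)` real constants and
`ω^⋆ : U → ℓ_ℂ^∞` analytic.  Then for every `T > 0` the solution map
`S(z) = (t ↦ (e^{i(ω_n^∘ + ω_n^⋆(z)) t} z_n)_n)`, with values in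
`C([−T,T], ℓ_ℂ^{σ,p})` with the supremum norm, is well defined and analytic on `U`. -/
theorem stmt12 (p : ℝ≥0∞) [Fact (1 ≤ p)] (hp : p ≠ ⊤)
    (U : Set (SeqSp p)) (hUopen : IsOpen U)
    (ω₀ : ℕ+ → ℝ)
    (Ω : SeqSp p → SeqSp ⊤)
    (hΩ : AnalyticOnNhd ℂ Ω U)
    (T : ℝ) (hT : 0 < T) :
    ∃ S : SeqSp p → C(Set.Icc (-T) T, SeqSp p),
      (∀ z ∈ U, ∀ t : Set.Icc (-T) T, ∀ n : ℕ+,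
        (S z t).1 n = Complex.exp (Complex.I * ((ω₀ n : ℂ) + (Ω z).1 n) * (t.1 : ℂ)) * z.1 n) ∧
      AnalyticOnNhd ℂ S U :=
  stmt12_general p hp U ω₀ Ω hΩ T
end

section
/- Let A = {i₁ < i₂ < ⋯ < i_n} be a finite nonempty set of positive integers, and for c ∈ ℝ let C_A(c) be the A × A real matrix with diagonal entries C_{ii} = 60c and off-diagonal entries C_{ij} = −80π²·i·j (i ≠ j, i, j ∈ A). Then the set S_A = {c ∈ ℝ : det C_A(c) = 0} has exactly n elements. If n = 1 then S_A = {0}. If n ≥ 2 then, writing S_A = {c^n < ⋯ < c² < 0 < c¹}, one has −(4/3)π² i_ν² < c^ν < −(4/3)π² i_{ν−1}² for every 2 ≤ ν ≤ n; in particular 0 ∉ S_A. -/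
/-!
Put `w_ν = (4/3) π² i_ν²`. The matrix is `60 • (diagonal (c + w) - u vᵀ)` with `u_a v_a = w_a`, so
by the matrix determinant lemma its determinant is `60ⁿ F(c)` for the secular function
`F(c) = ∏ (c + w_a) - ∑ w_a ∏_{b ≠ a} (c + w_b)`, the characteristic polynomial of an `n × n`
matrix and hence monic of degree `n`. At `c = -w_ν` a single term survives,
`F(-w_ν) = -w_ν ∏_{μ ≠ ν} (w_μ - w_ν)`, of sign `(-1)^ν`, while `F(0) = (1 - n) ∏ w_ν < 0` for
`n ≥ 2`. The intermediate value theorem gives a root in each interval `(-w_ν, -w_{ν-1})` and one in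
`(0, ∞)`; as `deg F = n` there are no others.
-/

open Matrix Finset Polynomial

theorem Matrix.det_diagonal_sub_vecMulVec_of_ne_zero {ι K : Type*} [Fintype ι] [DecidableEq ι]
    [Field K] {d : ι → K} (hd : ∀ a, d a ≠ 0) (u v : ι → K) :
    (diagonal d - vecMulVec u v).det = ∏ a, d a - ∑ a, u a * v a * ∏ b ∈ univ.erase a, d b := by
  have hfactor : diagonal d - vecMulVec u v
      = diagonal d * (1 + vecMulVec (fun a => -u a / d a) v) := by
    ext a b
    rw [mul_add, mul_one, mul_vecMulVec, add_apply, vecMulVec_apply, mulVec_diagonal,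
      sub_apply, vecMulVec_apply]
    field_simp [hd a]
    ring
  rw [hfactor, det_mul, det_diagonal, vecMulVec_eq Unit, det_one_add_replicateCol_mul_replicateRow,
    mul_add, mul_one, dotProduct, mul_sum, sub_eq_add_neg, ← sum_neg_distrib]
  refine congrArg _ (sum_congr rfl fun a _ => ?_)
  rw [← mul_prod_erase _ _ (mem_univ a)]
  field_simp [hd a]

theorem Matrix.det_diagonal_sub_vecMulVec {ι : Type*} [Fintype ι] [DecidableEq ι]
    (d u v : ι → ℝ) :
    (diagonal d - vecMulVec u v).det = ∏ a, d a - ∑ a, u a * v a * ∏ b ∈ univ.erase a, d b := by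
  have hdense : Dense (Set.univ.pi fun _ : ι => ({0}ᶜ : Set ℝ)) :=
    dense_pi _ fun _ _ => dense_compl_singleton 0
  refine congrFun (Continuous.ext_on hdense (f := fun d => (diagonal d - vecMulVec u v).det)
    (g := fun d => ∏ a, d a - ∑ a, u a * v a * ∏ b ∈ univ.erase a, d b) ?_ ?_
    fun d' hd' => ?_) d
  · fun_prop
  · fun_prop
  · exact det_diagonal_sub_vecMulVec_of_ne_zero (fun a => hd' a (Set.mem_univ a)) u v

section Secular

variable {ι : Type*} [Fintype ι] [DecidableEq ι]

def secular (w : ι → ℝ) (x : ℝ) : ℝ :=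
  ∏ a, (x + w a) - ∑ a, w a * ∏ b ∈ univ.erase a, (x + w b)

theorem det_diagonal_add_mul_sub_vecMulVec (u v : ι → ℝ) (x : ℝ) :
    (diagonal (fun a => x + u a * v a) - vecMulVec u v).det = secular (u * v) x :=
  det_diagonal_sub_vecMulVec _ u v

theorem det_of_ite_eq_pow_mul_secular {κ : ℝ} (hκ : κ ≠ 0) (β x : ℝ) (j : ι → ℝ) :
    (of fun a b => if a = b then κ * x else β * j a * j b).det
      = κ ^ Fintype.card ι * secular (fun a => -β / κ * j a ^ 2) x := by
  set u : ι → ℝ := fun a => -β / κ * j a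
  have h : (of fun a b => if a = b then κ * x else β * j a * j b)
      = κ • (diagonal (fun a => x + u a * j a) - vecMulVec u j) := by
    ext a b
    by_cases hab : a = b
    · simp [hab, vecMulVec_apply]
    · simp [u, hab, vecMulVec_apply]
      field_simp
  have huj : u * j = fun a => -β / κ * j a ^ 2 := by
    funext a
    simp only [Pi.mul_apply, u]
    ring
  rw [h, det_smul, det_diagonal_add_mul_sub_vecMulVec, huj]

theorem exists_monic_eval_eq_secular (w : ι → ℝ) :
    ∃ p : ℝ[X], p.Monic ∧ p.natDegree = Fintype.card ι ∧ ∀ x, p.eval x = secular w x := by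
  refine ⟨(vecMulVec w (fun _ => 1) - diagonal w).charpoly, charpoly_monic _, by simp,
    fun x => ?_⟩
  have h : scalar ι x - (vecMulVec w (fun _ => 1) - diagonal w)
      = diagonal (fun a => x + w a * 1) - vecMulVec w (fun _ => 1) := by
    ext a b
    by_cases hab : a = b <;> simp [vecMulVec_apply, hab]
  rw [eval_charpoly, h, det_diagonal_add_mul_sub_vecMulVec]
  congr
  ext
  simp

theorem secular_of_unique [Unique ι] (w : ι → ℝ) (x : ℝ) : secular w x = x := by
  simp [secular]

theorem secular_zero (w : ι → ℝ) : secular w 0 = (1 - Fintype.card ι) * ∏ a, w a := by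
  simp only [secular, zero_add, mul_prod_erase _ _ (mem_univ _), sum_const, card_univ,
    nsmul_eq_mul]
  ring

theorem secular_neg_apply (w : ι → ℝ) (a : ι) :
    secular w (-w a) = -(w a * ∏ b ∈ univ.erase a, (w b - w a)) := by
  have hprod : ∏ b, (w b - w a) = 0 := prod_eq_zero (mem_univ a) (sub_self _)
  have hsum : ∑ c, w c * ∏ b ∈ univ.erase c, (w b - w a)
      = w a * ∏ b ∈ univ.erase a, (w b - w a) := by
    refine sum_eq_single a (fun c _ hca => ?_) (by simp)
    rw [prod_eq_zero (mem_erase.2 ⟨Ne.symm hca, mem_univ a⟩) (sub_self _), mul_zero]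
  simp only [secular, neg_add_eq_sub, hprod, hsum, zero_sub]

end Secular

theorem neg_one_pow_mul_prod_erase_sub_pos {n : ℕ} {w : Fin n → ℝ} (hw : StrictMono w)
    (a : Fin n) : 0 < (-1) ^ (a : ℕ) * ∏ b ∈ univ.erase a, (w b - w a) := by
  have hsplit : univ.erase a = Iio a ∪ Ioi a := by
    ext b
    simp only [mem_erase, mem_univ, and_true, mem_union, mem_Iio, mem_Ioi]
    exact ne_iff_lt_or_gt
  rw [hsplit, prod_union (disjoint_left.2 fun b hb hb' => (mem_Iio.1 hb).not_gt (mem_Ioi.1 hb')),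
    ← Fin.card_Iio a, ← prod_const, ← mul_assoc, ← prod_mul_distrib]
  refine mul_pos (prod_pos fun b hb => ?_) (prod_pos fun b hb => ?_)
  · linarith [hw (mem_Iio.1 hb)]
  · linarith [hw (mem_Ioi.1 hb)]

theorem neg_one_pow_mul_secular_neg_apply_pos {n : ℕ} {w : Fin n → ℝ} (hpos : ∀ a, 0 < w a)
    (hw : StrictMono w) (a : Fin n) : 0 < (-1) ^ ((a : ℕ) + 1) * secular w (-w a) := by
  have := mul_pos (hpos a) (neg_one_pow_mul_prod_erase_sub_pos hw a)
  rw [secular_neg_apply, pow_succ]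
  linarith

theorem exists_mem_Ioo_eq_zero_of_mul_neg {f : ℝ → ℝ} {a b : ℝ} (hab : a ≤ b)
    (hf : ContinuousOn f (Set.Icc a b)) (h : f a * f b < 0) : ∃ c ∈ Set.Ioo a b, f c = 0 := by
  rcases mul_neg_iff.1 h with ⟨ha, hb⟩ | ⟨ha, hb⟩
  · exact intermediate_value_Ioo' hab hf ⟨hb, ha⟩
  · exact intermediate_value_Ioo hab hf ⟨ha, hb⟩

theorem Polynomial.Monic.exists_pos_eval_eq_zero {p : ℝ[X]} (hp : p.Monic)
    (hdeg : 0 < p.degree) (h0 : p.eval 0 < 0) : ∃ x, 0 < x ∧ p.eval x = 0 := by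
  obtain ⟨T, hT, hTpos⟩ := ((p.tendsto_atTop_of_leadingCoeff_nonneg hdeg
    (by rw [hp.leadingCoeff]; exact zero_le_one)).eventually_gt_atTop 0 |>.and
    (Filter.eventually_gt_atTop 0)).exists
  obtain ⟨x, hx, hx0⟩ := intermediate_value_Ioo hTpos.le p.continuous.continuousOn ⟨h0, hT⟩
  exact ⟨x, hx.1, hx0⟩

theorem exists_strictAntiOn_zeros_of_alternating {f : ℝ → ℝ} (hf : Continuous f) {n : ℕ}
    {t : ℕ → ℝ} (ht : StrictAntiOn t (Set.Icc 1 n))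
    (hsign : ∀ ν ∈ Set.Icc 1 n, 0 < (-1) ^ ν * f (t ν)) {c : ℝ} (htc : t 1 < c) (hc : f c = 0) :
    ∃ d : ℕ → ℝ, d 1 = c ∧ StrictAntiOn d (Set.Icc 1 n) ∧ (∀ ν ∈ Set.Icc 1 n, f (d ν) = 0) ∧
      ∀ ν, 2 ≤ ν → ν ≤ n → d ν ∈ Set.Ioo (t ν) (t (ν - 1)) := by
  have hbetween (ν : ℕ) : ∃ r, 2 ≤ ν → ν ≤ n → r ∈ Set.Ioo (t ν) (t (ν - 1)) ∧ f r = 0 := by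
    by_cases hν : 2 ≤ ν ∧ ν ≤ n
    · obtain ⟨m, rfl⟩ : ∃ m, ν = m + 2 := ⟨ν - 2, by omega⟩
      have hsign₁ := hsign (m + 1) ⟨by omega, by omega⟩
      have hsign₂ := hsign (m + 2) ⟨by omega, hν.2⟩
      have hsq : ((-1 : ℝ) ^ (m + 1)) ^ 2 = 1 := by rw [← pow_mul, pow_mul', neg_one_sq, one_pow]
      rw [pow_succ _ (m + 1)] at hsign₂
      have hmul : f (t (m + 2)) * f (t (m + 1)) < 0 := by nlinarith [mul_pos hsign₁ hsign₂]
      obtain ⟨r, hr⟩ := exists_mem_Ioo_eq_zero_of_mul_neg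
        (ht ⟨by omega, by omega⟩ ⟨by omega, hν.2⟩ (by omega)).le hf.continuousOn hmul
      exact ⟨r, fun _ _ => hr⟩
    · exact ⟨0, fun h2 hn => absurd ⟨h2, hn⟩ hν⟩
  choose r hr using hbetween
  set d : ℕ → ℝ := fun ν => if ν = 1 then c else r ν
  have hd_of_two_le {ν : ℕ} (hν : 2 ≤ ν) : d ν = r ν := if_neg (by omega)
  have hlower (ν : ℕ) (hν : ν ∈ Set.Icc 1 n) : t ν < d ν := by
    rcases hν.1.eq_or_lt with rfl | h2
    · exact htc
    · exact hd_of_two_le h2 ▸ (hr ν h2 hν.2).1.1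
  refine ⟨d, if_pos rfl, fun ν hν μ hμ hνμ => ?_, fun ν hν => ?_,
    fun ν h2 hn => hd_of_two_le h2 ▸ (hr ν h2 hn).1⟩
  · obtain ⟨hν1, -⟩ := hν
    obtain ⟨-, hμn⟩ := hμ
    calc d μ = r μ := hd_of_two_le (by omega)
      _ < t (μ - 1) := (hr μ (by omega) hμn).1.2
      _ ≤ t ν := ht.antitoneOn ⟨hν1, by omega⟩ ⟨by omega, by omega⟩ (by omega)
      _ < d ν := hlower ν ⟨hν1, by omega⟩
  · rcases hν.1.eq_or_lt with rfl | h2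
    · exact hc
    · exact hd_of_two_le h2 ▸ (hr ν h2 hν.2).2

theorem Polynomial.setOf_eval_eq_zero_eq_image {R ι : Type*} [CommRing R] [IsDomain R]
    {p : R[X]} (hp : p ≠ 0) {s : Finset ι} {d : ι → R} (hd : Set.InjOn d s)
    (hdeg : p.natDegree ≤ #s) (hroot : ∀ ν ∈ s, p.eval (d ν) = 0) :
    {x | p.eval x = 0} = d '' s := by
  classical
  have hsub : s.image d ⊆ p.roots.toFinset := fun x hx => by
    obtain ⟨ν, hν, rfl⟩ := mem_image.1 hx
    exact Multiset.mem_toFinset.2 ((mem_roots hp).2 (hroot ν hν))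
  have heq := eq_of_subset_of_card_le hsub <| calc
    #p.roots.toFinset ≤ Multiset.card p.roots := Multiset.toFinset_card_le _
    _ ≤ p.natDegree := card_roots' p
    _ ≤ #s := hdeg
    _ = #(s.image d) := (card_image_of_injOn hd).symm
  ext x
  rw [Set.mem_ofPred_eq, ← coe_image, heq, mem_coe, Multiset.mem_toFinset, mem_roots hp, IsRoot]

theorem exists_strictAntiOn_secular_roots {n : ℕ} (hn : 2 ≤ n) {w : ℕ → ℝ}
    (hpos : ∀ ν ∈ Set.Icc 1 n, 0 < w ν) (hw : StrictMonoOn w (Set.Icc 1 n)) :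
    ∃ d : ℕ → ℝ, 0 < d 1 ∧ StrictAntiOn d (Set.Icc 1 n) ∧
      {x | secular (fun a : Fin n => w (a + 1)) x = 0} = d '' Set.Icc 1 n ∧
      ∀ ν, 2 ≤ ν → ν ≤ n → d ν ∈ Set.Ioo (-w ν) (-w (ν - 1)) := by
  have hpos' (a : Fin n) : 0 < w (a + 1) := hpos _ ⟨by omega, a.2⟩
  have hw' : StrictMono fun a : Fin n => w (a + 1) := fun a b hab =>
    hw ⟨by omega, a.2⟩ ⟨by omega, b.2⟩ (by simpa using hab)
  obtain ⟨p, hp, hdeg, heval⟩ := exists_monic_eval_eq_secular fun a : Fin n => w (a + 1)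
  rw [Fintype.card_fin] at hdeg
  have h0 : p.eval 0 < 0 := by
    rw [heval, secular_zero, Fintype.card_fin]
    have hn' : (2 : ℝ) ≤ n := by exact_mod_cast hn
    exact mul_neg_of_neg_of_pos (by linarith) (prod_pos fun a _ => hpos' a)
  obtain ⟨c, hc, hc0⟩ := hp.exists_pos_eval_eq_zero
    (natDegree_pos_iff_degree_pos.1 (by omega)) h0
  have hsign (ν : ℕ) (hν : ν ∈ Set.Icc 1 n) : 0 < (-1) ^ ν * p.eval (-w ν) := by
    obtain ⟨m, rfl⟩ : ∃ m, ν = m + 1 := ⟨ν - 1, by have := hν.1; omega⟩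
    simpa [heval] using neg_one_pow_mul_secular_neg_apply_pos hpos' hw' ⟨m, hν.2⟩
  obtain ⟨d, rfl, hanti, hroot, hbetween⟩ := exists_strictAntiOn_zeros_of_alternating
    p.continuous (fun ν hν μ hμ h => neg_lt_neg (hw hν hμ h)) hsign
    ((neg_neg_of_pos (hpos 1 ⟨le_rfl, by omega⟩)).trans hc) hc0
  refine ⟨_, hc, hanti, ?_, hbetween⟩
  simp_rw [← heval]
  rw [← coe_Icc, setOf_eval_eq_zero_eq_image (s := Finset.Icc 1 n) hp.ne_zero
    (by simpa using hanti.injOn) (by simp [hdeg]) (by simpa using hroot)]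

/-- Let `A = {i₁ < ⋯ < i_n}` be a finite nonempty set of positive integers, given by its
increasing enumeration `i 1 < i 2 < ⋯ < i n`, and for `c ∈ ℝ` let `C_A(c)` be the matrix
with diagonal entries `60c` and off-diagonal entries `−80π² i_a i_b`.  Then
`S_A = {c : det C_A(c) = 0}` consists of exactly `n` values, enumerated by a strictly
decreasing function `d` on `{1, …, n}` (so `c^ν = d ν`, `c¹ = d 1` the largest).  If
`n = 1` then `S_A = {0}`; if `n ≥ 2` then `d 1 > 0`, `0 ∉ S_A`, and
`−(4/3)π² i_ν² < c^ν < −(4/3)π² i_{ν−1}²` for all `2 ≤ ν ≤ n`. -/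
theorem stmt14 (n : ℕ) (hn : 1 ≤ n) (i : ℕ → ℕ)
    (hpos : ∀ ν : ℕ, 1 ≤ ν → ν ≤ n → 0 < i ν)
    (hmono : ∀ ν μ : ℕ, 1 ≤ ν → ν < μ → μ ≤ n → i ν < i μ) :
    ∃ d : ℕ → ℝ,
      (∀ ν μ : ℕ, 1 ≤ ν → ν < μ → μ ≤ n → d μ < d ν) ∧
      {c : ℝ | (Matrix.of fun a b : Fin n =>
          if a = b then 60 * c
          else -80 * Real.pi ^ 2 * (i (a.1 + 1) : ℝ) * (i (b.1 + 1) : ℝ)).det = 0}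
        = d '' Set.Icc 1 n ∧
      (n = 1 → d 1 = 0) ∧
      (2 ≤ n →
        0 < d 1 ∧ (0 : ℝ) ∉ d '' Set.Icc 1 n ∧
        ∀ ν : ℕ, 2 ≤ ν → ν ≤ n →
          -(4 / 3) * Real.pi ^ 2 * (i ν : ℝ) ^ 2 < d ν ∧
          d ν < -(4 / 3) * Real.pi ^ 2 * (i (ν - 1) : ℝ) ^ 2) := by
  set w : ℕ → ℝ := fun ν => 4 / 3 * Real.pi ^ 2 * (i ν : ℝ) ^ 2
  have hdet (c : ℝ) : (Matrix.of fun a b : Fin n =>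
      if a = b then 60 * c
      else -80 * Real.pi ^ 2 * (i (a.1 + 1) : ℝ) * (i (b.1 + 1) : ℝ)).det
      = 60 ^ n * secular (fun a : Fin n => w (a + 1)) c := by
    rw [det_of_ite_eq_pow_mul_secular (by norm_num), Fintype.card_fin]
    congr
    funext a
    simp only [w]
    ring
  have hwpos (ν : ℕ) (hν : ν ∈ Set.Icc 1 n) : 0 < w ν := by
    have : (0 : ℝ) < i ν := by exact_mod_cast hpos ν hν.1 hν.2
    positivity
  have hwmono : StrictMonoOn w (Set.Icc 1 n) := fun ν hν μ hμ h => by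
    have : (i ν : ℝ) < i μ := by exact_mod_cast hmono ν μ hν.1 h hμ.2
    have : (0 : ℝ) < i ν := by exact_mod_cast hpos ν hν.1 hν.2
    simp only [w]
    gcongr
  simp only [hdet, mul_eq_zero, pow_eq_zero_iff', OfNat.ofNat_ne_zero, false_and, false_or]
  rcases hn.eq_or_lt with rfl | hn2
  · refine ⟨fun _ => 0, by omega, ?_, fun _ => rfl, by omega⟩
    ext c
    simp [secular_of_unique]
  · obtain ⟨d, hd1, hanti, hroots, hbetween⟩ := exists_strictAntiOn_secular_roots hn2 hwpos hwmono
    refine ⟨d, fun ν μ hν hνμ hμ => hanti ⟨hν, by omega⟩ ⟨by omega, hμ⟩ hνμ, hroots, by omega,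
      fun _ => ⟨hd1, ?_, fun ν h2 hn => by simpa [w, neg_mul] using hbetween ν h2 hn⟩⟩
    have hn' : (2 : ℝ) ≤ n := by exact_mod_cast hn2
    rw [← hroots, Set.mem_ofPred_eq, secular_zero, Fintype.card_fin]
    exact mul_ne_zero (by linarith) (prod_ne_zero_iff.2 fun a _ => (hwpos _ ⟨by omega, a.2⟩).ne')
end

section
/- Let A be a finite nonempty set of positive integers and Z = ℕ_{≥1} ∖ A. For c ∈ ℝ and j ≥ 1 set λ_j(c) = (2jπ)⁵ + 10c(2jπ)³ + 30c²(2jπ). Let k : ℕ_{≥1} → ℤ be finitely supported with 1 ≤ ∑_{j ∈ Z} |k_j| ≤ 2. Then: (a) there exists at most one c ∈ ℝ such that both ∑_{j≥1} k_j λ_j(c) = 0 and, for every i ∈ A, 60c·k_i − 80π²·i·∑_{j≥1, j≠i} j·k_j = 0; (b) any such c is a rational multiple of π². Moreover, (c) for every compact set F ⊆ ℝ such that det C_A(c) ≠ 0 for all c ∈ F — where C_A(c) is the A × A matrix with diagonal entries 60c and off-diagonal entries −80π²·i·j — the set of c ∈ F for which there exists a finitely supported k : ℕ_{≥1} → ℤ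 with 1 ≤ ∑_{j ∈ Z}|k_j| ≤ 2 satisfying both equalities above is finite. -/
noncomputable section

set_option maxHeartbeats 1000000

open Finset Matrix

/-- The KdV2 frequencies `λ_j(c) = (2jπ)⁵ + 10c(2jπ)³ + 30c²(2jπ)`. -/
def lamKdV2 (c : ℝ) (j : ℕ) : ℝ :=
  (2 * j * Real.pi) ^ 5 + 10 * c * (2 * j * Real.pi) ^ 3 + 30 * c ^ 2 * (2 * j * Real.pi)

/-- The resonance conditions for `k`: `∑_j k_j λ_j(c) = 0` and, for every `i ∈ A`,
`60c·k_i − 80π²·i·∑_{j ≠ i} j k_j = 0`. -/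
def FreqCond (A : Finset ℕ) (c : ℝ) (k : ℕ →₀ ℤ) : Prop :=
  (∑ j ∈ k.support, (k j : ℝ) * lamKdV2 c j) = 0 ∧
  ∀ i ∈ A, 60 * c * (k i : ℝ)
      - 80 * Real.pi ^ 2 * (i : ℝ) * (∑ j ∈ k.support.erase i, (j : ℝ) * (k j : ℝ)) = 0

/-- The `A × A` matrix with diagonal entries `60c` and off-diagonal entries `−80π² i j`. -/
def CAmat (A : Finset ℕ) (c : ℝ) : Matrix A A ℝ :=
  Matrix.of fun i j =>
    if i = j then 60 * c else -80 * Real.pi ^ 2 * ((i : ℕ) : ℝ) * ((j : ℕ) : ℝ)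

/-- Split a support sum into the `A` part and the non-`A` part. -/
lemma sum_split (A : Finset ℕ) (k : ℕ →₀ ℤ) (f : ℕ → ℝ) :
    ∑ j ∈ k.support, f j * (k j : ℝ)
      = (∑ i ∈ A, f i * (k i : ℝ))
        + ∑ j ∈ k.support.filter (fun j => j ∉ A), f j * (k j : ℝ) := by
  rw [← Finset.sum_filter_add_sum_filter_not k.support (fun j => j ∈ A)]
  congr 1
  apply Finset.sum_subset
  · intro x hx; exact (Finset.mem_filter.mp hx).2
  · intro x hxA hxn
    have : x ∉ k.support := fun hs => hxn (Finset.mem_filter.mpr ⟨hs, hxA⟩)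
    simp [Finsupp.notMem_support_iff.mp this]

lemma sum_abs_le_two (T : Finset ℕ) (k : ℕ → ℤ)
    (h2 : (∑ j ∈ T, (k j).natAbs) ≤ 2) :
    ∑ j ∈ T, |(k j : ℝ)| ≤ 2 := by
  have : ∑ j ∈ T, |(k j : ℝ)| = ((∑ j ∈ T, (k j).natAbs : ℕ) : ℝ) := by
    rw [Nat.cast_sum]
    exact Finset.sum_congr rfl fun j _ => by rw [Nat.cast_natAbs, Int.cast_abs]
  rw [this]
  exact_mod_cast h2

lemma sum_upper (T : Finset ℕ) (hT : T.Nonempty) (k : ℕ → ℤ)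
    (h2 : (∑ j ∈ T, (k j).natAbs) ≤ 2) (m : ℕ) :
    |∑ j ∈ T, (j : ℝ) ^ m * (k j : ℝ)| ≤ (T.max' hT : ℝ) ^ m * 2 := by
  set N := T.max' hT with hN
  have hNnn : (0:ℝ) ≤ (N:ℝ)^m := by positivity
  calc |∑ j ∈ T, (j : ℝ) ^ m * (k j : ℝ)| ≤ ∑ j ∈ T, |(j : ℝ) ^ m * (k j : ℝ)| :=
        Finset.abs_sum_le_sum_abs _ _
    _ ≤ ∑ j ∈ T, (N : ℝ) ^ m * |(k j : ℝ)| := by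
        apply Finset.sum_le_sum
        intro j hj
        rw [abs_mul]
        apply mul_le_mul_of_nonneg_right _ (abs_nonneg _)
        rw [abs_of_nonneg (by positivity)]
        exact pow_le_pow_left₀ (by positivity) (by exact_mod_cast T.le_max' j hj) m
    _ = (N : ℝ) ^ m * ∑ j ∈ T, |(k j : ℝ)| := by rw [Finset.mul_sum]
    _ ≤ (N : ℝ) ^ m * 2 :=
        mul_le_mul_of_nonneg_left (sum_abs_le_two T k h2) hNnn

lemma sum_lower (T : Finset ℕ) (hT : T.Nonempty) (k : ℕ → ℤ)
    (hpos : ∀ j ∈ T, 1 ≤ j) (hne : ∀ j ∈ T, k j ≠ 0)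
    (h2 : (∑ j ∈ T, (k j).natAbs) ≤ 2) (m : ℕ) :
    (T.max' hT : ℝ) ^ m - ((T.max' hT : ℝ) - 1) ^ m
      ≤ |∑ j ∈ T, (j : ℝ) ^ m * (k j : ℝ)| := by
  set N := T.max' hT with hN
  have hNm : N ∈ T := T.max'_mem hT
  have hN1 : 1 ≤ N := hpos N hNm
  have hN1R : (1:ℝ) ≤ (N:ℝ) := by exact_mod_cast hN1
  have hkN : 1 ≤ (k N).natAbs := Int.natAbs_pos.mpr (hne N hNm)
  have hrest : (∑ j ∈ T.erase N, (k j).natAbs) ≤ 1 := by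
    have hsum : (k N).natAbs + ∑ j ∈ T.erase N, (k j).natAbs
        = ∑ j ∈ T, (k j).natAbs := Finset.add_sum_erase T (fun j => (k j).natAbs) hNm
    omega
  have hrestR : ∑ j ∈ T.erase N, |(k j : ℝ)| ≤ 1 := by
    have : ∑ j ∈ T.erase N, |(k j : ℝ)|
        = ((∑ j ∈ T.erase N, (k j).natAbs : ℕ) : ℝ) := by
      rw [Nat.cast_sum]
      exact Finset.sum_congr rfl fun j _ => by rw [Nat.cast_natAbs, Int.cast_abs]
    rw [this]; exact_mod_cast hrest
  have hsplit : ∑ j ∈ T, (j : ℝ) ^ m * (k j : ℝ)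
      = (N : ℝ) ^ m * (k N : ℝ) + ∑ j ∈ T.erase N, (j : ℝ) ^ m * (k j : ℝ) :=
    (Finset.add_sum_erase T _ hNm).symm
  have htail : |∑ j ∈ T.erase N, (j : ℝ) ^ m * (k j : ℝ)| ≤ ((N:ℝ) - 1) ^ m := by
    calc |∑ j ∈ T.erase N, (j : ℝ) ^ m * (k j : ℝ)|
        ≤ ∑ j ∈ T.erase N, |(j : ℝ) ^ m * (k j : ℝ)| := Finset.abs_sum_le_sum_abs _ _
      _ ≤ ∑ j ∈ T.erase N, ((N:ℝ) - 1) ^ m * |(k j : ℝ)| := by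
          apply Finset.sum_le_sum
          intro j hj
          rw [abs_mul]
          apply mul_le_mul_of_nonneg_right _ (abs_nonneg _)
          rw [abs_of_nonneg (pow_nonneg (by linarith) m)]
          have hjN : j ≤ N - 1 := by
            have h1 := T.le_max' j (Finset.mem_of_mem_erase hj)
            have h2 := Finset.ne_of_mem_erase hj
            omega
          have : (j:ℝ) ≤ (N:ℝ) - 1 := by
            have : ((j:ℕ):ℝ) ≤ ((N-1 : ℕ):ℝ) := by exact_mod_cast hjN
            rwa [Nat.cast_sub hN1, Nat.cast_one] at this
          exact pow_le_pow_left₀ (by positivity) this m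
      _ = ((N:ℝ) - 1) ^ m * ∑ j ∈ T.erase N, |(k j : ℝ)| := by rw [Finset.mul_sum]
      _ ≤ ((N:ℝ) - 1) ^ m * 1 :=
          mul_le_mul_of_nonneg_left hrestR (pow_nonneg (by linarith) m)
      _ = ((N:ℝ) - 1) ^ m := mul_one _
  have hhead : (N:ℝ) ^ m ≤ |(N : ℝ) ^ m * (k N : ℝ)| := by
    rw [abs_mul, abs_of_nonneg (by positivity : (0:ℝ) ≤ (N:ℝ)^m)]
    have : (1:ℝ) ≤ |(k N : ℝ)| := by
      have : (1:ℤ) ≤ |k N| := Int.one_le_abs (hne N hNm)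
      calc (1:ℝ) ≤ ((|k N| : ℤ) : ℝ) := by exact_mod_cast this
        _ = |(k N : ℝ)| := by push_cast; rfl
    nlinarith [pow_nonneg (le_trans zero_le_one hN1R) m]
  calc (N:ℝ) ^ m - ((N:ℝ) - 1) ^ m
      ≤ |(N : ℝ) ^ m * (k N : ℝ)| - |∑ j ∈ T.erase N, (j : ℝ) ^ m * (k j : ℝ)| := by
        linarith
    _ ≤ |∑ j ∈ T, (j : ℝ) ^ m * (k j : ℝ)| := by
        rw [hsplit]
        have := abs_add_le ((N : ℝ) ^ m * (k N : ℝ) + ∑ j ∈ T.erase N, (j : ℝ) ^ m * (k j : ℝ))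
          (-(∑ j ∈ T.erase N, (j : ℝ) ^ m * (k j : ℝ)))
        simp only [add_neg_cancel_right, abs_neg] at this
        linarith

lemma pow5_gap {x : ℝ} (hx : 1 ≤ x) : x ^ 4 ≤ x ^ 5 - (x - 1) ^ 5 := by
  nlinarith [sq_nonneg (x-1), sq_nonneg x, mul_nonneg (mul_nonneg (by linarith : (0:ℝ) ≤ x - 1) (by linarith : (0:ℝ) ≤ x - 1)) (by linarith : (0:ℝ) ≤ x - 1), sq_nonneg ((x-1)^2)]

/-- Row form of the second resonance condition. -/
lemma freq_row {A : Finset ℕ} {c : ℝ} {k : ℕ →₀ ℤ} (h : FreqCond A c k)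
    {i : ℕ} (hi : i ∈ A) :
    (60 * c + 80 * Real.pi ^ 2 * (i : ℝ) ^ 2) * (k i : ℝ)
      = 80 * Real.pi ^ 2 * (i : ℝ) * (∑ j ∈ k.support, (j : ℝ) * (k j : ℝ)) := by
  have h2 := h.2 i hi
  have hsplit : ∑ j ∈ k.support.erase i, (j : ℝ) * (k j : ℝ)
      = (∑ j ∈ k.support, (j : ℝ) * (k j : ℝ)) - (i : ℝ) * (k i : ℝ) := by
    by_cases hm : i ∈ k.support
    · rw [← Finset.add_sum_erase _ (fun (j : ℕ) => (j : ℝ) * (k j : ℝ)) hm]; ring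
    · rw [Finset.erase_eq_of_notMem hm, Finsupp.notMem_support_iff.mp hm]
      push_cast; ring
  rw [hsplit] at h2
  linear_combination h2

/-- Expanded form of the first resonance condition. -/
lemma freq_E1 {A : Finset ℕ} {c : ℝ} {k : ℕ →₀ ℤ} (h : FreqCond A c k) :
    32 * Real.pi ^ 5 * (∑ j ∈ k.support, (j : ℝ) ^ 5 * (k j : ℝ))
      + 80 * Real.pi ^ 3 * c * (∑ j ∈ k.support, (j : ℝ) ^ 3 * (k j : ℝ))
      + 60 * Real.pi * c ^ 2 * (∑ j ∈ k.support, (j : ℝ) * (k j : ℝ)) = 0 := by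
  have h1 := h.1
  rw [Finset.mul_sum, Finset.mul_sum, Finset.mul_sum, ← Finset.sum_add_distrib,
    ← Finset.sum_add_distrib]
  rw [← h1]
  apply Finset.sum_congr rfl
  intro j _
  unfold lamKdV2
  ring

/-- the scaled explicit formula for `c` -/
lemma c_scaled {A : Finset ℕ} {c : ℝ} {k : ℕ →₀ ℤ} (h : FreqCond A c k)
    {i : ℕ} (hi : i ∈ A) :
    c * (60 * (k i : ℝ)) = Real.pi ^ 2
      * (80 * (i : ℝ) * ((∑ j ∈ k.support, (j : ℝ) * (k j : ℝ)) - (i : ℝ) * (k i : ℝ))) := by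
  linear_combination freq_row h hi

/-- basic facts about the `Z`-part of the support -/
lemma Tfacts {A : Finset ℕ} {k : ℕ →₀ ℤ} (h0 : k 0 = 0)
    (h1 : 1 ≤ ∑ j ∈ k.support.filter (fun j => j ∉ A), (k j).natAbs) :
    (k.support.filter (fun j => j ∉ A)).Nonempty ∧
    (∀ j ∈ k.support.filter (fun j => j ∉ A), 1 ≤ j) ∧
    (∀ j ∈ k.support.filter (fun j => j ∉ A), k j ≠ 0) := by
  refine ⟨?_, ?_, ?_⟩
  · by_contra h
    rw [Finset.not_nonempty_iff_eq_empty] at h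
    rw [h] at h1
    simp at h1
  · intro j hj
    have hs := (Finset.mem_filter.mp hj).1
    have := Finsupp.mem_support_iff.mp hs
    rcases Nat.eq_zero_or_pos j with rfl | h
    · exact absurd h0 this
    · exact h
  · intro j hj
    exact Finsupp.mem_support_iff.mp (Finset.mem_filter.mp hj).1

/-- In presence of the constraints, `FreqCond` forces a nonzero entry on `A`. -/
lemma exists_A_nonzero {A : Finset ℕ} (hA : A.Nonempty) (hpos : ∀ i ∈ A, 0 < i)
    {k : ℕ →₀ ℤ} (h0 : k 0 = 0)
    (h1 : 1 ≤ ∑ j ∈ k.support.filter (fun j => j ∉ A), (k j).natAbs)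
    (h2 : (∑ j ∈ k.support.filter (fun j => j ∉ A), (k j).natAbs) ≤ 2)
    {c : ℝ} (hc : FreqCond A c k) : ∃ i ∈ A, k i ≠ 0 := by
  by_contra hno
  push_neg at hno
  obtain ⟨i, hi⟩ := hA
  have hrow := freq_row hc hi
  rw [hno i hi] at hrow
  have hipos : (0:ℝ) < (i:ℝ) := by exact_mod_cast hpos i hi
  have h80 : (80 * Real.pi ^ 2 * (i:ℝ)) ≠ 0 := by positivity
  have hP1 : (∑ j ∈ k.support, (j : ℝ) * (k j : ℝ)) = 0 := by
    have hz : 80 * Real.pi ^ 2 * (i:ℝ) * (∑ j ∈ k.support, (j : ℝ) * (k j : ℝ)) = 0 := by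
      linear_combination -hrow
    exact (mul_eq_zero.mp hz).resolve_left h80
  have hsplit := sum_split A k (fun j => (j : ℝ))
  have hzeroA : (∑ i ∈ A, (i:ℝ) * (k i : ℝ)) = 0 :=
    Finset.sum_eq_zero fun i hi => by rw [hno i hi]; push_cast; ring
  obtain ⟨hTne, hT1, hTk⟩ := Tfacts (A := A) h0 h1
  have hlow := sum_lower _ hTne k hT1 hTk h2 1
  simp only [pow_one] at hlow
  rw [show (∑ j ∈ k.support.filter (fun j => j ∉ A), (j : ℝ) * (k j : ℝ)) = 0 by
    linarith [hsplit, hP1, hzeroA]] at hlow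
  simp at hlow
  linarith

lemma uniqC {A : Finset ℕ} (hA : A.Nonempty) (hpos : ∀ i ∈ A, 0 < i)
    {k : ℕ →₀ ℤ} (h0 : k 0 = 0)
    (h1 : 1 ≤ ∑ j ∈ k.support.filter (fun j => j ∉ A), (k j).natAbs)
    (h2 : (∑ j ∈ k.support.filter (fun j => j ∉ A), (k j).natAbs) ≤ 2)
    {c₁ c₂ : ℝ} (hc₁ : FreqCond A c₁ k) (hc₂ : FreqCond A c₂ k) : c₁ = c₂ := by
  obtain ⟨i, hi, hki⟩ := exists_A_nonzero hA hpos h0 h1 h2 hc₁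
  have hkiR : (60 * (k i : ℝ)) ≠ 0 := by
    simp only [ne_eq, mul_eq_zero]
    push_neg
    exact ⟨by norm_num, Int.cast_ne_zero.mpr hki⟩
  apply mul_right_cancel₀ hkiR
  rw [c_scaled hc₁ hi, c_scaled hc₂ hi]

lemma ratC {A : Finset ℕ} (hA : A.Nonempty) (hpos : ∀ i ∈ A, 0 < i)
    {k : ℕ →₀ ℤ} (h0 : k 0 = 0)
    (h1 : 1 ≤ ∑ j ∈ k.support.filter (fun j => j ∉ A), (k j).natAbs)
    (h2 : (∑ j ∈ k.support.filter (fun j => j ∉ A), (k j).natAbs) ≤ 2)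
    {c : ℝ} (hc : FreqCond A c k) : ∃ q : ℚ, c = (q : ℝ) * Real.pi ^ 2 := by
  obtain ⟨i, hi, hki⟩ := exists_A_nonzero hA hpos h0 h1 h2 hc
  set Pz : ℤ := ∑ j ∈ k.support, (j : ℤ) * k j with hPz
  have hPzc : ((Pz : ℤ) : ℝ) = ∑ j ∈ k.support, (j : ℝ) * (k j : ℝ) := by
    rw [hPz]; push_cast; rfl
  refine ⟨(80 * (i : ℚ) * ((Pz : ℚ) - (i : ℚ) * ((k i : ℤ) : ℚ))) / (60 * ((k i : ℤ) : ℚ)), ?_⟩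
  have hkiR : ((k i : ℤ) : ℝ) ≠ 0 := Int.cast_ne_zero.mpr hki
  have hcast : (((80 * (i : ℚ) * ((Pz : ℚ) - (i : ℚ) * ((k i : ℤ) : ℚ))) / (60 * ((k i : ℤ) : ℚ)) : ℚ) : ℝ)
      = (80 * (i : ℝ) * (((Pz : ℤ) : ℝ) - (i : ℝ) * ((k i : ℤ) : ℝ))) / (60 * ((k i : ℤ) : ℝ)) := by
    push_cast
    ring
  rw [hcast, hPzc]
  have hs := c_scaled hc hi
  field_simp
  linear_combination hs

lemma finsupp_bounded_finite (R : ℕ) (B : ℤ) :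
    {k : ℕ →₀ ℤ | (∀ j ∈ k.support, j < R) ∧ ∀ j, |k j| ≤ B}.Finite := by
  apply Set.Finite.of_finite_image (f := fun (k : ℕ →₀ ℤ) (j : Fin R) => k j)
  · apply Set.Finite.subset (Set.Finite.pi (fun _ : Fin R => Set.finite_Icc (-B) B))
    rintro f ⟨kk, hk, rfl⟩
    intro j _
    exact Set.mem_Icc.mpr (abs_le.mp (hk.2 j))
  · intro k1 h1 k2 h2 heq
    ext j
    by_cases hj : j < R
    · exact congrFun heq ⟨j, hj⟩
    · have e1 : k1 j = 0 := by
        by_contra h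
        exact hj (h1.1 j (Finsupp.mem_support_iff.mpr h))
      have e2 : k2 j = 0 := by
        by_contra h
        exact hj (h2.1 j (Finsupp.mem_support_iff.mpr h))
      rw [e1, e2]

lemma CAmat_continuous (A : Finset ℕ) : Continuous fun c => CAmat A c := by
  apply continuous_matrix
  intro i j
  simp only [CAmat, Matrix.of_apply]
  split_ifs
  · fun_prop
  · fun_prop

lemma adjugate_continuous (A : Finset ℕ) :
    Continuous fun c => ∑ i : A, ∑ l : A, |((CAmat A c).adjugate i l)| := by
  apply continuous_finset_sum
  intro i _
  apply continuous_finset_sum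
  intro l _
  exact ((CAmat_continuous A).matrix_adjugate.matrix_elem i l).abs


lemma CAmat_row {A : Finset ℕ} {c : ℝ} {k : ℕ →₀ ℤ} (h : FreqCond A c k)
    (i : A) :
    (CAmat A c *ᵥ (fun l : A => ((k l : ℤ) : ℝ))) i
      = 80 * Real.pi ^ 2 * ((i : ℕ) : ℝ)
          * (∑ j ∈ k.support.filter (fun j => j ∉ A), (j : ℝ) * (k j : ℝ)) := by
  have hiA : (i : ℕ) ∈ A := i.2
  have hSA : ∑ n ∈ A.erase (i : ℕ), (n : ℝ) * (k n : ℝ)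
      = (∑ n ∈ A, (n : ℝ) * (k n : ℝ)) - ((i : ℕ) : ℝ) * (k i : ℝ) := by
    rw [← Finset.add_sum_erase A (fun n : ℕ => (n : ℝ) * (k n : ℝ)) hiA]; ring
  have hsum : (CAmat A c *ᵥ (fun l : A => ((k l : ℤ) : ℝ))) i
      = ∑ n ∈ A, (if (i : ℕ) = n then 60 * c
          else -80 * Real.pi ^ 2 * ((i : ℕ) : ℝ) * (n : ℝ)) * (k n : ℝ) := by
    simp only [Matrix.mulVec, dotProduct, univ_eq_attach]
    rw [← Finset.sum_attach A (fun n => (if (i : ℕ) = n then 60 * c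
          else -80 * Real.pi ^ 2 * ((i : ℕ) : ℝ) * (n : ℝ)) * (k n : ℝ))]
    apply Finset.sum_congr rfl
    intro l _
    simp only [CAmat, Matrix.of_apply]
    congr 1
    by_cases hil : i = l
    · rw [if_pos hil, if_pos (congrArg Subtype.val hil)]
    · rw [if_neg hil, if_neg (fun hh => hil (Subtype.ext hh))]
  rw [hsum, ← Finset.add_sum_erase A _ hiA, if_pos rfl]
  have herase : ∑ n ∈ A.erase (i : ℕ), (if (i : ℕ) = n then 60 * c
        else -80 * Real.pi ^ 2 * ((i : ℕ) : ℝ) * (n : ℝ)) * (k n : ℝ)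
      = -80 * Real.pi ^ 2 * ((i : ℕ) : ℝ) * ∑ n ∈ A.erase (i : ℕ), (n : ℝ) * (k n : ℝ) := by
    rw [Finset.mul_sum]
    apply Finset.sum_congr rfl
    intro n hn
    rw [if_neg (fun hh => (Finset.ne_of_mem_erase hn) hh.symm)]
    ring
  rw [herase, hSA]
  have hrow := freq_row h hiA
  have hsplit := sum_split A k (fun j => (j : ℝ))
  linear_combination hrow + 80 * Real.pi ^ 2 * ((i : ℕ) : ℝ) * hsplit

lemma det_mul_k {A : Finset ℕ} {c : ℝ} {k : ℕ →₀ ℤ} (h : FreqCond A c k) (i : A) :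
    (CAmat A c).det * ((k i : ℤ) : ℝ)
      = ((CAmat A c).adjugate *ᵥ (fun l : A => 80 * Real.pi ^ 2 * ((l : ℕ) : ℝ)
          * (∑ j ∈ k.support.filter (fun j => j ∉ A), (j : ℝ) * (k j : ℝ)))) i := by
  have h1 : CAmat A c *ᵥ (fun l : A => ((k l : ℤ) : ℝ))
      = fun l : A => 80 * Real.pi ^ 2 * ((l : ℕ) : ℝ)
          * (∑ j ∈ k.support.filter (fun j => j ∉ A), (j : ℝ) * (k j : ℝ)) :=
    funext fun l => CAmat_row h l
  have h2 : (CAmat A c).adjugate *ᵥ (CAmat A c *ᵥ (fun l : A => ((k l : ℤ) : ℝ)))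
      = (CAmat A c).det • (fun l : A => ((k l : ℤ) : ℝ)) := by
    rw [Matrix.mulVec_mulVec, Matrix.adjugate_mul, Matrix.smul_mulVec,
      Matrix.one_mulVec]
  rw [h1] at h2
  have := congrFun h2.symm i
  simpa using this

lemma kA_bound {A : Finset ℕ} {c : ℝ} {k : ℕ →₀ ℤ} (hFC : FreqCond A c k)
    {δ Kad : ℝ} (hδ : 0 < δ) (hKnn : 0 ≤ Kad)
    (hcδ : δ ≤ |(CAmat A c).det|)
    (hcK : ∀ i l : A, |((CAmat A c).adjugate i l)| ≤ Kad)
    {W : ℝ} (hWnn : 0 ≤ W)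
    (hW : |∑ j ∈ k.support.filter (fun j => j ∉ A), (j : ℝ) * (k j : ℝ)| ≤ W)
    {aA : ℕ} (haAb : ∀ i ∈ A, i ≤ aA) :
    ∀ i ∈ A, |(k i : ℝ)| ≤ (A.card : ℝ) * (Kad * (80 * Real.pi ^ 2 * (aA : ℝ) * W)) / δ := by
  have hπ := Real.pi_pos
  intro i hi
  have hdk := det_mul_k hFC ⟨i, hi⟩
  have habs : |(CAmat A c).det| * |(k i : ℝ)|
      ≤ (A.card : ℝ) * (Kad * (80 * Real.pi ^ 2 * (aA : ℝ) * W)) := by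
    rw [← abs_mul, hdk]
    have hterm : ∀ l : A,
        |(CAmat A c).adjugate ⟨i, hi⟩ l * (80 * Real.pi ^ 2 * ((l : ℕ) : ℝ)
          * (∑ j ∈ k.support.filter (fun j => j ∉ A), (j : ℝ) * (k j : ℝ)))|
          ≤ Kad * (80 * Real.pi ^ 2 * (aA : ℝ) * W) := by
      intro l
      rw [abs_mul]
      apply mul_le_mul (hcK _ _) _ (abs_nonneg _) hKnn
      rw [abs_mul]
      have h1' : |80 * Real.pi ^ 2 * ((l : ℕ) : ℝ)| ≤ 80 * Real.pi ^ 2 * (aA : ℝ) := by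
        rw [abs_of_nonneg (by positivity)]
        have : ((l : ℕ) : ℝ) ≤ (aA : ℝ) := by exact_mod_cast haAb _ l.2
        nlinarith
      exact mul_le_mul h1' hW (abs_nonneg _) (by positivity)
    calc |∑ l : A, (CAmat A c).adjugate ⟨i, hi⟩ l * (80 * Real.pi ^ 2 * ((l : ℕ) : ℝ)
          * (∑ j ∈ k.support.filter (fun j => j ∉ A), (j : ℝ) * (k j : ℝ)))|
        ≤ ∑ l : A, |(CAmat A c).adjugate ⟨i, hi⟩ l * (80 * Real.pi ^ 2 * ((l : ℕ) : ℝ)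
          * (∑ j ∈ k.support.filter (fun j => j ∉ A), (j : ℝ) * (k j : ℝ)))| :=
          Finset.abs_sum_le_sum_abs _ _
      _ ≤ ∑ _l : A, Kad * (80 * Real.pi ^ 2 * (aA : ℝ) * W) :=
          Finset.sum_le_sum fun l _ => hterm l
      _ = (A.card : ℝ) * (Kad * (80 * Real.pi ^ 2 * (aA : ℝ) * W)) := by
          rw [Finset.sum_const, nsmul_eq_mul]
          congr 1
          simp [Fintype.card_coe]
  have h3 : δ * |(k i : ℝ)| ≤ (A.card : ℝ) * (Kad * (80 * Real.pi ^ 2 * (aA : ℝ) * W)) :=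
    le_trans (mul_le_mul_of_nonneg_right hcδ (abs_nonneg _)) habs
  rw [le_div_iff₀ hδ]
  linarith [h3]

lemma SA_bound {A : Finset ℕ} {k : ℕ →₀ ℤ} {β : ℝ}
    (hβ : ∀ i ∈ A, |(k i : ℝ)| ≤ β) (hβnn : 0 ≤ β)
    {aA : ℕ} (haAb : ∀ i ∈ A, i ≤ aA) (haAR : (1:ℝ) ≤ (aA : ℝ)) {m : ℕ} (hm : m ≤ 5) :
    |∑ i ∈ A, (i : ℝ) ^ m * (k i : ℝ)| ≤ (A.card : ℝ) * ((aA : ℝ) ^ 5 * β) := by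
  calc |∑ i ∈ A, (i : ℝ) ^ m * (k i : ℝ)|
      ≤ ∑ i ∈ A, |(i : ℝ) ^ m * (k i : ℝ)| := Finset.abs_sum_le_sum_abs _ _
    _ ≤ ∑ _i ∈ A, (aA : ℝ) ^ 5 * β := by
        apply Finset.sum_le_sum
        intro i hi
        rw [abs_mul, abs_of_nonneg (by positivity : (0:ℝ) ≤ (i:ℝ) ^ m)]
        have h5 : ((i : ℕ) : ℝ) ^ m ≤ (aA : ℝ) ^ 5 := by
          calc ((i : ℕ) : ℝ) ^ m ≤ (aA : ℝ) ^ m :=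
                pow_le_pow_left₀ (by positivity) (by exact_mod_cast haAb i hi) m
            _ ≤ (aA : ℝ) ^ 5 := pow_le_pow_right₀ haAR hm
        exact mul_le_mul h5 (hβ i hi) (abs_nonneg _) (by positivity)
    _ = (A.card : ℝ) * ((aA : ℝ) ^ 5 * β) := by rw [Finset.sum_const, nsmul_eq_mul]

lemma key_bound {A : Finset ℕ} (hA : A.Nonempty) (hpos : ∀ i ∈ A, 0 < i)
    {M δ Kad B₁ E G D J : ℝ} (hMnn : 0 ≤ M) (hδ : 0 < δ) (hKnn : 0 ≤ Kad)
    {aA : ℕ} (haA : aA = A.max' hA)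
    (hB₁ : B₁ = (A.card : ℝ) * (Kad * (80 * Real.pi ^ 2 * (aA : ℝ) * 2)) / δ)
    (hE : E = (A.card : ℝ) * ((aA : ℝ) ^ 5 * (B₁ * 1)))
    (hG : G = E + 2)
    (hD2 : D = (32 * Real.pi ^ 5 + 80 * Real.pi ^ 3 * M + 60 * Real.pi * M ^ 2) * G)
    (hJ : J = D / (32 * Real.pi ^ 5))
    {c : ℝ} (hcMb : |c| ≤ M) (hcδ : δ ≤ |(CAmat A c).det|)
    (hcK : ∀ i l : A, |((CAmat A c).adjugate i l)| ≤ Kad)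
    {k : ℕ →₀ ℤ} (h0 : k 0 = 0)
    (h1 : 1 ≤ (∑ j ∈ k.support.filter (fun j => j ∉ A), (k j).natAbs))
    (h2 : (∑ j ∈ k.support.filter (fun j => j ∉ A), (k j).natAbs) ≤ 2)
    (hFC : FreqCond A c k) :
    (∀ j ∈ k.support, (j : ℝ) ≤ max (aA : ℝ) J) ∧
    (∀ j : ℕ, |(k j : ℝ)| ≤ max 2 (B₁ * J)) := by
  have hπ := Real.pi_pos
  have haA1 : 1 ≤ aA := by rw [haA]; exact hpos _ (A.max'_mem hA)
  have haAR : (1:ℝ) ≤ (aA : ℝ) := by exact_mod_cast haA1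
  have haAb : ∀ i ∈ A, i ≤ aA := by rw [haA]; exact fun i hi => A.le_max' i hi
  have hB₁nn : 0 ≤ B₁ := by rw [hB₁]; positivity
  have hEnn : 0 ≤ E := by rw [hE]; positivity
  have hGnn : (0:ℝ) ≤ G := by rw [hG]; linarith
  have hDnn : 0 ≤ D := by rw [hD2]; exact mul_nonneg (by positivity) hGnn
  have hJnn : 0 ≤ J := by rw [hJ]; exact div_nonneg hDnn (by positivity)
  obtain ⟨hTne, hT1, hTk⟩ := Tfacts h0 h1
  set T := k.support.filter (fun j => j ∉ A) with hT
  set N : ℕ := T.max' hTne with hN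
  set NR : ℝ := (N : ℝ) with hNR
  set SZ : ℝ := ∑ j ∈ T, (j : ℝ) * (k j : ℝ) with hSZ
  clear_value T N NR SZ
  have hNmem : N ∈ T := by rw [hN]; exact T.max'_mem hTne
  have hNR1 : (1:ℝ) ≤ NR := by
    rw [hNR]
    exact_mod_cast hT1 N hNmem
  have hNRpos : (0:ℝ) < NR := lt_of_lt_of_le one_pos hNR1
  have hSZb : |SZ| ≤ NR * 2 := by
    have h := sum_upper T hTne k h2 1
    rw [← hN] at h
    simp only [pow_one] at h
    rw [hSZ, hNR]
    exact h
  -- bounds on k over A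
  have hkA : ∀ i ∈ A, |(k i : ℝ)| ≤ B₁ * NR := by
    have h := kA_bound hFC hδ hKnn hcδ hcK (by positivity : (0:ℝ) ≤ NR * 2)
      (by rw [← hT, ← hSZ]; exact hSZb) haAb
    intro i hi
    refine le_trans (h i hi) (le_of_eq ?_)
    rw [hB₁]
    ring
  have hBN : 0 ≤ B₁ * NR := mul_nonneg hB₁nn (le_of_lt hNRpos)
  have hSAm : ∀ m : ℕ, m ≤ 5 → |∑ i ∈ A, (i : ℝ) ^ m * (k i : ℝ)| ≤ E * NR := by
    intro m hm
    refine le_trans (SA_bound hkA hBN haAb haAR hm) (le_of_eq ?_)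
    rw [hE]
    ring
  have hQ3 : |∑ j ∈ T, (j : ℝ) ^ 3 * (k j : ℝ)| ≤ NR ^ 3 * 2 := by
    have h := sum_upper T hTne k h2 3
    rw [← hN] at h
    rw [hNR]
    exact h
  have hQ5low : NR ^ 4 ≤ |∑ j ∈ T, (j : ℝ) ^ 5 * (k j : ℝ)| := by
    have h := sum_lower T hTne k hT1 hTk h2 5
    rw [← hN] at h
    rw [hNR]
    refine le_trans (pow5_gap ?_) h
    rw [hNR] at hNR1
    exact hNR1
  have hE1 := freq_E1 hFC
  have hs5 := sum_split A k (fun j => (j : ℝ) ^ 5)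
  have hs3 := sum_split A k (fun j => (j : ℝ) ^ 3)
  have hs1 := sum_split A k (fun j => (j : ℝ))
  rw [← hT] at hs5 hs3 hs1
  rw [← hSZ] at hs1
  have hE1' : 32 * Real.pi ^ 5 * (∑ j ∈ T, (j : ℝ) ^ 5 * (k j : ℝ))
      = -(32 * Real.pi ^ 5 * (∑ i ∈ A, (i : ℝ) ^ 5 * (k i : ℝ))
          + 80 * Real.pi ^ 3 * c * ((∑ i ∈ A, (i : ℝ) ^ 3 * (k i : ℝ))
              + (∑ j ∈ T, (j : ℝ) ^ 3 * (k j : ℝ)))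
          + 60 * Real.pi * c ^ 2 * ((∑ i ∈ A, (i : ℝ) * (k i : ℝ)) + SZ)) := by
    linear_combination hE1 - 32 * Real.pi ^ 5 * hs5 - 80 * Real.pi ^ 3 * c * hs3
      - 60 * Real.pi * c ^ 2 * hs1
  set S5 : ℝ := ∑ i ∈ A, (i : ℝ) ^ 5 * (k i : ℝ) with hS5
  set S3 : ℝ := ∑ i ∈ A, (i : ℝ) ^ 3 * (k i : ℝ) with hS3
  set S1 : ℝ := ∑ i ∈ A, (i : ℝ) * (k i : ℝ) with hS1
  set Q5 : ℝ := ∑ j ∈ T, (j : ℝ) ^ 5 * (k j : ℝ) with hQ5v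
  set Q3v : ℝ := ∑ j ∈ T, (j : ℝ) ^ 3 * (k j : ℝ) with hQ3vv
  clear_value S5 S3 S1 Q5 Q3v
  clear hE1 hs5 hs3 hs1
  have hNR3 : NR ≤ NR ^ 3 := by
    nlinarith [mul_nonneg (mul_nonneg (by linarith : (0:ℝ) ≤ NR - 1)
      (by linarith : (0:ℝ) ≤ NR)) (by linarith : (0:ℝ) ≤ NR + 1)]
  have hb5 : |S5| ≤ G * NR ^ 3 := by
    have h := hSAm 5 le_rfl
    rw [← hS5] at h
    have hEG : E * NR ≤ G * NR ^ 3 := by nlinarith [hEnn, hNR3, hNR1]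
    linarith
  have hb3 : |S3 + Q3v| ≤ G * NR ^ 3 := by
    have h := hSAm 3 (by norm_num)
    rw [← hS3] at h
    calc |S3 + Q3v| ≤ |S3| + |Q3v| := abs_add_le _ _
      _ ≤ E * NR + NR ^ 3 * 2 := add_le_add h hQ3
      _ ≤ G * NR ^ 3 := by rw [hG]; nlinarith [hEnn, hNR3, hNR1]
  have hb1 : |S1 + SZ| ≤ G * NR ^ 3 := by
    have h := hSAm 1 (by norm_num)
    simp only [pow_one] at h
    rw [← hS1] at h
    calc |S1 + SZ| ≤ |S1| + |SZ| := abs_add_le _ _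
      _ ≤ E * NR + NR * 2 := add_le_add h hSZb
      _ ≤ G * NR ^ 3 := by rw [hG]; nlinarith [hEnn, hNR3, hNR1]
  have hmain : 32 * Real.pi ^ 5 * NR ^ 4 ≤ D * NR ^ 3 := by
    have h1' : 32 * Real.pi ^ 5 * NR ^ 4 ≤ 32 * Real.pi ^ 5 * |Q5| :=
      mul_le_mul_of_nonneg_left hQ5low (by positivity)
    have h2' : |32 * Real.pi ^ 5 * Q5| ≤ |32 * Real.pi ^ 5 * S5|
        + |80 * Real.pi ^ 3 * c * (S3 + Q3v)| + |60 * Real.pi * c ^ 2 * (S1 + SZ)| := by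
      rw [hE1', abs_neg]
      exact abs_add_three _ _ _
    have e0 : |32 * Real.pi ^ 5 * Q5| = 32 * Real.pi ^ 5 * |Q5| := by
      rw [abs_mul, abs_of_pos (by positivity : (0:ℝ) < 32 * Real.pi ^ 5)]
    have e1 : |32 * Real.pi ^ 5 * S5| = 32 * Real.pi ^ 5 * |S5| := by
      rw [abs_mul, abs_of_pos (by positivity : (0:ℝ) < 32 * Real.pi ^ 5)]
    have e2 : |80 * Real.pi ^ 3 * c * (S3 + Q3v)| = 80 * Real.pi ^ 3 * |c| * |S3 + Q3v| := by
      rw [abs_mul, abs_mul, abs_of_pos (by positivity : (0:ℝ) < 80 * Real.pi ^ 3)]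
    have e3 : |60 * Real.pi * c ^ 2 * (S1 + SZ)| = 60 * Real.pi * c ^ 2 * |S1 + SZ| := by
      rw [abs_mul, abs_mul, abs_of_pos (by positivity : (0:ℝ) < 60 * Real.pi),
        abs_of_nonneg (sq_nonneg c)]
    have hc2 : c ^ 2 ≤ M ^ 2 := by nlinarith [abs_nonneg c, neg_abs_le c, le_abs_self c]
    have f1 : 32 * Real.pi ^ 5 * |S5| ≤ 32 * Real.pi ^ 5 * (G * NR ^ 3) :=
      mul_le_mul_of_nonneg_left hb5 (by positivity)
    have f2 : 80 * Real.pi ^ 3 * |c| * |S3 + Q3v| ≤ 80 * Real.pi ^ 3 * M * (G * NR ^ 3) := by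
      have hmm : |c| * |S3 + Q3v| ≤ M * (G * NR ^ 3) :=
        mul_le_mul hcMb hb3 (abs_nonneg _) hMnn
      calc 80 * Real.pi ^ 3 * |c| * |S3 + Q3v| = 80 * Real.pi ^ 3 * (|c| * |S3 + Q3v|) := by
            ring
        _ ≤ 80 * Real.pi ^ 3 * (M * (G * NR ^ 3)) :=
            mul_le_mul_of_nonneg_left hmm (by positivity)
        _ = 80 * Real.pi ^ 3 * M * (G * NR ^ 3) := by ring
    have f3 : 60 * Real.pi * c ^ 2 * |S1 + SZ| ≤ 60 * Real.pi * M ^ 2 * (G * NR ^ 3) := by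
      have hmm : c ^ 2 * |S1 + SZ| ≤ M ^ 2 * (G * NR ^ 3) :=
        mul_le_mul hc2 hb1 (abs_nonneg _) (by positivity)
      calc 60 * Real.pi * c ^ 2 * |S1 + SZ| = 60 * Real.pi * (c ^ 2 * |S1 + SZ|) := by ring
        _ ≤ 60 * Real.pi * (M ^ 2 * (G * NR ^ 3)) :=
            mul_le_mul_of_nonneg_left hmm (by positivity)
        _ = 60 * Real.pi * M ^ 2 * (G * NR ^ 3) := by ring
    have hsum : 32 * Real.pi ^ 5 * (G * NR ^ 3) + 80 * Real.pi ^ 3 * M * (G * NR ^ 3)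
        + 60 * Real.pi * M ^ 2 * (G * NR ^ 3) = D * NR ^ 3 := by rw [hD2]; ring
    linarith [h1', h2', e0, e1, e2, e3, f1, f2, f3, hsum]
  have hNRJ : NR ≤ J := by
    rw [hJ, le_div_iff₀ (by positivity)]
    nlinarith [pow_pos hNRpos 3, hmain]
  constructor
  · intro j hj
    by_cases hjA : j ∈ A
    · refine le_trans ?_ (le_max_left _ _)
      exact_mod_cast haAb j hjA
    · have hjT : j ∈ T := by rw [hT]; exact Finset.mem_filter.mpr ⟨hj, hjA⟩
      have hjN : (j : ℝ) ≤ NR := by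
        rw [hNR]
        exact_mod_cast le_trans (T.le_max' j hjT) (le_of_eq hN.symm)
      exact le_trans (le_trans hjN hNRJ) (le_max_right _ _)
  · intro j
    by_cases hjA : j ∈ A
    · have h' := hkA j hjA
      have hBJ : B₁ * NR ≤ B₁ * J := mul_le_mul_of_nonneg_left hNRJ hB₁nn
      exact le_trans (le_trans h' hBJ) (le_max_right _ _)
    · by_cases hjs : j ∈ k.support
      · have hjT : j ∈ T := by rw [hT]; exact Finset.mem_filter.mpr ⟨hjs, hjA⟩
        have h1' : (k j).natAbs ≤ 2 := le_trans
          (Finset.single_le_sum (f := fun j => (k j).natAbs) (fun _ _ => Nat.zero_le _) hjT) h2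
        have habs2 : |(k j : ℝ)| ≤ 2 := by
          rw [← Int.cast_abs]
          have : |k j| ≤ 2 := by
            rw [Int.abs_eq_natAbs]
            exact_mod_cast h1'
          exact_mod_cast this
        exact le_trans habs2 (le_max_left _ _)
      · rw [Finsupp.notMem_support_iff.mp hjs]
        simp
lemma partC (A : Finset ℕ) (hA : A.Nonempty) (hpos : ∀ i ∈ A, 0 < i)
    (F : Set ℝ) (hF : IsCompact F) (hdet : ∀ c ∈ F, (CAmat A c).det ≠ 0) :
    {c ∈ F | ∃ k : ℕ →₀ ℤ, k 0 = 0 ∧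
        1 ≤ (∑ j ∈ k.support.filter (fun j => j ∉ A), (k j).natAbs) ∧
        (∑ j ∈ k.support.filter (fun j => j ∉ A), (k j).natAbs) ≤ 2 ∧
        FreqCond A c k}.Finite := by
  rcases F.eq_empty_or_nonempty with rfl | hFne
  · simp
  have hπ := Real.pi_pos
  -- bound on |c| over F
  obtain ⟨cM, hcM, hM⟩ := hF.exists_isMaxOn hFne continuous_abs.continuousOn
  set M : ℝ := |cM| with hMdef
  have hMnn : 0 ≤ M := abs_nonneg _
  have hMb : ∀ c ∈ F, |c| ≤ M := fun c hc => hM hc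
  -- lower bound on |det| over F
  obtain ⟨cD, hcD, hD⟩ := hF.exists_isMinOn hFne
    ((continuous_abs.comp (CAmat_continuous A).matrix_det).continuousOn)
  set δ : ℝ := |(CAmat A cD).det| with hδdef
  have hδ : 0 < δ := abs_pos.mpr (hdet cD hcD)
  have hδb : ∀ c ∈ F, δ ≤ |(CAmat A c).det| := fun c hc => hD hc
  clear_value M δ
  -- bound on adjugate entries over F
  obtain ⟨cK, hcK, hK⟩ := hF.exists_isMaxOn hFne (adjugate_continuous A).continuousOn
  set Kad : ℝ := ∑ i : A, ∑ l : A, |((CAmat A cK).adjugate i l)| with hKdef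
  have hKnn : 0 ≤ Kad :=
    Finset.sum_nonneg fun _ _ => Finset.sum_nonneg fun _ _ => abs_nonneg _
  have hKb : ∀ c ∈ F, ∀ i l : A, |((CAmat A c).adjugate i l)| ≤ Kad := by
    intro c hc i l
    calc |((CAmat A c).adjugate i l)| ≤ ∑ l' : A, |((CAmat A c).adjugate i l')| :=
          Finset.single_le_sum (f := fun l' => |((CAmat A c).adjugate i l')|)
            (fun _ _ => abs_nonneg _) (Finset.mem_univ l)
      _ ≤ ∑ i' : A, ∑ l' : A, |((CAmat A c).adjugate i' l')| :=
          Finset.single_le_sum (f := fun i' => ∑ l' : A, |((CAmat A c).adjugate i' l')|)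
            (fun _ _ => Finset.sum_nonneg fun _ _ => abs_nonneg _) (Finset.mem_univ i)
      _ ≤ Kad := hK hc
  clear_value Kad
  -- constants
  set aA : ℕ := A.max' hA with haA
  have haA1 : 1 ≤ aA := hpos _ (A.max'_mem hA)
  have haAR : (1:ℝ) ≤ (aA : ℝ) := by exact_mod_cast haA1
  set B₁ : ℝ := (A.card : ℝ) * (Kad * (80 * Real.pi ^ 2 * (aA : ℝ) * 2)) / δ with hB₁
  have hB₁nn : 0 ≤ B₁ := by positivity
  set E : ℝ := (A.card : ℝ) * ((aA : ℝ) ^ 5 * (B₁ * 1)) with hE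
  have hEnn : 0 ≤ E := by positivity
  set G : ℝ := E + 2 with hG
  have hGnn : (0:ℝ) ≤ G := by simp only [hG]; linarith
  set D : ℝ := (32 * Real.pi ^ 5 + 80 * Real.pi ^ 3 * M + 60 * Real.pi * M ^ 2) * G with hD2
  have hDnn : 0 ≤ D := mul_nonneg (by positivity) hGnn
  set J : ℝ := D / (32 * Real.pi ^ 5) with hJ
  have hJnn : 0 ≤ J := div_nonneg hDnn (by positivity)
  clear_value aA B₁ E G D J
  have key : ∀ c ∈ F, ∀ k : ℕ →₀ ℤ, k 0 = 0 →
      1 ≤ (∑ j ∈ k.support.filter (fun j => j ∉ A), (k j).natAbs) →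
      (∑ j ∈ k.support.filter (fun j => j ∉ A), (k j).natAbs) ≤ 2 →
      FreqCond A c k →
      (∀ j ∈ k.support, (j : ℝ) ≤ max (aA : ℝ) J) ∧
      (∀ j : ℕ, |(k j : ℝ)| ≤ max 2 (B₁ * J)) := by
    intro c hc k h0 h1 h2 hFC
    exact key_bound hA hpos hMnn hδ hKnn haA hB₁ hE hG hD2 hJ (hMb c hc) (hδb c hc)
      (hKb c hc) h0 h1 h2 hFC
  -- assemble
  set R : ℕ := ⌈max (aA : ℝ) J⌉₊ + 1 with hR
  set B : ℤ := ⌈max 2 (B₁ * J)⌉ with hB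
  have hKfin : ({k : ℕ →₀ ℤ | (∀ j ∈ k.support, j < R) ∧ ∀ j, |k j| ≤ B} ∩
      {k : ℕ →₀ ℤ | k 0 = 0 ∧
        1 ≤ (∑ j ∈ k.support.filter (fun j => j ∉ A), (k j).natAbs) ∧
        (∑ j ∈ k.support.filter (fun j => j ∉ A), (k j).natAbs) ≤ 2}).Finite :=
    (finsupp_bounded_finite R B).inter_of_left _
  have hUnion : (⋃ k ∈ ({k : ℕ →₀ ℤ | (∀ j ∈ k.support, j < R) ∧ ∀ j, |k j| ≤ B} ∩
      {k : ℕ →₀ ℤ | k 0 = 0 ∧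
        1 ≤ (∑ j ∈ k.support.filter (fun j => j ∉ A), (k j).natAbs) ∧
        (∑ j ∈ k.support.filter (fun j => j ∉ A), (k j).natAbs) ≤ 2}),
      {c : ℝ | c ∈ F ∧ FreqCond A c k}).Finite := by
    apply Set.Finite.biUnion hKfin
    intro k hk
    apply Set.Subsingleton.finite
    intro c₁ hc₁ c₂ hc₂
    exact uniqC hA hpos hk.2.1 hk.2.2.1 hk.2.2.2 hc₁.2 hc₂.2
  apply hUnion.subset
  rintro c ⟨hcF, k, h0, h1, h2, hFC⟩
  obtain ⟨hjb, hkb⟩ := key c hcF k h0 h1 h2 hFC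
  have hmem : k ∈ ({k : ℕ →₀ ℤ | (∀ j ∈ k.support, j < R) ∧ ∀ j, |k j| ≤ B} ∩
      {k : ℕ →₀ ℤ | k 0 = 0 ∧
        1 ≤ (∑ j ∈ k.support.filter (fun j => j ∉ A), (k j).natAbs) ∧
        (∑ j ∈ k.support.filter (fun j => j ∉ A), (k j).natAbs) ≤ 2}) := by
    refine ⟨⟨?_, ?_⟩, h0, h1, h2⟩
    · intro j hj
      have h2' : (j : ℝ) ≤ (⌈max (aA : ℝ) J⌉₊ : ℝ) := le_trans (hjb j hj) (Nat.le_ceil _)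
      have h3' : j ≤ ⌈max (aA : ℝ) J⌉₊ := by exact_mod_cast h2'
      rw [hR]
      omega
    · intro j
      have h2' : |(k j : ℝ)| ≤ (B : ℝ) := le_trans (hkb j) (by rw [hB]; exact Int.le_ceil _)
      rw [← Int.cast_abs] at h2'
      exact_mod_cast h2'
  exact Set.mem_biUnion hmem ⟨hcF, hFC⟩


/-- For every finitely supported integer vector `k` (supported in indices `≥ 1`) with
`1 ≤ ∑_{j ∉ A} |k_j| ≤ 2`: (a) there is at most one `c` satisfying both resonance
conditions; (b) any such `c` is a rational multiple of `π²`; and (c) on any compact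
`F ⊆ ℝ` on which `det C_A(c) ≠ 0`, the set of `c` admitting such a `k` is finite. -/
theorem stmt15 (A : Finset ℕ) (hA : A.Nonempty) (hpos : ∀ i ∈ A, 0 < i) :
    (∀ k : ℕ →₀ ℤ, k 0 = 0 →
      1 ≤ ∑ j ∈ k.support.filter (fun j => j ∉ A), (k j).natAbs →
      (∑ j ∈ k.support.filter (fun j => j ∉ A), (k j).natAbs) ≤ 2 →
      (∀ c₁ c₂ : ℝ, FreqCond A c₁ k → FreqCond A c₂ k → c₁ = c₂) ∧
      (∀ c : ℝ, FreqCond A c k → ∃ q : ℚ, c = (q : ℝ) * Real.pi ^ 2)) ∧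
    ∀ F : Set ℝ, IsCompact F → (∀ c ∈ F, (CAmat A c).det ≠ 0) →
      {c ∈ F | ∃ k : ℕ →₀ ℤ, k 0 = 0 ∧
        1 ≤ (∑ j ∈ k.support.filter (fun j => j ∉ A), (k j).natAbs) ∧
        (∑ j ∈ k.support.filter (fun j => j ∉ A), (k j).natAbs) ≤ 2 ∧
        FreqCond A c k}.Finite := by
  constructor
  · intro k h0 h1 h2
    exact ⟨fun c₁ c₂ hc₁ hc₂ => uniqC hA hpos h0 h1 h2 hc₁ hc₂,
      fun c hc => ratC hA hpos h0 h1 h2 hc⟩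
  · intro F hF hdet
    exact partC A hA hpos F hF hdet
end
end

section
/- For every finite nonempty set A of positive integers and every finitely supported function k : ℕ_{≥1} → ℤ with k ≠ 0 and ∑_{j ∉ A} |k_j| ≤ 2, at least one of the following holds: ∑_{j≥1} j⁵ · k_j ≠ 0, or there exists i ∈ A with ∑_{j≥1, j≠i} j · k_j ≠ 0. -/
private lemma five_dvd_of_pow {b : ℕ} (h : (5:ℕ) ∣ b^4) : 5 ∣ b :=
  Nat.Prime.dvd_of_dvd_pow (by norm_num) h

lemma descent2 : ∀ b a s : ℕ, 0 < a → 0 < s → b ∣ a →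
    b^4 ≠ 5*s*(s+a)*(s^2+s*a+a^2) := by
  intro b
  induction b using Nat.strong_induction_on with
  | _ b ih =>
    intro a s ha hs hba heq
    have h5b : 5 ∣ b := five_dvd_of_pow ⟨s*(s+a)*(s^2+s*a+a^2), by rw [heq]; ring⟩
    obtain ⟨c, rfl⟩ := h5b
    have h5a : 5 ∣ a := dvd_trans (dvd_mul_right 5 c) hba
    obtain ⟨α, rfl⟩ := h5a
    have h125 : 125 * c^4 = s*(s+5*α)*(s^2+s*(5*α)+(5*α)^2) := by
      have h5 : 5 * (125 * c^4) = 5 * (s*(s+5*α)*(s^2+s*(5*α)+(5*α)^2)) := by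
        rw [show 5 * (125*c^4) = (5*c)^4 by ring, heq]; ring
      exact Nat.eq_of_mul_eq_mul_left (by norm_num) h5
    have hp5 : Nat.Prime 5 := by norm_num
    have h5s : 5 ∣ s := by
      have hd : (5:ℕ) ∣ s*(s+5*α)*(s^2+s*(5*α)+(5*α)^2) := ⟨25*c^4, by rw [← h125]; ring⟩
      rcases (hp5.dvd_mul.mp hd) with hd | hd
      · rcases (hp5.dvd_mul.mp hd) with hd | hd
        · exact hd
        · omega
      · have : (5:ℕ) ∣ s^2 := by
          have h2 : (5:ℕ) ∣ s*(5*α) + (5*α)^2 := ⟨s*α + 5*α^2, by ring⟩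
          omega
        exact hp5.dvd_of_dvd_pow this
    obtain ⟨σ, rfl⟩ := h5s
    have hkey : c^4 = 5*σ*(σ+α)*(σ^2+σ*α+α^2) := by
      have h5 : 125 * (c^4) = 125 * (5*σ*(σ+α)*(σ^2+σ*α+α^2)) := by
        rw [h125]; ring
      exact Nat.eq_of_mul_eq_mul_left (by norm_num) h5
    have hα : 0 < α := by omega
    have hσ : 0 < σ := by omega
    have hc : 0 < c := by
      rcases Nat.eq_zero_or_pos c with rfl | h
      · simp at hkey; omega
      · exact h
    exact ih c (by omega) α σ hα hσ
      ((mul_dvd_mul_iff_left (by norm_num : (5:ℕ) ≠ 0)).mp hba) hkey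

lemma descent1 : ∀ b a t : ℕ, 0 < a → 0 < t → b ∣ 2*a →
    b^4 ≠ 5*t^2*(2*a^2+t^2) := by
  intro b
  induction b using Nat.strong_induction_on with
  | _ b ih =>
    intro a t ha ht hba heq
    have hp5 : Nat.Prime 5 := by norm_num
    have h5b : 5 ∣ b := five_dvd_of_pow ⟨t^2*(2*a^2+t^2), by rw [heq]; ring⟩
    obtain ⟨c, rfl⟩ := h5b
    have h5a : 5 ∣ a := by
      have h2a : (5:ℕ) ∣ 2*a := dvd_trans (dvd_mul_right 5 c) hba
      rcases hp5.dvd_mul.mp h2a with h | h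
      · omega
      · exact h
    obtain ⟨α, rfl⟩ := h5a
    have h125 : 125 * c^4 = t^2*(2*(5*α)^2+t^2) := by
      have h5 : 5 * (125 * c^4) = 5 * (t^2*(2*(5*α)^2+t^2)) := by
        rw [show 5 * (125*c^4) = (5*c)^4 by ring, heq]; ring
      exact Nat.eq_of_mul_eq_mul_left (by norm_num) h5
    have h5t : 5 ∣ t := by
      have hd : (5:ℕ) ∣ t^2*(2*(5*α)^2+t^2) := ⟨25*c^4, by rw [← h125]; ring⟩
      rcases hp5.dvd_mul.mp hd with hd | hd
      · exact hp5.dvd_of_dvd_pow hd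
      · have : (5:ℕ) ∣ t^2 := by
          have h2 : (5:ℕ) ∣ 2*(5*α)^2 := ⟨10*α^2, by ring⟩
          omega
        exact hp5.dvd_of_dvd_pow this
    obtain ⟨τ, rfl⟩ := h5t
    have hkey : c^4 = 5*τ^2*(2*α^2+τ^2) := by
      have h5 : 125 * (c^4) = 125 * (5*τ^2*(2*α^2+τ^2)) := by rw [h125]; ring
      exact Nat.eq_of_mul_eq_mul_left (by norm_num) h5
    have hα : 0 < α := by omega
    have hτ : 0 < τ := by omega
    have hc : 0 < c := by
      rcases Nat.eq_zero_or_pos c with rfl | h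
      · simp at hkey; omega
      · exact h
    have hcd : c ∣ 2*α := by
      have : 5*c ∣ 5*(2*α) := by rw [show 5*(2*α) = 2*(5*α) by ring]; exact hba
      exact (mul_dvd_mul_iff_left (by norm_num : (5:ℕ) ≠ 0)).mp this
    exact ih c (by omega) α τ hα hτ hcd hkey


private lemma Qub (A : Finset ℕ) (a : ℕ) (hmax : ∀ i ∈ A, i ≤ a) :
    ∑ i ∈ A, (i:ℤ)^4 ≤ (A.card : ℤ) * (a:ℤ)^4 := by
  calc ∑ i ∈ A, (i:ℤ)^4 ≤ ∑ _i ∈ A, (a:ℤ)^4 :=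
        Finset.sum_le_sum (fun i hi =>
          pow_le_pow_left₀ (by positivity) (by exact_mod_cast hmax i hi) 4)
    _ = (A.card : ℤ) * (a:ℤ)^4 := by rw [Finset.sum_const, nsmul_eq_mul]

private lemma Qlb (A : Finset ℕ) (hpos : ∀ i ∈ A, 0 < i) (a : ℕ) (ha : a ∈ A) :
    (a:ℤ)^4 + ((A.card:ℤ) - 1) ≤ ∑ i ∈ A, (i:ℤ)^4 := by
  rw [← Finset.add_sum_erase A _ ha]
  have h1 : ∑ _i ∈ A.erase a, (1:ℤ) ≤ ∑ i ∈ A.erase a, (i:ℤ)^4 := by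
    apply Finset.sum_le_sum
    intro i hi
    have h1i : 1 ≤ i := hpos i (Finset.mem_of_mem_erase hi)
    have h1z : (1:ℤ) ≤ (i:ℤ) := by exact_mod_cast h1i
    calc (1:ℤ) = 1^4 := by norm_num
      _ ≤ (i:ℤ)^4 := pow_le_pow_left₀ (by norm_num) h1z 4
  have h2 : ∑ _i ∈ A.erase a, (1:ℤ) = ((A.card:ℤ) - 1) := by
    rw [Finset.sum_const, nsmul_eq_mul, mul_one, Finset.card_erase_of_mem ha]
    have : 1 ≤ A.card := Finset.card_pos.mpr ⟨a, ha⟩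
    push_cast [this]
    ring
  linarith [h1, h2]

private lemma Qtwo (A : Finset ℕ) (a : ℕ) (ha : a ∈ A) (hcard : A.card = 2) :
    ∃ b ∈ A, b ≠ a ∧ ∑ i ∈ A, (i:ℤ)^4 = (a:ℤ)^4 + (b:ℤ)^4 := by
  have hc : (A.erase a).card = 1 := by rw [Finset.card_erase_of_mem ha, hcard]
  obtain ⟨b, hb⟩ := Finset.card_eq_one.mp hc
  have hbmem : b ∈ A.erase a := hb ▸ Finset.mem_singleton_self b
  refine ⟨b, Finset.mem_of_mem_erase hbmem, Finset.ne_of_mem_erase hbmem, ?_⟩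
  rw [← Finset.add_sum_erase A _ ha, hb, Finset.sum_singleton]

private lemma lt_of_pow4_lt {x y : ℤ} (hy : 0 ≤ y) (h : x^4 < y^4) : x < y := by
  by_contra hc
  push_neg at hc
  exact absurd (pow_le_pow_left₀ hy hc 4) (by linarith)

private lemma oneCore (M Q a j s e : ℤ)
    (hM1 : 1 ≤ M) (haz : 1 ≤ a) (hjz : 1 ≤ j) (hja : j ≠ a)
    (hs0 : 0 < s) (hsa : a ≤ s) (hdvd : a ∣ s)
    (he : e = 1 ∨ e = 2) (habs : M * s = j * e) (hQeq : Q = M * j^4)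
    (hQlb : a^4 + M ≤ Q) (hQub : Q ≤ (M+1)*a^4) : False := by
  have ha4 : (1:ℤ) ≤ a^4 := by
    calc (1:ℤ) = 1^4 := by norm_num
      _ ≤ a^4 := pow_le_pow_left₀ (by norm_num) haz 4
  -- M ≤ 2
  have hMa : M * a ≤ 2 * j := by
    have h1 : M * a ≤ M * s := mul_le_mul_of_nonneg_left hsa (by omega)
    have h2 : j * e ≤ j * 2 :=
      mul_le_mul_of_nonneg_left (by rcases he with rfl | rfl <;> norm_num) (by linarith)
    rw [habs] at h1
    linarith
  have h16 : M^4 * a^4 ≤ 16 * j^4 := by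
    have h := pow_le_pow_left₀ (by positivity : (0:ℤ) ≤ M * a) hMa 4
    calc M^4 * a^4 = (M * a)^4 := by ring
      _ ≤ (2 * j)^4 := h
      _ = 16 * j^4 := by ring
  have hM5 : M^5 * a^4 ≤ (16*(M+1)) * a^4 := by
    have h1 : M * (M^4 * a^4) ≤ M * (16 * j^4) :=
      mul_le_mul_of_nonneg_left h16 (by omega)
    have h2 : M * (16 * j^4) = 16 * Q := by rw [hQeq]; ring
    calc M^5 * a^4 = M * (M^4 * a^4) := by ring
      _ ≤ 16 * Q := h2 ▸ h1
      _ ≤ (16*(M+1)) * a^4 := by linarith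
  have hM5' : M^5 ≤ 16*(M+1) := le_of_mul_le_mul_right hM5 (by positivity)
  have hM2 : M ≤ 2 := by
    by_contra hc
    push_neg at hc
    have h3 : (3:ℤ) ≤ M := hc
    have h81 : (81:ℤ) ≤ M^4 := by
      calc (81:ℤ) = 3^4 := by norm_num
        _ ≤ M^4 := pow_le_pow_left₀ (by norm_num) h3 4
    have h81M : 81 * M ≤ M^4 * M := mul_le_mul_of_nonneg_right h81 (by omega)
    have hr : M^4 * M = M^5 := by ring
    rw [hr] at h81M
    linarith
  obtain ⟨q, hq⟩ := hdvd
  have hq1 : 1 ≤ q := by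
    by_contra hc
    push_neg at hc
    have hnp : a * q ≤ 0 := mul_nonpos_iff.mpr (Or.inl ⟨by linarith, by omega⟩)
    rw [hq] at hs0
    linarith
  have hMcase : M = 1 ∨ M = 2 := by omega
  rcases hMcase with rfl | rfl
  · rw [one_mul] at hQeq
    have haj : a < j := by
      apply lt_of_pow4_lt (by linarith)
      linarith
    rcases he with rfl | rfl
    · -- s = j
      have hsj : s = j := by linarith [habs]
      have hq2 : 2 ≤ q := by
        rcases (by omega : q = 1 ∨ 2 ≤ q) with h1 | h2
        · exfalso; apply hja; rw [← hsj, hq, h1, mul_one]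
        · exact h2
      have hj2a : 2 * a ≤ j := by
        have : a * 2 ≤ a * q := mul_le_mul_of_nonneg_left hq2 (by linarith)
        rw [← hq, hsj] at this
        linarith
      have hp := pow_le_pow_left₀ (by positivity : (0:ℤ) ≤ 2*a) hj2a 4
      have hex : (2*a)^4 = 16*a^4 := by ring
      rw [hex] at hp
      linarith
    · -- s = 2j
      have hsj : s = 2*j := by linarith [habs]
      have hq3 : 3 ≤ q := by
        by_contra hc
        push_neg at hc
        have : a * q ≤ a * 2 := mul_le_mul_of_nonneg_left (by omega) (by linarith)
        rw [← hq, hsj] at this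
        linarith
      have hj3a : 3 * a ≤ 2 * j := by
        have : a * 3 ≤ a * q := mul_le_mul_of_nonneg_left hq3 (by linarith)
        rw [← hq, hsj] at this
        linarith
      have hp := pow_le_pow_left₀ (by positivity : (0:ℤ) ≤ 3*a) hj3a 4
      have hex : (3*a)^4 = 81*a^4 := by ring
      have hex2 : (2*j)^4 = 16*j^4 := by ring
      rw [hex, hex2] at hp
      linarith
  · -- M = 2
    rcases he with rfl | rfl
    · -- 2s = j
      have hj2a : 2 * a ≤ j := by linarith [habs, hsa]
      have hp := pow_le_pow_left₀ (by positivity : (0:ℤ) ≤ 2*a) hj2a 4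
      have hex : (2*a)^4 = 16*a^4 := by ring
      rw [hex] at hp
      linarith
    · -- s = j
      have hsj : s = j := by linarith [habs]
      have hq2 : 2 ≤ q := by
        rcases (by omega : q = 1 ∨ 2 ≤ q) with h1 | h2
        · exfalso; apply hja; rw [← hsj, hq, h1, mul_one]
        · exact h2
      have hj2a : 2 * a ≤ j := by
        have : a * 2 ≤ a * q := mul_le_mul_of_nonneg_left hq2 (by linarith)
        rw [← hq, hsj] at this
        linarith
      have hp := pow_le_pow_left₀ (by positivity : (0:ℤ) ≤ 2*a) hj2a 4
      have hex : (2*a)^4 = 16*a^4 := by ring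
      rw [hex] at hp
      linarith


private lemma pow4_mono {x y : ℤ} (hx : 0 ≤ x) (h : x ≤ y) : x^4 ≤ y^4 :=
  pow_le_pow_left₀ hx h 4

private lemma lt_of_pow4_lt' {x y : ℤ} (hy : 0 ≤ y) (h : x^4 < y^4) : x < y := by
  by_contra hc
  push_neg at hc
  exact absurd (pow_le_pow_left₀ hy hc 4) (by linarith)

private lemma div_bound {b a : ℤ} (hb : 1 ≤ b) (ha : 1 ≤ a) (hdvd : b ∣ a) (hne : b ≠ a) :
    2*b ≤ a := by
  obtain ⟨q, hq⟩ := hdvd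
  have hq1 : 1 ≤ q := by
    by_contra hc
    push_neg at hc
    have hnp : b * q ≤ 0 := mul_nonpos_iff.mpr (Or.inl ⟨by linarith, by omega⟩)
    rw [hq] at ha
    linarith
  rcases (by omega : q = 1 ∨ 2 ≤ q) with h1 | h2
  · exfalso; apply hne; rw [hq, h1, mul_one]
  · have : b * 2 ≤ b * q := mul_le_mul_of_nonneg_left h2 (by linarith)
    rw [← hq] at this
    linarith

private lemma sameCore (M Q s : ℤ) (a x y : ℕ)
    (hM1 : 1 ≤ M) (haz : 1 ≤ a) (hx1 : 1 ≤ x) (hxy : x < y)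
    (hya : y ≠ a) (hs0 : 0 < s) (hsa : (a:ℤ) ≤ s) (hdvda : (a:ℤ) ∣ s)
    (habs : M * s = (x:ℤ) + (y:ℤ))
    (hkey : Q * ((x:ℤ) + (y:ℤ)) = M * ((x:ℤ)^5 + (y:ℤ)^5))
    (hQlb : (a:ℤ)^4 + M ≤ Q) (hQub : Q ≤ (M+1)*(a:ℤ)^4)
    (hm2 : M = 1 → ∃ b : ℕ, 1 ≤ b ∧ (b:ℤ) ∣ s ∧ Q = (a:ℤ)^4 + (b:ℤ)^4)
    (hm3 : M = 2 → ∃ b c : ℕ, 1 ≤ b ∧ 1 ≤ c ∧ b ≠ a ∧ c ≠ a ∧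
      (b:ℤ) ∣ s ∧ (c:ℤ) ∣ s ∧ Q = (a:ℤ)^4 + (b:ℤ)^4 + (c:ℤ)^4) : False := by
  have hX1 : (1:ℤ) ≤ (x:ℤ) := by exact_mod_cast hx1
  have hXY : (x:ℤ) < (y:ℤ) := by exact_mod_cast hxy
  have hY1 : (1:ℤ) ≤ (y:ℤ) := by linarith
  have hAz : (1:ℤ) ≤ (a:ℤ) := by exact_mod_cast haz
  have hXYpos : (0:ℤ) < (x:ℤ) + (y:ℤ) := by linarith
  have ha4 : (1:ℤ) ≤ (a:ℤ)^4 := by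
    calc (1:ℤ) = 1^4 := by norm_num
      _ ≤ (a:ℤ)^4 := pow4_mono (by norm_num) hAz
  -- x^5 ≤ x * y^4
  have hx5 : (x:ℤ)^5 ≤ (x:ℤ) * (y:ℤ)^4 := by
    have h4 : (x:ℤ)^4 ≤ (y:ℤ)^4 := pow4_mono (by linarith) (le_of_lt hXY)
    calc (x:ℤ)^5 = (x:ℤ) * (x:ℤ)^4 := by ring
      _ ≤ (x:ℤ) * (y:ℤ)^4 := mul_le_mul_of_nonneg_left h4 (by linarith)
  -- Q ≤ M * y^4
  have hQyub : Q ≤ M * (y:ℤ)^4 := by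
    have h1 : M * ((x:ℤ)^5 + (y:ℤ)^5) ≤ (M * (y:ℤ)^4) * ((x:ℤ) + (y:ℤ)) := by
      have h2 : (x:ℤ)^5 + (y:ℤ)^5 ≤ (y:ℤ)^4 * ((x:ℤ) + (y:ℤ)) := by nlinarith [hx5]
      calc M * ((x:ℤ)^5 + (y:ℤ)^5) ≤ M * ((y:ℤ)^4 * ((x:ℤ) + (y:ℤ))) :=
            mul_le_mul_of_nonneg_left h2 (by omega)
        _ = (M * (y:ℤ)^4) * ((x:ℤ) + (y:ℤ)) := by ring
    rw [← hkey] at h1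
    exact le_of_mul_le_mul_right h1 hXYpos
  -- M * y^4 ≤ 2 * Q
  have hQylb : M * (y:ℤ)^4 ≤ 2 * Q := by
    have h1 : (M * (y:ℤ)^4) * ((x:ℤ) + (y:ℤ)) ≤ (2*Q) * ((x:ℤ) + (y:ℤ)) := by
      have h2 : (y:ℤ)^4 * ((x:ℤ) + (y:ℤ)) ≤ 2 * ((x:ℤ)^5 + (y:ℤ)^5) := by
        have hx5pos : (0:ℤ) ≤ (x:ℤ)^5 := by positivity
        nlinarith [hXY]
      calc (M * (y:ℤ)^4) * ((x:ℤ) + (y:ℤ)) = M * ((y:ℤ)^4 * ((x:ℤ) + (y:ℤ))) := by ring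
        _ ≤ M * (2 * ((x:ℤ)^5 + (y:ℤ)^5)) := mul_le_mul_of_nonneg_left h2 (by omega)
        _ = 2 * (M * ((x:ℤ)^5 + (y:ℤ)^5)) := by ring
        _ = (2*Q) * ((x:ℤ) + (y:ℤ)) := by rw [← hkey]; ring
    exact le_of_mul_le_mul_right h1 hXYpos
  -- M ≤ 2
  have h2Y : M * (a:ℤ) ≤ 2 * (y:ℤ) := by
    have h1 : M * (a:ℤ) ≤ M * s := mul_le_mul_of_nonneg_left hsa (by omega)
    rw [habs] at h1
    linarith
  have hM2 : M ≤ 2 := by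
    by_contra hc
    push_neg at hc
    have h3 : (3:ℤ) ≤ M := hc
    have hp : (M * (a:ℤ))^4 ≤ (2*(y:ℤ))^4 := pow4_mono (by positivity) h2Y
    have hexp : (M * (a:ℤ))^4 = M^4 * (a:ℤ)^4 := by ring
    have hexp2 : (2*(y:ℤ))^4 = 16 * (y:ℤ)^4 := by ring
    rw [hexp, hexp2] at hp
    -- M^5 a^4 ≤ 16 M y^4 ≤ 32 Q ≤ 32 (M+1) a^4
    have h1 : M * (M^4 * (a:ℤ)^4) ≤ M * (16 * (y:ℤ)^4) := mul_le_mul_of_nonneg_left hp (by omega)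
    have h2 : M^5 * (a:ℤ)^4 ≤ 16 * (M * (y:ℤ)^4) := by linarith [h1]
    have h3' : M^5 * (a:ℤ)^4 ≤ (32 * (M+1)) * (a:ℤ)^4 := by linarith [hQylb, hQub]
    have h4 : M^5 ≤ 32*(M+1) := le_of_mul_le_mul_right h3' (by positivity)
    have h81 : (81:ℤ) ≤ M^4 := by
      calc (81:ℤ) = 3^4 := by norm_num
        _ ≤ M^4 := pow4_mono (by norm_num) h3
    have h81M : 81 * M ≤ M^4 * M := mul_le_mul_of_nonneg_right h81 (by omega)
    have hr : M^4 * M = M^5 := by ring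
    rw [hr] at h81M
    linarith
  obtain ⟨q, hq⟩ := hdvda
  have hq1 : 1 ≤ q := by
    by_contra hc
    push_neg at hc
    have hnp : (a:ℤ) * q ≤ 0 := mul_nonpos_iff.mpr (Or.inl ⟨by linarith, by omega⟩)
    rw [hq] at hs0
    linarith
  rcases (by omega : M = 1 ∨ M = 2) with rfl | rfl
  · -- m = 2
    obtain ⟨b, hb1, hbdvd, hQeq⟩ := hm2 rfl
    rw [one_mul] at hQyub habs
    have haY : (a:ℤ) < (y:ℤ) := by
      apply lt_of_pow4_lt' (by linarith)
      linarith [hQlb, hQyub]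
    have hY4ub : (y:ℤ)^4 ≤ 4 * (a:ℤ)^4 := by linarith [hQylb, hQub]
    -- q = 2
    have hq2 : q = 2 := by
      rcases (by omega : q = 1 ∨ q = 2 ∨ 3 ≤ q) with h1 | h2 | h3
      · exfalso
        rw [hq, h1, mul_one] at habs
        linarith
      · exact h2
      · exfalso
        have : (a:ℤ) * 3 ≤ (a:ℤ) * q := mul_le_mul_of_nonneg_left h3 (by linarith)
        rw [← hq, habs] at this
        have h2y : 3 * (a:ℤ) ≤ 2 * (y:ℤ) := by linarith
        have hp := pow4_mono (by positivity : (0:ℤ) ≤ 3*(a:ℤ)) h2y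
        have he1 : (3*(a:ℤ))^4 = 81*(a:ℤ)^4 := by ring
        have he2 : (2*(y:ℤ))^4 = 16*(y:ℤ)^4 := by ring
        rw [he1, he2] at hp
        linarith
    have hsum2a : (x:ℤ) + (y:ℤ) = 2 * (a:ℤ) := by rw [← habs, hq, hq2]; ring
    set t' : ℤ := (y:ℤ) - (a:ℤ) with ht'def
    have ht1 : 1 ≤ t' := by
      have : (y:ℤ) ≠ (a:ℤ) := by exact_mod_cast hya
      omega
    have hXt : (x:ℤ) = (a:ℤ) - t' := by omega
    have hYt : (y:ℤ) = (a:ℤ) + t' := by omega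
    have hb4 : (b:ℤ)^4 = 10*(a:ℤ)^2*t'^2 + 5*t'^4 := by
      have h0 : 2*(a:ℤ) * ((b:ℤ)^4 - (10*(a:ℤ)^2*t'^2 + 5*t'^4)) = 0 := by
        have hkey' := hkey
        rw [hQeq, hsum2a, hXt, hYt] at hkey'
        linear_combination hkey'
      rcases mul_eq_zero.mp h0 with h | h
      · exfalso; linarith
      · linarith
    -- to naturals
    have hay : a ≤ y := by exact_mod_cast le_of_lt haY
    have htnat : (((y - a : ℕ)):ℤ) = t' := by
      push_cast [Nat.cast_sub hay]
      omega
    have htpos : 0 < y - a := by omega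
    have hbdvd2 : b ∣ 2*a := by
      have h1 : (b:ℤ) ∣ ((2*a : ℕ) : ℤ) := by
        push_cast
        rw [show (2:ℤ)*(a:ℤ) = (a:ℤ)*q by rw [hq2]; ring, ← hq]
        exact hbdvd
      exact_mod_cast h1
    have hbnat : b^4 = 5*(y-a)^2*(2*a^2+(y-a)^2) := by
      have h1 : ((b:ℕ):ℤ)^4 = ((5*(y-a)^2*(2*a^2+(y-a)^2) : ℕ) : ℤ) := by
        push_cast
        rw [htnat]
        linear_combination hb4
      exact_mod_cast h1
    exact descent1 b a (y-a) (by omega) htpos hbdvd2 hbnat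
  · -- m = 3
    obtain ⟨b, c, hb1, hc1, hbne, hcne, hbdvd, hcdvd, hQeq⟩ := hm3 rfl
    have hY4 : (y:ℤ)^4 ≤ Q := by linarith [hQylb]
    have hY4ub : (y:ℤ)^4 ≤ 3 * (a:ℤ)^4 := by linarith [hQub]
    have hY2a : (y:ℤ) < 2*(a:ℤ) := by
      apply lt_of_pow4_lt' (by positivity)
      have : (2*(a:ℤ))^4 = 16*(a:ℤ)^4 := by ring
      rw [this]
      linarith
    have hsY : s ≤ (y:ℤ) := by linarith [habs, hXY]
    have hq1' : q = 1 := by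
      rcases (by omega : q = 1 ∨ 2 ≤ q) with h1 | h2
      · exact h1
      · exfalso
        have : (a:ℤ) * 2 ≤ (a:ℤ) * q := mul_le_mul_of_nonneg_left h2 (by linarith)
        rw [← hq] at this
        linarith
    have hsa' : s = (a:ℤ) := by rw [hq, hq1', mul_one]
    rw [hsa'] at habs hbdvd hcdvd
    -- y - a ≥ 1 etc
    set t' : ℤ := (y:ℤ) - (a:ℤ) with ht'def
    have ht1 : 1 ≤ t' := by
      have h1 : (y:ℤ) ≠ (a:ℤ) := by exact_mod_cast hya
      have h2 : (a:ℤ) ≤ (y:ℤ) := by linarith [habs, hXY]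
      omega
    have hXt : (x:ℤ) = (a:ℤ) - t' := by omega
    have hYt : (y:ℤ) = (a:ℤ) + t' := by omega
    have hQval : Q = 2*(a:ℤ)^4 + 20*(a:ℤ)^2*t'^2 + 10*t'^4 := by
      have h0 : 2*(a:ℤ) * (Q - (2*(a:ℤ)^4 + 20*(a:ℤ)^2*t'^2 + 10*t'^4)) = 0 := by
        have hkey' := hkey
        rw [hXt, hYt] at hkey'
        linear_combination hkey'
      rcases mul_eq_zero.mp h0 with h | h
      · exfalso; linarith
      · linarith
    have hBz : (1:ℤ) ≤ (b:ℤ) := by exact_mod_cast hb1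
    have hCz : (1:ℤ) ≤ (c:ℤ) := by exact_mod_cast hc1
    have hbb : 2*(b:ℤ) ≤ (a:ℤ) :=
      div_bound hBz hAz hbdvd (by exact_mod_cast hbne)
    have hcc : 2*(c:ℤ) ≤ (a:ℤ) :=
      div_bound hCz hAz hcdvd (by exact_mod_cast hcne)
    have hb4 : 16*(b:ℤ)^4 ≤ (a:ℤ)^4 := by
      have := pow4_mono (by positivity : (0:ℤ) ≤ 2*(b:ℤ)) hbb
      have he : (2*(b:ℤ))^4 = 16*(b:ℤ)^4 := by ring
      linarith [he ▸ this]
    have hc4 : 16*(c:ℤ)^4 ≤ (a:ℤ)^4 := by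
      have := pow4_mono (by positivity : (0:ℤ) ≤ 2*(c:ℤ)) hcc
      have he : (2*(c:ℤ))^4 = 16*(c:ℤ)^4 := by ring
      linarith [he ▸ this]
    have hpos1 : (0:ℤ) ≤ (a:ℤ)^2*t'^2 := by positivity
    have hpos2 : (0:ℤ) ≤ t'^4 := by positivity
    -- 16Q = 32a^4 + ... vs 16Q = 16a^4+16b^4+16c^4 ≤ 18a^4
    linarith [hQval, hQeq, hb4, hc4, hpos1, hpos2, ha4]

private lemma oppCore (M Q s : ℤ) (a x y : ℕ)
    (hM1 : 1 ≤ M) (haz : 1 ≤ a) (hx1 : 1 ≤ x) (hxy : x < y)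
    (hs0 : 0 < s) (hsa : (a:ℤ) ≤ s) (hdvda : (a:ℤ) ∣ s)
    (habs : M * s = (y:ℤ) - (x:ℤ))
    (hkey : Q * ((y:ℤ) - (x:ℤ)) = M * ((y:ℤ)^5 - (x:ℤ)^5))
    (hQub : Q ≤ (M+1)*(a:ℤ)^4)
    (hm2 : M = 1 → ∃ b : ℕ, 1 ≤ b ∧ (b:ℤ) ∣ s ∧ Q = (a:ℤ)^4 + (b:ℤ)^4) : False := by
  have hX1 : (1:ℤ) ≤ (x:ℤ) := by exact_mod_cast hx1
  have hXY : (x:ℤ) < (y:ℤ) := by exact_mod_cast hxy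
  have hY1 : (1:ℤ) ≤ (y:ℤ) := by linarith
  have hAz : (1:ℤ) ≤ (a:ℤ) := by exact_mod_cast haz
  have ha4 : (1:ℤ) ≤ (a:ℤ)^4 := by
    calc (1:ℤ) = 1^4 := by norm_num
      _ ≤ (a:ℤ)^4 := pow4_mono (by norm_num) hAz
  have hD : (0:ℤ) < (y:ℤ) - (x:ℤ) := by linarith
  -- Q = M * P
  have hQP : Q = M * ((x:ℤ)^4 + (x:ℤ)^3*(y:ℤ) + (x:ℤ)^2*(y:ℤ)^2 + (x:ℤ)*(y:ℤ)^3 + (y:ℤ)^4) := by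
    have h0 : (Q - M * ((x:ℤ)^4 + (x:ℤ)^3*(y:ℤ) + (x:ℤ)^2*(y:ℤ)^2 + (x:ℤ)*(y:ℤ)^3 + (y:ℤ)^4))
        * ((y:ℤ) - (x:ℤ)) = 0 := by linear_combination hkey
    rcases mul_eq_zero.mp h0 with h | h
    · linarith
    · exfalso; linarith
  have hPY : (y:ℤ)^4 + 1 ≤ (x:ℤ)^4 + (x:ℤ)^3*(y:ℤ) + (x:ℤ)^2*(y:ℤ)^2 + (x:ℤ)*(y:ℤ)^3 + (y:ℤ)^4 := by
    have h1 : (1:ℤ) ≤ (x:ℤ)^4 := by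
      calc (1:ℤ) = 1^4 := by norm_num
        _ ≤ (x:ℤ)^4 := pow4_mono (by norm_num) hX1
    have h2 : (0:ℤ) ≤ (x:ℤ)^3*(y:ℤ) := by positivity
    have h3 : (0:ℤ) ≤ (x:ℤ)^2*(y:ℤ)^2 := by positivity
    have h4 : (0:ℤ) ≤ (x:ℤ)*(y:ℤ)^3 := by positivity
    linarith
  rcases (by omega : M = 1 ∨ 2 ≤ M) with rfl | hM2
  · -- M = 1
    rw [one_mul] at habs hQP
    obtain ⟨b, hb1, hbdvd, hQeq⟩ := hm2 rfl
    -- s < 2a : otherwise y ≥ 2a+1 and Q too big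
    have hslt : s < 2*(a:ℤ) := by
      by_contra hc
      push_neg at hc
      have hy2a : 2*(a:ℤ)+1 ≤ (y:ℤ) := by linarith [habs, hX1]
      have hp := pow4_mono (by positivity : (0:ℤ) ≤ 2*(a:ℤ)+1) hy2a
      have hexp : (2*(a:ℤ)+1)^4 = 16*(a:ℤ)^4 + 32*(a:ℤ)^3+24*(a:ℤ)^2+8*(a:ℤ)+1 := by ring
      rw [hexp] at hp
      have hp3 : (0:ℤ) ≤ (a:ℤ)^3 := by positivity
      have hp2 : (0:ℤ) ≤ (a:ℤ)^2 := by positivity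
      linarith [hQP, hPY, hQub]
    obtain ⟨q, hq⟩ := hdvda
    have hq1 : q = 1 := by
      have hqlow : 1 ≤ q := by
        by_contra hc
        push_neg at hc
        have hnp : (a:ℤ) * q ≤ 0 := mul_nonpos_iff.mpr (Or.inl ⟨by linarith, by omega⟩)
        rw [hq] at hs0
        linarith
      rcases (by omega : q = 1 ∨ 2 ≤ q) with h1 | h2
      · exact h1
      · exfalso
        have : (a:ℤ) * 2 ≤ (a:ℤ) * q := mul_le_mul_of_nonneg_left h2 (by linarith)
        rw [← hq] at this
        linarith
    have hsa' : s = (a:ℤ) := by rw [hq, hq1, mul_one]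
    rw [hsa'] at habs hbdvd
    have hY : (y:ℤ) = (x:ℤ) + (a:ℤ) := by linarith [habs]
    have hb4 : (b:ℤ)^4 = 5*(x:ℤ)*((x:ℤ)+(a:ℤ))*((x:ℤ)^2+(x:ℤ)*(a:ℤ)+(a:ℤ)^2) := by
      have hQP' := hQP
      rw [hQeq, hY] at hQP'
      linear_combination hQP'
    have hbdvdnat : b ∣ a := by exact_mod_cast hbdvd
    have hbnat : b^4 = 5*x*(x+a)*(x^2+x*a+a^2) := by
      have h1 : ((b:ℕ):ℤ)^4 = ((5*x*(x+a)*(x^2+x*a+a^2) : ℕ) : ℤ) := by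
        push_cast
        linear_combination hb4
      exact_mod_cast h1
    exact descent2 b a x (by omega) (by omega) hbdvdnat hbnat
  · -- M ≥ 2
    have hy2a : 2*(a:ℤ)+1 ≤ (y:ℤ) := by
      have h1 : 2*s ≤ M*s := mul_le_mul_of_nonneg_right hM2 (by linarith)
      linarith [habs, hX1]
    have hp := pow4_mono (by positivity : (0:ℤ) ≤ 2*(a:ℤ)+1) hy2a
    have hexp : (2*(a:ℤ)+1)^4 = 16*(a:ℤ)^4 + 32*(a:ℤ)^3+24*(a:ℤ)^2+8*(a:ℤ)+1 := by ring
    rw [hexp] at hp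
    have hp3 : (0:ℤ) ≤ (a:ℤ)^3 := by positivity
    have hp2 : (0:ℤ) ≤ (a:ℤ)^2 := by positivity
    -- Q = M*P ≥ M*(y^4+1) ≥ M*(16a^4+2)
    have hMP : M * ((y:ℤ)^4 + 1) ≤ Q := by
      rw [hQP]
      exact mul_le_mul_of_nonneg_left hPY (by omega)
    have h162 : M * (16*(a:ℤ)^4 + 2) ≤ M * ((y:ℤ)^4 + 1) := by
      apply mul_le_mul_of_nonneg_left _ (by omega)
      linarith
    have hu : (a:ℤ)^4 ≤ M * (a:ℤ)^4 := by
      nlinarith [ha4, hM1]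
    nlinarith [hMP, h162, hQub, hu, ha4, hM1]


private lemma absHelp (M S1 R : ℤ) (hM : 1 ≤ M) (hR : 0 < R)
    (h : M * S1 = -R ∨ M * S1 = R) : M * |S1| = R := by
  rcases abs_choice S1 with ha | ha <;> rcases h with h | h
  · exfalso
    have h1 : 0 ≤ M * |S1| := mul_nonneg (by omega) (abs_nonneg S1)
    rw [ha, h] at h1
    linarith
  · rw [ha]; exact h
  · rw [ha]; linear_combination -h
  · exfalso
    have h1 : 0 ≤ -S1 := ha ▸ abs_nonneg S1
    have h2 : M * S1 ≤ 0 := mul_nonpos_iff.mpr (Or.inl ⟨by omega, by linarith⟩)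
    linarith

/-- Nondegeneracy of the KdV2 Hamiltonian at `c = 0`: for every finite nonempty set `A`
of positive integers and every finitely supported `k : ℕ → ℤ` (supported in indices
`≥ 1`) with `k ≠ 0` and `∑_{j ∉ A} |k_j| ≤ 2`, either `∑_j j⁵ k_j ≠ 0` or there is
`i ∈ A` with `∑_{j ≠ i} j k_j ≠ 0`. -/
theorem stmt16 (A : Finset ℕ) (hA : A.Nonempty) (hpos : ∀ i ∈ A, 0 < i)
    (k : ℕ →₀ ℤ) (hk0 : k 0 = 0) (hk : k ≠ 0)
    (hZ : (∑ j ∈ k.support.filter (fun j => j ∉ A), (k j).natAbs) ≤ 2) :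
    (∑ j ∈ k.support, (j : ℤ) ^ 5 * k j) ≠ 0 ∨
    ∃ i ∈ A, (∑ j ∈ k.support.erase i, (j : ℤ) * k j) ≠ 0 := by
  by_contra hcon
  push_neg at hcon
  obtain ⟨h5, hTall⟩ := hcon
  set S1 : ℤ := ∑ j ∈ k.support, (j:ℤ) * k j with hS1def
  have hsupp0 : (0:ℕ) ∉ k.support := by simp [Finsupp.mem_support_iff, hk0]
  have hpos' : ∀ j ∈ k.support, 1 ≤ j := by
    intro j hj
    rcases Nat.eq_zero_or_pos j with rfl | h
    · exact absurd hj hsupp0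
    · exact h
  have hiki : ∀ i ∈ A, (i:ℤ) * k i = S1 := by
    intro i hi
    have h0 := hTall i hi
    by_cases hmem : i ∈ k.support
    · have hsum := Finset.add_sum_erase k.support (fun j => (j:ℤ) * k j) hmem
      rw [h0, add_zero] at hsum
      rw [hS1def, ← hsum]
    · have hki : k i = 0 := Finsupp.notMem_support_iff.mp hmem
      have her : k.support.erase i = k.support := Finset.erase_eq_of_notMem hmem
      rw [her] at h0
      rw [hki, mul_zero, hS1def, ← h0]
  set T := k.support.filter (fun j => j ∉ A) with hTdef
  have hTsub : ∀ j ∈ T, j ∉ A ∧ k j ≠ 0 ∧ 1 ≤ j := by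
    intro j hj
    rw [hTdef, Finset.mem_filter] at hj
    exact ⟨hj.2, Finsupp.mem_support_iff.mp hj.1, hpos' j hj.1⟩
  have hTcard : T.card ≤ 2 := by
    have h1 : T.card ≤ ∑ j ∈ T, (k j).natAbs := by
      rw [Finset.card_eq_sum_ones]
      apply Finset.sum_le_sum
      intro j hj
      exact Int.natAbs_pos.mpr (hTsub j hj).2.1
    omega
  by_cases hS1 : S1 = 0
  · -- S1 = 0 : all of A has k = 0, support is outside, small
    have hki0 : ∀ i ∈ A, k i = 0 := by
      intro i hi
      have h := hiki i hi
      rw [hS1] at h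
      have hipos : ((i:ℤ)) ≠ 0 := by
        have := hpos i hi; positivity
      rcases mul_eq_zero.mp h with h' | h'
      · exact absurd h' hipos
      · exact h'
    have hTF : T = k.support := by
      rw [hTdef]
      apply Finset.filter_eq_self.mpr
      intro j hj hjA
      exact Finsupp.mem_support_iff.mp hj (hki0 j hjA)
    have hne : k.support.Nonempty := Finsupp.support_nonempty_iff.mpr hk
    have hposcard : 0 < k.support.card := Finset.card_pos.mpr hne
    rw [hTF] at hTcard
    rcases (by omega : k.support.card = 1 ∨ k.support.card = 2) with h1 | h2
    · obtain ⟨j, hj⟩ := Finset.card_eq_one.mp h1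
      have hjs : j ∈ k.support := hj ▸ Finset.mem_singleton_self j
      have hval : S1 = (j:ℤ) * k j := by rw [hS1def, hj, Finset.sum_singleton]
      rw [hS1] at hval
      have hjne : ((j:ℤ)) ≠ 0 := by
        have := hpos' j hjs; positivity
      exact mul_ne_zero hjne (Finsupp.mem_support_iff.mp hjs) hval.symm
    · obtain ⟨x, y, hxy, hT2⟩ := Finset.card_eq_two.mp h2
      have hxs : x ∈ k.support := hT2 ▸ Finset.mem_insert_self x {y}
      have hys : y ∈ k.support := hT2 ▸ Finset.mem_insert_of_mem (Finset.mem_singleton_self y)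
      have hkx := Finsupp.mem_support_iff.mp hxs
      have hky := Finsupp.mem_support_iff.mp hys
      have hx1 := hpos' x hxs
      have hy1 := hpos' y hys
      rw [hTF, hT2, Finset.sum_pair hxy] at hZ
      have hnx : (k x).natAbs = 1 ∧ (k y).natAbs = 1 := by
        have := Int.natAbs_pos.mpr hkx
        have := Int.natAbs_pos.mpr hky
        omega
      have hval : S1 = (x:ℤ) * k x + (y:ℤ) * k y := by
        rw [hS1def, hT2, Finset.sum_pair hxy]
      rw [hS1] at hval
      rcases Int.natAbs_eq_iff.mp hnx.1 with hcx | hcx <;>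
        rcases Int.natAbs_eq_iff.mp hnx.2 with hcy | hcy <;>
          (rw [hcx, hcy] at hval; push_cast at hval; omega)
  · -- S1 ≠ 0
    have hAsupp : ∀ i ∈ A, i ∈ k.support := by
      intro i hi
      apply Finsupp.mem_support_iff.mpr
      intro h
      exact hS1 (by rw [← hiki i hi, h, mul_zero])
    have hfA : k.support.filter (fun j => j ∈ A) = A := by
      apply Finset.ext
      intro j
      simp only [Finset.mem_filter]
      exact ⟨fun h => h.2, fun h => ⟨hAsupp j h, h⟩⟩
    have hsf : ∀ f : ℕ → ℤ, ∑ j ∈ k.support, f j = ∑ i ∈ A, f i + ∑ j ∈ T, f j := by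
      intro f
      rw [← hfA, hTdef]
      exact (Finset.sum_filter_add_sum_filter_not k.support (fun j => j ∈ A) f).symm
    set m := A.card with hmdef
    set Q : ℤ := ∑ i ∈ A, (i:ℤ)^4 with hQdef
    set R1 : ℤ := ∑ j ∈ T, (j:ℤ) * k j with hR1def
    set R5 : ℤ := ∑ j ∈ T, (j:ℤ)^5 * k j with hR5def
    have hE1 : ((m:ℤ) - 1) * S1 = -R1 := by
      have h := hsf (fun j => (j:ℤ) * k j)
      rw [← hS1def, ← hR1def] at h
      have hA1 : ∑ i ∈ A, ((i:ℤ) * k i) = (m:ℤ) * S1 := by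
        rw [Finset.sum_congr rfl hiki, Finset.sum_const, nsmul_eq_mul, hmdef]
      rw [hA1] at h
      linarith
    have hE5 : Q * S1 = -R5 := by
      have h := hsf (fun j => (j:ℤ)^5 * k j)
      rw [← hR5def, h5] at h
      have hA5 : ∑ i ∈ A, ((i:ℤ)^5 * k i) = Q * S1 := by
        have hterm : ∀ i ∈ A, (i:ℤ)^5 * k i = (i:ℤ)^4 * S1 := by
          intro i hi
          rw [← hiki i hi]; ring
        rw [Finset.sum_congr rfl hterm, ← Finset.sum_mul, hQdef]
      rw [hA5] at h
      linarith
    obtain ⟨a, haA, hamax⟩ : ∃ a ∈ A, ∀ i ∈ A, i ≤ a :=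
      ⟨A.max' hA, A.max'_mem hA, fun i hi => A.le_max' i hi⟩
    have ha1 : 1 ≤ a := hpos a haA
    have haz : (1:ℤ) ≤ (a:ℤ) := by exact_mod_cast ha1
    set s : ℤ := |S1| with hsdef
    have hs0 : 0 < s := abs_pos.mpr hS1
    have hdvds : ∀ i ∈ A, (i:ℤ) ∣ s :=
      fun i hi => (dvd_abs _ _).mpr ⟨k i, (hiki i hi).symm⟩
    have hsa : (a:ℤ) ≤ s := Int.le_of_dvd hs0 (hdvds a haA)
    have hm1 : 1 ≤ m := Finset.card_pos.mpr hA
    have hQub : Q ≤ (((m:ℤ)-1)+1) * (a:ℤ)^4 := by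
      have h := Qub A a hamax
      rw [← hQdef, ← hmdef] at h
      have : (((m:ℤ)-1)+1) = (m:ℤ) := by ring
      rw [this]
      exact h
    have hQlb : (a:ℤ)^4 + ((m:ℤ)-1) ≤ Q := by
      have h := Qlb A hpos a haA
      rw [← hQdef, ← hmdef] at h
      exact h
    rcases (by omega : T.card = 0 ∨ T.card = 1 ∨ T.card = 2) with hc0 | hc1 | hc2
    · -- T empty
      have hTe : T = ∅ := Finset.card_eq_zero.mp hc0
      have hR5z : R5 = 0 := by rw [hR5def, hTe, Finset.sum_empty]
      rw [hR5z, neg_zero] at hE5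
      have hQ0 : 0 < Q := by linarith [hQlb, haz, (by exact_mod_cast hm1 : (1:ℤ) ≤ (m:ℤ)),
        (by calc (1:ℤ) = 1^4 := by norm_num
              _ ≤ (a:ℤ)^4 := pow_le_pow_left₀ (by norm_num) haz 4 : (1:ℤ) ≤ (a:ℤ)^4)]
      rcases mul_eq_zero.mp hE5 with h | h
      · linarith
      · exact hS1 h
    · -- one outside index
      obtain ⟨j, hj⟩ := Finset.card_eq_one.mp hc1
      have hjT : j ∈ T := hj ▸ Finset.mem_singleton_self j
      obtain ⟨hjA, hkj, hj1⟩ := hTsub j hjT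
      have hR1v : R1 = (j:ℤ) * k j := by rw [hR1def, hj, Finset.sum_singleton]
      have hR5v : R5 = (j:ℤ)^5 * k j := by rw [hR5def, hj, Finset.sum_singleton]
      rw [hj, Finset.sum_singleton] at hZ
      have hnA : (k j).natAbs = 1 ∨ (k j).natAbs = 2 := by
        have := Int.natAbs_pos.mpr hkj
        omega
      have hjne : ((j:ℤ)) ≠ 0 := by positivity
      rcases (by omega : m = 1 ∨ 2 ≤ m) with hm | hm
      · rw [hm] at hE1
        push_cast at hE1
        have hR10 : R1 = 0 := by linarith
        rw [hR1v] at hR10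
        exact mul_ne_zero hjne hkj hR10
      · have hM1 : 1 ≤ (m:ℤ) - 1 := by
          have : (2:ℤ) ≤ (m:ℤ) := by exact_mod_cast hm
          linarith
        have hkey : Q * R1 = ((m:ℤ)-1) * R5 := by
          linear_combination Q*hE1 - ((m:ℤ)-1)*hE5
        rw [hR1v, hR5v] at hkey
        have hQeq : Q = ((m:ℤ)-1) * (j:ℤ)^4 := by
          have h0 : (Q - ((m:ℤ)-1)*(j:ℤ)^4) * ((j:ℤ) * k j) = 0 := by
            linear_combination hkey
          rcases mul_eq_zero.mp h0 with h | h
          · linarith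
          · exact absurd h (mul_ne_zero hjne hkj)
        have habs : ((m:ℤ)-1) * s = (j:ℤ) * |k j| := by
          have h := congrArg abs hE1
          rw [abs_mul, abs_neg, hR1v, abs_mul] at h
          rw [abs_of_nonneg (by linarith : (0:ℤ) ≤ (m:ℤ)-1),
            abs_of_nonneg (by positivity : (0:ℤ) ≤ (j:ℤ))] at h
          rw [hsdef]
          exact h
        have he : |k j| = 1 ∨ |k j| = 2 := by
          rcases hnA with h | h
          · left; rw [Int.abs_eq_natAbs, h]; norm_num
          · right; rw [Int.abs_eq_natAbs, h]; norm_num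
        have hja : ((j:ℤ)) ≠ ((a:ℤ)) := by
          have : j ≠ a := fun h => hjA (h ▸ haA)
          exact_mod_cast this
        exact oneCore ((m:ℤ)-1) Q (a:ℤ) (j:ℤ) s (|k j|) hM1 haz
          (by exact_mod_cast hj1) hja hs0 hsa (hdvds a haA) he habs hQeq hQlb hQub
    · -- two outside indices
      obtain ⟨u, v, huv, hT2⟩ := Finset.card_eq_two.mp hc2
      obtain ⟨x, y, hxy, hTxy⟩ : ∃ x y : ℕ, x < y ∧ T = {x, y} := by
        rcases Nat.lt_or_ge u v with h | h
        · exact ⟨u, v, h, hT2⟩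
        · exact ⟨v, u, by omega, by rw [hT2, Finset.pair_comm]⟩
      have hxyne : x ≠ y := Nat.ne_of_lt hxy
      have hxT : x ∈ T := hTxy ▸ Finset.mem_insert_self x {y}
      have hyT : y ∈ T := hTxy ▸ Finset.mem_insert_of_mem (Finset.mem_singleton_self y)
      obtain ⟨hxA, hkx, hx1⟩ := hTsub x hxT
      obtain ⟨hyA, hky, hy1⟩ := hTsub y hyT
      rw [hTxy, Finset.sum_pair hxyne] at hZ
      have hnx : (k x).natAbs = 1 ∧ (k y).natAbs = 1 := by
        have := Int.natAbs_pos.mpr hkx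
        have := Int.natAbs_pos.mpr hky
        omega
      have hR1v : R1 = (x:ℤ) * k x + (y:ℤ) * k y := by
        rw [hR1def, hTxy, Finset.sum_pair hxyne]
      have hR5v : R5 = (x:ℤ)^5 * k x + (y:ℤ)^5 * k y := by
        rw [hR5def, hTxy, Finset.sum_pair hxyne]
      rcases (by omega : m = 1 ∨ 2 ≤ m) with hm | hm
      · rw [hm] at hE1
        push_cast at hE1
        have hR10 : R1 = 0 := by linarith
        rw [hR1v] at hR10
        rcases Int.natAbs_eq_iff.mp hnx.1 with hcx | hcx <;>
          rcases Int.natAbs_eq_iff.mp hnx.2 with hcy | hcy <;>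
            (rw [hcx, hcy] at hR10; push_cast at hR10; omega)
      · have hM1 : 1 ≤ (m:ℤ) - 1 := by
          have : (2:ℤ) ≤ (m:ℤ) := by exact_mod_cast hm
          linarith
        have hkey : Q * R1 = ((m:ℤ)-1) * R5 := by
          linear_combination Q*hE1 - ((m:ℤ)-1)*hE5
        rw [hR1v, hR5v] at hkey
        have hE1' : ((m:ℤ)-1) * S1 = -((x:ℤ) * k x + (y:ℤ) * k y) := by
          rw [hE1, hR1v]
        have hm2prov : ((m:ℤ)-1) = 1 →
            ∃ b : ℕ, 1 ≤ b ∧ (b:ℤ) ∣ s ∧ Q = (a:ℤ)^4 + (b:ℤ)^4 := by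
          intro hM
          have hm2 : (m:ℤ) = 2 := by linarith
          have hcard2 : A.card = 2 := by rw [hmdef] at hm2; exact_mod_cast hm2
          obtain ⟨b, hbA, hbne, hQb⟩ := Qtwo A a haA hcard2
          exact ⟨b, hpos b hbA, hdvds b hbA, by rw [hQdef]; exact hQb⟩
        have hm3prov : ((m:ℤ)-1) = 2 →
            ∃ b c : ℕ, 1 ≤ b ∧ 1 ≤ c ∧ b ≠ a ∧ c ≠ a ∧
              (b:ℤ) ∣ s ∧ (c:ℤ) ∣ s ∧ Q = (a:ℤ)^4 + (b:ℤ)^4 + (c:ℤ)^4 := by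
          intro hM
          have hm3 : (m:ℤ) = 3 := by linarith
          have hcard3 : A.card = 3 := by rw [hmdef] at hm3; exact_mod_cast hm3
          have hce : (A.erase a).card = 2 := by
            rw [Finset.card_erase_of_mem haA, hcard3]
          obtain ⟨b, c, hbc, hbce⟩ := Finset.card_eq_two.mp hce
          have hbmem : b ∈ A.erase a := hbce ▸ Finset.mem_insert_self b {c}
          have hcmem : c ∈ A.erase a := hbce ▸ Finset.mem_insert_of_mem (Finset.mem_singleton_self c)
          have hbA := Finset.mem_of_mem_erase hbmem
          have hcA := Finset.mem_of_mem_erase hcmem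
          refine ⟨b, c, hpos b hbA, hpos c hcA, Finset.ne_of_mem_erase hbmem,
            Finset.ne_of_mem_erase hcmem, hdvds b hbA, hdvds c hcA, ?_⟩
          rw [hQdef, ← Finset.add_sum_erase A _ haA, hbce, Finset.sum_pair hbc]
          ring
        have hya : y ≠ a := fun h => hyA (h ▸ haA)
        have hx1' : 1 ≤ x := hx1
        rcases Int.natAbs_eq_iff.mp hnx.1 with hcx | hcx <;>
          rcases Int.natAbs_eq_iff.mp hnx.2 with hcy | hcy
        · -- (+1, +1) : same sign
          rw [hcx, hcy] at hkey hE1'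
          have habs : ((m:ℤ)-1) * s = (x:ℤ) + (y:ℤ) := by
            rw [hsdef]
            apply absHelp _ _ _ hM1 (by push_cast; omega)
            left; push_cast at hE1' ⊢; linarith
          have hkeyn : Q * ((x:ℤ) + (y:ℤ)) = ((m:ℤ)-1) * ((x:ℤ)^5 + (y:ℤ)^5) := by
            push_cast at hkey; linear_combination hkey
          exact sameCore ((m:ℤ)-1) Q s a x y hM1 ha1 hx1' hxy hya hs0 hsa
            (hdvds a haA) habs hkeyn hQlb hQub hm2prov hm3prov
        · -- (+1, -1) : opposite, R1 = x - y
          rw [hcx, hcy] at hkey hE1'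
          have habs : ((m:ℤ)-1) * s = (y:ℤ) - (x:ℤ) := by
            rw [hsdef]
            apply absHelp _ _ _ hM1 (by push_cast; omega)
            right; push_cast at hE1' ⊢; linarith
          have hkeyn : Q * ((y:ℤ) - (x:ℤ)) = ((m:ℤ)-1) * ((y:ℤ)^5 - (x:ℤ)^5) := by
            push_cast at hkey; linear_combination -hkey
          exact oppCore ((m:ℤ)-1) Q s a x y hM1 ha1 hx1' hxy hs0 hsa
            (hdvds a haA) habs hkeyn hQub hm2prov
        · -- (-1, +1) : opposite
          rw [hcx, hcy] at hkey hE1'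
          have habs : ((m:ℤ)-1) * s = (y:ℤ) - (x:ℤ) := by
            rw [hsdef]
            apply absHelp _ _ _ hM1 (by push_cast; omega)
            left; push_cast at hE1' ⊢; linarith
          have hkeyn : Q * ((y:ℤ) - (x:ℤ)) = ((m:ℤ)-1) * ((y:ℤ)^5 - (x:ℤ)^5) := by
            push_cast at hkey; linear_combination hkey
          exact oppCore ((m:ℤ)-1) Q s a x y hM1 ha1 hx1' hxy hs0 hsa
            (hdvds a haA) habs hkeyn hQub hm2prov
        · -- (-1, -1) : same sign
          rw [hcx, hcy] at hkey hE1'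
          have habs : ((m:ℤ)-1) * s = (x:ℤ) + (y:ℤ) := by
            rw [hsdef]
            apply absHelp _ _ _ hM1 (by push_cast; omega)
            right; push_cast at hE1' ⊢; linarith
          have hkeyn : Q * ((x:ℤ) + (y:ℤ)) = ((m:ℤ)-1) * ((x:ℤ)^5 + (y:ℤ)^5) := by
            push_cast at hkey; linear_combination -hkey
          exact sameCore ((m:ℤ)-1) Q s a x y hM1 ha1 hx1' hxy hya hs0 hsa
            (hdvds a haA) habs hkeyn hQlb hQub hm2prov hm3prov
end

section
/- The equation 16·i⁴ = 5·(q⁴ + 2·p²·q² − 3·p⁴) has no solution in positive integers i, p, q with i dividing p. -/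
private lemma descent17 : ∀ n : ℕ, ∀ i p q : ℤ, i.natAbs = n → 0 < i → 0 < p → 0 < q →
    i ∣ p → 16 * i ^ 4 ≠ 5 * (q ^ 4 + 2 * p ^ 2 * q ^ 2 - 3 * p ^ 4) := by
  intro n
  induction n using Nat.strong_induction_on with
  | _ n ih =>
    intro i p q hn hi hp hq hdvd heq
    have hprime : Prime (5 : ℤ) := by norm_num
    have h5i : (5 : ℤ) ∣ i := by
      have h1 : (5 : ℤ) ∣ 16 * i ^ 4 := Dvd.intro _ heq.symm
      rcases hprime.dvd_mul.mp h1 with h | h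
      · norm_num at h
      · exact hprime.dvd_of_dvd_pow h
    obtain ⟨a, ha⟩ := h5i
    obtain ⟨b, hb⟩ := dvd_trans ⟨a, ha⟩ hdvd
    have h5q : (5 : ℤ) ∣ q := by
      apply hprime.dvd_of_dvd_pow (n := 4)
      refine ⟨400 * a ^ 4 - 10 * b ^ 2 * q ^ 2 + 375 * b ^ 4, ?_⟩
      subst ha hb
      ring_nf
      ring_nf at heq
      linarith
    obtain ⟨c, hc⟩ := h5q
    have ha0 : 0 < a := by subst ha; linarith
    have hb0 : 0 < b := by subst hb; linarith
    have hc0 : 0 < c := by subst hc; linarith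
    have hab : a ∣ b := by
      have : (5 : ℤ) * a ∣ 5 * b := by rw [← ha, ← hb]; exact hdvd
      exact (mul_dvd_mul_iff_left (by norm_num : (5:ℤ) ≠ 0)).mp this
    have heq' : 16 * a ^ 4 = 5 * (c ^ 4 + 2 * b ^ 2 * c ^ 2 - 3 * b ^ 4) := by
      subst ha hb hc
      ring_nf at heq ⊢
      linarith
    have hlt : a.natAbs < n := by
      have : i.natAbs = 5 * a.natAbs := by rw [ha, Int.natAbs_mul]; rfl
      have ha1 : 1 ≤ a.natAbs := Int.natAbs_pos.mpr (by positivity)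
      omega
    exact ih a.natAbs hlt a b c rfl ha0 hb0 hc0 hab heq'

/-- The equation `16 i⁴ = 5 (q⁴ + 2 p² q² − 3 p⁴)` has no solution in positive
integers `i, p, q` with `i ∣ p`. -/
theorem stmt17 (i p q : ℤ) (hi : 0 < i) (hp : 0 < p) (hq : 0 < q) (hdvd : i ∣ p) :
    16 * i ^ 4 ≠ 5 * (q ^ 4 + 2 * p ^ 2 * q ^ 2 - 3 * p ^ 4) := by
  exact descent17 i.natAbs i p q rfl hi hp hq hdvd
end

section
/- The equation 16·i⁴ = 5·q²·(q² + 2·p²) has no solution in positive integers i, p, q with i dividing p. -/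
private lemma descent18 : ∀ n : ℕ, ∀ i p q : ℤ, i.natAbs = n → 0 < i → 0 < p → 0 < q →
    i ∣ p → 16 * i ^ 4 ≠ 5 * q ^ 2 * (q ^ 2 + 2 * p ^ 2) := by
  intro n
  induction n using Nat.strong_induction_on with
  | _ n IH =>
    intro i p q hn hi hp hq hdvd heq
    have hprime : Prime (5 : ℤ) := by norm_num
    -- 5 ∣ i
    have h5i : (5 : ℤ) ∣ i := by
      have h1 : (5 : ℤ) ∣ 16 * i ^ 4 := ⟨q ^ 2 * (q ^ 2 + 2 * p ^ 2), by linarith⟩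
      rcases hprime.dvd_mul.mp h1 with h | h
      · norm_num at h
      · exact hprime.dvd_of_dvd_pow h
    obtain ⟨i', rfl⟩ := h5i
    -- 5 ∣ p
    have h5p : (5 : ℤ) ∣ p := dvd_trans ⟨i', rfl⟩ hdvd
    obtain ⟨p', rfl⟩ := h5p
    -- 5 ∣ q
    have h5q : (5 : ℤ) ∣ q := by
      have h1 : (5 : ℤ) ∣ q ^ 4 := by
        refine ⟨400 * i' ^ 4 - 10 * q ^ 2 * p' ^ 2, mul_left_cancel₀ (by norm_num : (5:ℤ) ≠ 0) ?_⟩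
        linear_combination -heq
      exact hprime.dvd_of_dvd_pow h1
    obtain ⟨q', rfl⟩ := h5q
    have hi' : 0 < i' := by nlinarith
    have hp' : 0 < p' := by nlinarith
    have hq' : 0 < q' := by nlinarith
    have hdvd' : i' ∣ p' := by
      obtain ⟨c, hc⟩ := hdvd
      refine ⟨c, mul_left_cancel₀ (by norm_num : (5:ℤ) ≠ 0) ?_⟩
      linear_combination hc
    have heq' : 16 * i' ^ 4 = 5 * q' ^ 2 * (q' ^ 2 + 2 * p' ^ 2) := by
      have h : (625 : ℤ) * (16 * i' ^ 4) = 625 * (5 * q' ^ 2 * (q' ^ 2 + 2 * p' ^ 2)) := by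
        linear_combination heq
      exact mul_left_cancel₀ (by norm_num) h
    have hlt : i'.natAbs < n := by
      have h1 : (5 * i').natAbs = 5 * i'.natAbs := by
        simpa using Int.natAbs_mul 5 i'
      have h2 : 0 < i'.natAbs := Int.natAbs_pos.mpr (ne_of_gt hi')
      omega
    exact IH i'.natAbs hlt i' p' q' rfl hi' hp' hq' hdvd' heq'

/-- The equation `16 i⁴ = 5 q² (q² + 2 p²)` has no solution in positive integers
`i, p, q` with `i ∣ p`. -/
theorem stmt18 (i p q : ℤ) (hi : 0 < i) (hp : 0 < p) (hq : 0 < q) (hdvd : i ∣ p) :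
    16 * i ^ 4 ≠ 5 * q ^ 2 * (q ^ 2 + 2 * p ^ 2) := by
  exact descent18 i.natAbs i p q rfl hi hp hq hdvd
end
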